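/- arXiv:1607.00722 — 15 statements merged into one kernel-verified Lean document; each statement's English description precedes it below -/
import Mathlib

section
/- Let n ≥ 2 and let p₁,…,pₙ, q₁,…,qₙ be indeterminates with indices taken modulo n. Define κ_i(p,q) = Σ_{j=0}^{n-1} (∏_{ℓ=1}^{j} p_{i-ℓ}) (∏_{ℓ=j+2}^{n} q_{i-ℓ}), and define the geometric R-matrix R on the field ℚ(p,q) by R(p_i) = q_i · κ_{i+1}(p,q)/κ_i(p,q) and R(q_i) = p_i · κ_i(p,q)/κ_{i+1}(p,q). Then R is an involution: R(R(p_i)) = p_i and R(R(q_i)) = q_i for all i. -/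
open Finset

/-- The polynomial `κ_i(p,q) = Σ_{j=0}^{n-1} (∏_{ℓ=1}^{j} p_{i-ℓ}) (∏_{ℓ=j+2}^{n} q_{i-ℓ})`,
with indices taken modulo `n`. -/
def kappa {K : Type*} [Field K] (n : ℕ) (p q : ZMod n → K) (i : ZMod n) : K :=
  ∑ j ∈ Finset.range n,
    (∏ l ∈ Finset.Icc 1 j, p (i - (l : ZMod n))) *
    (∏ l ∈ Finset.Icc (j + 2) n, q (i - (l : ZMod n)))

section aux

variable {K : Type*} [Field K] (n : ℕ) (p q : ZMod n → K) (i : ZMod n)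

lemma IccIco (a b : ℕ) : Finset.Icc a b = Finset.Ico a (b+1) :=
  (Finset.Ico_add_one_right_eq_Icc a b).symm

lemma IocIco (a b : ℕ) : Finset.Ioc a b = Finset.Ico (a+1) (b+1) := by
  rw [← Finset.Icc_add_one_left_eq_Ioc, ← Finset.Ico_add_one_right_eq_Icc]

lemma prod_single (f : ℕ → K) (a : ℕ) : ∏ l ∈ Finset.Ico a (a+1), f l = f a := by
  rw [Finset.prod_Ico_succ_top (le_refl a), Finset.Ico_self, Finset.prod_empty, one_mul]

/-- Path sum on the segment of positions `[a, b]`, with weight `p (i-l)` or `q (i-l)`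
at position `l`, one "gap" position `g`, `p`'s before the gap and `q`'s after. -/
def Fseg (a b : ℕ) : K :=
  ∑ g ∈ Finset.Icc a b,
    (∏ l ∈ Finset.Ico a g, p (i - (l : ZMod n))) *
    (∏ l ∈ Finset.Ioc g b, q (i - (l : ZMod n)))

lemma Fseg_self (a : ℕ) : Fseg n p q i a a = 1 := by
  simp [Fseg]

lemma Fseg_empty {a b : ℕ} (h : b < a) : Fseg n p q i a b = 0 := by
  simp [Fseg, Finset.Icc_eq_empty (not_le.mpr h)]

/-- Concatenation / transfer-matrix rule for path sums. -/
lemma Fseg_concat {a b c : ℕ} (hab : a ≤ b + 1) (hbc : b ≤ c) :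
    Fseg n p q i a c =
      (∏ l ∈ Finset.Ico a (b+1), p (i - (l : ZMod n))) * Fseg n p q i (b+1) c
      + Fseg n p q i a b * (∏ l ∈ Finset.Ioc b c, q (i - (l : ZMod n))) := by
  have e1 : (∑ g ∈ Finset.Ico a (b+1),
      (∏ l ∈ Finset.Ico a g, p (i - (l : ZMod n))) * (∏ l ∈ Finset.Ioc g c, q (i - (l : ZMod n))))
      = Fseg n p q i a b * (∏ l ∈ Finset.Ioc b c, q (i - (l : ZMod n))) := by
    unfold Fseg
    rw [Finset.sum_mul, ← Finset.Ico_add_one_right_eq_Icc a b]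
    refine Finset.sum_congr rfl (fun g hg => ?_)
    simp only [Finset.mem_Ico] at hg
    rw [← Finset.prod_Ioc_consecutive _ (show g ≤ b by omega) hbc]
    ring
  have e2 : (∑ g ∈ Finset.Ico (b+1) (c+1),
      (∏ l ∈ Finset.Ico a g, p (i - (l : ZMod n))) * (∏ l ∈ Finset.Ioc g c, q (i - (l : ZMod n))))
      = (∏ l ∈ Finset.Ico a (b+1), p (i - (l : ZMod n))) * Fseg n p q i (b+1) c := by
    unfold Fseg
    rw [Finset.mul_sum, ← Finset.Ico_add_one_right_eq_Icc (b+1) c]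
    refine Finset.sum_congr rfl (fun g hg => ?_)
    simp only [Finset.mem_Ico] at hg
    rw [← Finset.prod_Ico_consecutive _ hab (show b+1 ≤ g by omega)]
    ring
  have key : Fseg n p q i a c = (∑ g ∈ Finset.Ico a (b+1),
      (∏ l ∈ Finset.Ico a g, p (i - (l : ZMod n))) * (∏ l ∈ Finset.Ioc g c, q (i - (l : ZMod n))))
      + (∑ g ∈ Finset.Ico (b+1) (c+1),
      (∏ l ∈ Finset.Ico a g, p (i - (l : ZMod n))) * (∏ l ∈ Finset.Ioc g c, q (i - (l : ZMod n)))) := by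
    unfold Fseg
    rw [← Finset.Ico_add_one_right_eq_Icc a c,
      ← Finset.sum_Ico_consecutive _ hab (show b+1 ≤ c+1 by omega)]
  rw [key, e1, e2, add_comm]

lemma castn (l : ℕ) : ((l + n : ℕ) : ZMod n) = (l : ZMod n) := by
  push_cast
  simp

/-- Normal form of `Fseg` as a `range`-indexed sum. -/
lemma Fseg_eq (a b : ℕ) : Fseg n p q i a b =
    ∑ m ∈ Finset.range (b+1-a),
      (∏ k ∈ Finset.range m, p (i - ((a+k : ℕ) : ZMod n))) *
      (∏ k ∈ Finset.range (b-a-m), q (i - ((a+m+1+k : ℕ) : ZMod n))) := by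
  unfold Fseg
  rw [← Finset.Ico_add_one_right_eq_Icc a b, Finset.sum_Ico_eq_sum_range,
    show b.succ - a = b + 1 - a from rfl]
  refine Finset.sum_congr rfl (fun m _ => ?_)
  congr 1
  · rw [Finset.prod_Ico_eq_prod_range, show a + m - a = m by omega]
  · rw [IocIco, Finset.prod_Ico_eq_prod_range,
      show b + 1 - (a + m + 1) = b - a - m by omega]

lemma Fseg_shift (a b : ℕ) :
    Fseg n p q i (a + n) (b + n) = Fseg n p q i a b := by
  rw [Fseg_eq, Fseg_eq, show b + n + 1 - (a + n) = b + 1 - a by omega]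
  refine Finset.sum_congr rfl (fun m _ => ?_)
  congr 1
  · refine Finset.prod_congr rfl (fun k _ => ?_)
    rw [show a + n + k = (a + k) + n by omega, castn]
  · rw [show b + n - (a + n) - m = b - a - m by omega]
    refine Finset.prod_congr rfl (fun k _ => ?_)
    rw [show a + n + m + 1 + k = (a + m + 1 + k) + n by omega, castn]

/-- `κ_{i-j} = F_{[j+1, j+n]}`. -/
lemma kappa_eq_Fseg (j : ℕ) :
    kappa n p q (i - (j : ZMod n)) = Fseg n p q i (j+1) (j+n) := by
  rw [Fseg_eq, show j + n + 1 - (j+1) = n by omega]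
  unfold kappa
  refine Finset.sum_congr rfl (fun m _ => ?_)
  congr 1
  · rw [IccIco, Finset.prod_Ico_eq_prod_range, show m + 1 - 1 = m by omega]
    refine Finset.prod_congr rfl (fun k _ => ?_)
    congr 1
    push_cast
    ring
  · rw [IccIco, Finset.prod_Ico_eq_prod_range,
      show n + 1 - (m+2) = j + n - (j+1) - m by omega]
    refine Finset.prod_congr rfl (fun k _ => ?_)
    congr 1
    push_cast
    ring

lemma kappa_eq_Fseg_zero : kappa n p q i = Fseg n p q i 1 n := by
  have h := kappa_eq_Fseg n p q i 0
  simpa using h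

/-- The key polynomial identity behind the telescoping. -/
lemma key_identity {j : ℕ} (hj : j < n) :
    (∏ l ∈ Finset.Icc 1 j, q (i - (l : ZMod n))) * Fseg n p q i (j+1) n
        * kappa n p q (i - ((j+1 : ℕ) : ZMod n))
      = (∏ l ∈ Finset.Icc 1 (j+1), q (i - (l : ZMod n))) * Fseg n p q i (j+2) n
          * kappa n p q (i - (j : ZMod n))
        + ((∏ l ∈ Finset.Icc 1 j, q (i - (l : ZMod n)))
            * (∏ l ∈ Finset.Icc (j+2) n, p (i - (l : ZMod n)))) * kappa n p q i := by
  have eIoc : Finset.Ioc (j+1) n = Finset.Icc (j+2) n := by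
    rw [← Finset.Icc_add_one_left_eq_Ioc]
    rfl
  have eIco : ∀ b : ℕ, Finset.Ico (j+2) (b+1) = Finset.Icc (j+2) b := fun b =>
    Finset.Ico_add_one_right_eq_Icc _ _
  have eqa : ∀ a : ℕ, (∏ l ∈ Finset.Ioc a (a+1), q (i - (l : ZMod n)))
      = q (i - ((a+1 : ℕ) : ZMod n)) := by
    intro a
    rw [IocIco, prod_single]
  -- abbreviations
  set PX := ∏ l ∈ Finset.Icc 1 j, p (i - (l : ZMod n)) with hPX
  set QX := ∏ l ∈ Finset.Icc 1 j, q (i - (l : ZMod n)) with hQX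
  set PY := ∏ l ∈ Finset.Icc (j+2) n, p (i - (l : ZMod n)) with hPY
  set QY := ∏ l ∈ Finset.Icc (j+2) n, q (i - (l : ZMod n)) with hQY
  set FX := Fseg n p q i 1 j with hFX
  set FY := Fseg n p q i (j+2) n with hFY
  set pa := p (i - ((j+1 : ℕ) : ZMod n)) with hpa
  set qa := q (i - ((j+1 : ℕ) : ZMod n)) with hqa
  -- (i) F (j+1) n = pa * FY + QY
  have h1 : Fseg n p q i (j+1) n = pa * FY + QY := by
    rw [Fseg_concat n p q i (show j+1 ≤ (j+1)+1 by omega) (show j+1 ≤ n by omega),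
      prod_single, Fseg_self, eIoc, show j+1+1 = j+2 from rfl, ← hQY, ← hFY, ← hpa,
      one_mul]
  -- (ii) F 1 n = PX * (pa*FY+QY) + FX * (qa*QY)
  have h2 : Fseg n p q i 1 n = PX * (pa * FY + QY) + FX * (qa * QY) := by
    rw [Fseg_concat n p q i (show 1 ≤ j+1 by omega) (show j ≤ n by omega),
      ← Finset.prod_Ioc_consecutive (fun l : ℕ => q (i - (l : ZMod n)))
        (show j ≤ j+1 by omega) (show j+1 ≤ n by omega),
      eqa j, eIoc, Finset.Ico_add_one_right_eq_Icc 1 j, ← hQY, ← hFX, ← hqa, ← hPX, h1]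
  -- (iii) F (j+1) (j+n) = pa*PY*FX + (pa*FY+QY)*QX
  have h3 : Fseg n p q i (j+1) (j+n) = pa * PY * FX + (pa * FY + QY) * QX := by
    rw [Fseg_concat n p q i (show j+1 ≤ n+1 by omega) (show n ≤ j+n by omega),
      ← Finset.prod_Ico_consecutive (fun l : ℕ => p (i - (l : ZMod n)))
        (show j+1 ≤ j+2 by omega) (show j+2 ≤ n+1 by omega),
      show j+2 = (j+1)+1 from rfl, prod_single, show (j+1)+1 = j+2 from rfl,
      eIco n, ← hPY, ← hpa]
    have eF : Fseg n p q i (n+1) (j+n) = FX := by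
      rw [hFX, show n+1 = 1+n from by omega, Fseg_shift]
    have eQ : (∏ l ∈ Finset.Ioc n (j+n), q (i - (l : ZMod n))) = QX := by
      rw [IocIco, show Finset.Ico (n+1) (j+n+1) = Finset.Ico (1+n) (j+1+n) from by
        congr 1 <;> omega]
      rw [hQX, IccIco]
      rw [Finset.prod_Ico_eq_prod_range, Finset.prod_Ico_eq_prod_range,
        show j+1+n - (1+n) = j+1-1 by omega]
      refine Finset.prod_congr rfl (fun k _ => ?_)
      rw [show 1 + n + k = (1+k) + n by omega, castn]
    rw [eF, eQ, h1]
  -- (iv) F (j+2) (j+1+n) = PY*(PX + FX*qa) + FY*(QX*qa)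
  have h4 : Fseg n p q i (j+1+1) (j+1+n) = PY * (PX + FX * qa) + FY * (QX * qa) := by
    rw [show j+1+1 = j+2 from rfl]
    rw [Fseg_concat n p q i (show j+2 ≤ n+1 by omega) (show n ≤ j+1+n by omega),
      eIco n, ← hPY, ← hFY]
    have eF : Fseg n p q i (n+1) (j+1+n) = PX + FX * qa := by
      rw [show n+1 = 1+n from by omega, Fseg_shift]
      rw [Fseg_concat n p q i (show 1 ≤ j+1 by omega) (show j ≤ j+1 by omega),
        Finset.Ico_add_one_right_eq_Icc 1 j, Fseg_self, eqa j, ← hPX, ← hFX, ← hqa, mul_one]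
    have eQ : (∏ l ∈ Finset.Ioc n (j+1+n), q (i - (l : ZMod n))) = QX * qa := by
      rw [IocIco, show Finset.Ico (n+1) (j+1+n+1) = Finset.Ico (1+n) (j+2+n) from by
        congr 1 <;> omega]
      have : (∏ l ∈ Finset.Ico (1+n) (j+2+n), q (i - (l : ZMod n)))
          = ∏ l ∈ Finset.Ico 1 (j+2), q (i - (l : ZMod n)) := by
        rw [Finset.prod_Ico_eq_prod_range, Finset.prod_Ico_eq_prod_range,
          show j+2+n - (1+n) = j+2-1 by omega]
        refine Finset.prod_congr rfl (fun k _ => ?_)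
        rw [show 1 + n + k = (1+k) + n by omega, castn]
      rw [this, show j+2 = (j+1)+1 from rfl,
        Finset.prod_Ico_succ_top (show 1 ≤ j+1 by omega),
        Finset.Ico_add_one_right_eq_Icc 1 j, ← hQX, ← hqa]
    rw [eF, eQ]
  -- QX(j+1)
  have hQXa : (∏ l ∈ Finset.Icc 1 (j+1), q (i - (l : ZMod n))) = QX * qa := by
    rw [IccIco, show j+1+1 = (j+1)+1 from rfl,
      Finset.prod_Ico_succ_top (show 1 ≤ j+1 by omega),
      Finset.Ico_add_one_right_eq_Icc 1 j, ← hQX, ← hqa]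
  -- rewrite kappas
  rw [kappa_eq_Fseg n p q i (j+1), kappa_eq_Fseg n p q i j, kappa_eq_Fseg_zero,
    h1, h2, h3, h4, hQXa]
  ring

/-- The central fact: `κ` is invariant under the geometric R-matrix substitution. -/
lemma kappa_fixed (p' q' : ZMod n → K)
    (hκ : ∀ i, kappa n p q i ≠ 0)
    (hp' : ∀ i, p' i = q i * kappa n p q (i + 1) / kappa n p q i)
    (hq' : ∀ i, q' i = p i * kappa n p q i / kappa n p q (i + 1)) :
    kappa n p' q' i = kappa n p q i := by
  have hKne : ∀ j : ℕ, kappa n p q (i - (j : ZMod n)) ≠ 0 := fun j => hκ _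
  -- Step A : telescoping product of the p'
  have hA : ∀ j : ℕ, (∏ l ∈ Finset.Icc 1 j, p' (i - (l : ZMod n)))
      = (∏ l ∈ Finset.Icc 1 j, q (i - (l : ZMod n))) * kappa n p q i
        / kappa n p q (i - (j : ZMod n)) := by
    intro j
    induction j with
    | zero =>
      rw [show ((0:ℕ) : ZMod n) = 0 from Nat.cast_zero, sub_zero,
        Finset.Icc_eq_empty (show ¬(1:ℕ) ≤ 0 by omega), Finset.prod_empty,
        Finset.prod_empty, one_mul, div_self (hκ i)]
    | succ j ih =>
      rw [IccIco, show j+1+1 = (j+1)+1 from rfl,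
        Finset.prod_Ico_succ_top (show 1 ≤ j+1 by omega),
        Finset.prod_Ico_succ_top (show 1 ≤ j+1 by omega),
        Finset.Ico_add_one_right_eq_Icc 1 j, ih,
        hp' (i - ((j+1 : ℕ) : ZMod n)),
        show (i - ((j+1 : ℕ) : ZMod n)) + 1 = i - (j : ZMod n) from by push_cast; ring]
      have e1 := hKne j
      have e2 := hKne (j+1)
      push_cast at e2 ⊢
      field_simp
  -- Step B : telescoping product of the q'
  have hB : ∀ j : ℕ, ∀ d, j + 1 ≤ d → (∏ l ∈ Finset.Icc (j+2) d, q' (i - (l : ZMod n)))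
      = (∏ l ∈ Finset.Icc (j+2) d, p (i - (l : ZMod n))) * kappa n p q (i - (d : ZMod n))
        / kappa n p q (i - ((j+1 : ℕ) : ZMod n)) := by
    intro j d hd
    induction d, hd using Nat.le_induction with
    | base =>
      rw [Finset.Icc_eq_empty (show ¬ j+2 ≤ j+1 by omega), Finset.prod_empty,
        Finset.prod_empty, one_mul, div_self (hKne (j+1))]
    | succ d hd ih =>
      rw [IccIco, Finset.prod_Ico_succ_top (show j+2 ≤ d+1 by omega),
        Finset.prod_Ico_succ_top (show j+2 ≤ d+1 by omega),
        ← IccIco, ih,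
        hq' (i - ((d+1 : ℕ) : ZMod n)),
        show (i - ((d+1 : ℕ) : ZMod n)) + 1 = i - (d : ZMod n) from by push_cast; ring]
      have e1 := hKne d
      have e2 := hKne (j+1)
      have e3 := hKne (d+1)
      push_cast at e2 e3 ⊢
      field_simp
  -- assemble
  have hterm : ∀ j ∈ Finset.range n,
      (∏ l ∈ Finset.Icc 1 j, p' (i - (l : ZMod n))) *
        (∏ l ∈ Finset.Icc (j+2) n, q' (i - (l : ZMod n)))
      = ((∏ l ∈ Finset.Icc 1 j, q (i - (l : ZMod n)))
          * Fseg n p q i (j+1) n * kappa n p q i / kappa n p q (i - (j : ZMod n)))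
        - ((∏ l ∈ Finset.Icc 1 (j+1), q (i - (l : ZMod n)))
          * Fseg n p q i (j+1+1) n * kappa n p q i / kappa n p q (i - ((j+1 : ℕ) : ZMod n))) := by
    intro j hj
    rw [Finset.mem_range] at hj
    rw [hA j, hB j n (by omega),
      show (i - ((n:ℕ) : ZMod n)) = i from by rw [ZMod.natCast_self, sub_zero]]
    have key := key_identity n p q i hj
    have h1 := hKne j
    have h2 := hKne (j+1)
    rw [div_mul_div_comm, div_sub_div _ _ h1 h2]
    congr 1
    linear_combination (-(kappa n p q i)) * key
  have : kappa n p' q' i = ∑ j ∈ Finset.range n,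
      (((∏ l ∈ Finset.Icc 1 j, q (i - (l : ZMod n)))
          * Fseg n p q i (j+1) n * kappa n p q i / kappa n p q (i - (j : ZMod n)))
        - ((∏ l ∈ Finset.Icc 1 (j+1), q (i - (l : ZMod n)))
          * Fseg n p q i (j+1+1) n * kappa n p q i / kappa n p q (i - ((j+1 : ℕ) : ZMod n)))) := by
    unfold kappa
    exact Finset.sum_congr rfl hterm
  rw [this, Finset.sum_range_sub' (fun j => (∏ l ∈ Finset.Icc 1 j, q (i - (l : ZMod n)))
      * Fseg n p q i (j+1) n * kappa n p q i / kappa n p q (i - (j : ZMod n))) n]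
  rw [Fseg_empty n p q i (show n < n + 1 by omega)]
  rw [show ((0:ℕ) : ZMod n) = 0 from Nat.cast_zero, sub_zero,
    Finset.Icc_eq_empty (show ¬(1:ℕ) ≤ 0 by omega), Finset.prod_empty,
    ← kappa_eq_Fseg_zero]
  field_simp
  simp

end aux

/-- The geometric R-matrix `R(p_i) = q_i κ_{i+1}/κ_i`, `R(q_i) = p_i κ_i/κ_{i+1}` is an
involution: applying the substitution twice returns the original variables. -/
theorem statement_0 {K : Type*} [Field K] (n : ℕ) (hn : 2 ≤ n)
    (p q p' q' : ZMod n → K)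
    (hκ : ∀ i, kappa n p q i ≠ 0)
    (hp' : ∀ i, p' i = q i * kappa n p q (i + 1) / kappa n p q i)
    (hq' : ∀ i, q' i = p i * kappa n p q i / kappa n p q (i + 1))
    (hκ' : ∀ i, kappa n p' q' i ≠ 0) :
    (∀ i, q' i * kappa n p' q' (i + 1) / kappa n p' q' i = p i) ∧
    (∀ i, p' i * kappa n p' q' i / kappa n p' q' (i + 1) = q i) := by
  have hfix : ∀ i, kappa n p' q' i = kappa n p q i := fun i =>
    kappa_fixed n p q i p' q' hκ hp' hq'
  constructor
  · intro i
    rw [hfix, hfix, hq' i]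
    field_simp [hκ i, hκ (i+1)]
  · intro i
    rw [hfix, hfix, hp' i]
    field_simp [hκ i, hκ (i+1)]
end

section
/- Let n ≥ 2 and let p_i, q_i (i ∈ ℤ/nℤ) be commuting indeterminates. With κ_i(p,q) = Σ_{j=0}^{n-1} (∏_{ℓ=1}^{j} p_{i-ℓ})(∏_{ℓ=j+2}^{n} q_{i-ℓ}) and the geometric R-matrix defined by p'_i = q_i κ_{i+1}/κ_i, q'_i = p_i κ_i/κ_{i+1}, the following two identities hold for all i: p'_i q'_i = p_i q_i, and p'_{i+1} + q'_i = p_{i+1} + q_i. -/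
private lemma prod_Icc_eq_prod_range' {K : Type*} [CommMonoid K] (h : ℕ → K) (a b : ℕ) :
    ∏ l ∈ Finset.Icc a b, h l = ∏ l ∈ Finset.range (b + 1 - a), h (a + l) := by
  rw [← Finset.Ico_add_one_right_eq_Icc, Finset.prod_Ico_eq_prod_range]

private lemma sum_range_eq_last {M : Type*} [AddCommMonoid M] (f : ℕ → M) (n : ℕ)
    (hn : 1 ≤ n) :
    ∑ j ∈ Finset.range n, f j = ∑ j ∈ Finset.range (n - 1), f j + f (n - 1) := by
  conv_lhs => rw [show n = (n - 1) + 1 from by omega]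
  rw [Finset.sum_range_succ]

private lemma sum_range_eq_first {M : Type*} [AddCommMonoid M] (f : ℕ → M) (n : ℕ)
    (hn : 1 ≤ n) :
    ∑ j ∈ Finset.range n, f j = ∑ j ∈ Finset.range (n - 1), f (j + 1) + f 0 := by
  conv_lhs => rw [show n = (n - 1) + 1 from by omega]
  rw [Finset.sum_range_succ']

private lemma key_identity_s1 {K : Type*} [Field K] (n : ℕ) (hn : 2 ≤ n) (p q : ZMod n → K)
    (i : ZMod n) :
    p i * kappa n p q i + q (i + 1) * kappa n p q (i + 2)
      = (p (i + 1) + q i) * kappa n p q (i + 1) := by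
  have hcast0 : (((n - 1) + 1 : ℕ) : ZMod n) = 0 := by
    rw [show (n - 1) + 1 = n from by omega]; exact_mod_cast ZMod.natCast_self n
  have hcastn : ((n : ℕ) : ZMod n) = 0 := ZMod.natCast_self n
  have hcast1 : ((n - 1 : ℕ) : ZMod n) = -1 := by
    have := hcast0; push_cast at this; linear_combination this
  set A : ℕ → K := fun j =>
    (∏ l ∈ Finset.range j, p (i - (l : ZMod n))) *
    (∏ l ∈ Finset.Icc (j + 1) (n - 1), q (i - (l : ZMod n))) with hA
  -- S1 : κ_{i+1} = Σ A j
  have S1 : kappa n p q (i + 1) = ∑ j ∈ Finset.range n, A j := by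
    unfold kappa
    refine Finset.sum_congr rfl fun j hj => ?_
    rw [hA]
    congr 1
    · rw [prod_Icc_eq_prod_range']
      refine Finset.prod_congr (by congr 1) fun l _ => ?_
      congr 1; push_cast; ring
    · rw [prod_Icc_eq_prod_range', prod_Icc_eq_prod_range']
      refine Finset.prod_congr (by congr 1 <;> omega) fun l _ => ?_
      congr 1; push_cast; ring
  -- helper : ∏_{range (j+1)} p(i-l) = p i * ∏_{Icc 1 j} p(i-l)
  have hp_step : ∀ j : ℕ, (∏ l ∈ Finset.range (j + 1), p (i - (l : ZMod n)))
      = p i * ∏ l ∈ Finset.Icc 1 j, p (i - (l : ZMod n)) := by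
    intro j
    rw [Finset.prod_range_succ', prod_Icc_eq_prod_range']
    rw [mul_comm]
    congr 1
    · push_cast; ring_nf
    · refine Finset.prod_congr (by congr 1) fun l _ => ?_
      congr 1; push_cast; ring
  -- S2
  have S2 : p i * kappa n p q i
      = q i * (∑ j ∈ Finset.range (n - 1), A (j + 1)) + A n := by
    unfold kappa
    rw [Finset.mul_sum, sum_range_eq_last _ n (by omega), Finset.mul_sum]
    congr 1
    · refine Finset.sum_congr rfl fun j hj => ?_
      simp only [Finset.mem_range] at hj
      have hq_split : ∏ l ∈ Finset.Icc (j + 2) n, q (i - (l : ZMod n))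
          = (∏ l ∈ Finset.Icc (j + 2) (n - 1), q (i - (l : ZMod n))) * q i := by
        rw [show Finset.Icc (j + 2) n = Finset.Icc (j + 2) ((n - 1) + 1) from by
          congr 1; omega]
        rw [Finset.prod_Icc_succ_top (by omega)]
        congr 1
        rw [hcast0, sub_zero]
      rw [hA]
      simp only [show j + 1 + 1 = j + 2 from rfl]
      rw [hq_split, hp_step j]
      ring
    · -- p i * B (n-1) = A n
      have hIcc_empty1 : Finset.Icc ((n - 1) + 2) n = (∅ : Finset ℕ) :=
        Finset.Icc_eq_empty (by omega)
      have hIcc_empty2 : Finset.Icc (n + 1) (n - 1) = (∅ : Finset ℕ) :=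
        Finset.Icc_eq_empty (by omega)
      rw [hA]
      simp only [hIcc_empty1, hIcc_empty2, Finset.prod_empty, mul_one]
      rw [show Finset.range n = Finset.range ((n - 1) + 1) from by congr 1 <;> omega,
        hp_step (n - 1)]
  -- S3
  have S3 : q (i + 1) * kappa n p q (i + 2)
      = p (i + 1) * (∑ j ∈ Finset.range (n - 1), A j) + q i * A 0 := by
    unfold kappa
    rw [Finset.mul_sum, sum_range_eq_first _ n (by omega), Finset.mul_sum]
    congr 1
    · refine Finset.sum_congr rfl fun j hj => ?_
      simp only [Finset.mem_range] at hj
      -- q(i+1) * C(j+1) = p(i+1) * A j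
      have hp_part : ∏ l ∈ Finset.Icc 1 (j + 1), p (i + 2 - (l : ZMod n))
          = p (i + 1) * ∏ l ∈ Finset.range j, p (i - (l : ZMod n)) := by
        rw [prod_Icc_eq_prod_range']
        rw [show j + 1 + 1 - 1 = j + 1 from by omega, Finset.prod_range_succ']
        rw [mul_comm]
        congr 1
        · push_cast; ring_nf
        · refine Finset.prod_congr rfl fun l _ => ?_
          congr 1; push_cast; ring
      have hq_part : q (i + 1) * ∏ l ∈ Finset.Icc (j + 1 + 2) n, q (i + 2 - (l : ZMod n))
          = ∏ l ∈ Finset.Icc (j + 1) (n - 1), q (i - (l : ZMod n)) := by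
        rw [show Finset.Icc (j + 1) (n - 1) = Finset.Icc (j + 1) ((n - 2) + 1) from by
          congr 1; omega]
        rw [Finset.prod_Icc_succ_top (by omega), mul_comm]
        congr 1
        · rw [prod_Icc_eq_prod_range', prod_Icc_eq_prod_range']
          refine Finset.prod_congr (by congr 1 <;> omega) fun l _ => ?_
          congr 1; push_cast; ring
        · congr 1
          rw [show ((n - 2) + 1 : ℕ) = (n - 1 : ℕ) from by omega, hcast1]
          ring
      simp only [hA]
      rw [hp_part, ← hq_part]
      ring
    · -- q(i+1) * C 0 = q i * A 0
      have hIcc0 : Finset.Icc 1 0 = (∅ : Finset ℕ) := Finset.Icc_eq_empty (by omega)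
      rw [hA]
      simp only [hIcc0, Finset.prod_empty, Finset.range_zero, one_mul]
      have hC0 : ∏ l ∈ Finset.Icc (0 + 2) n, q (i + 2 - (l : ZMod n))
          = ∏ l ∈ Finset.range (n - 1), q (i - (l : ZMod n)) := by
        rw [prod_Icc_eq_prod_range']
        refine Finset.prod_congr (by congr 1 <;> omega) fun l _ => ?_
        congr 1; push_cast; ring
      rw [hC0]
      rw [show Finset.range (n - 1) = Finset.range ((n - 2) + 1) from by congr 1 <;> omega,
        Finset.prod_range_succ']
      rw [show Finset.Icc (0 + 1) (n - 1) = Finset.Icc 1 ((n - 2) + 1) from by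
        congr 1 <;> omega]
      rw [Finset.prod_Icc_succ_top (by omega)]
      have eb : q (i - (((n - 2) + 1 : ℕ) : ZMod n)) = q (i + 1) := by
        congr 1
        rw [show ((n - 2) + 1 : ℕ) = (n - 1 : ℕ) from by omega, hcast1]
        ring
      have ec : ∏ l ∈ Finset.Icc 1 (n - 2), q (i - (l : ZMod n))
          = ∏ l ∈ Finset.range (n - 2), q (i - ((l + 1 : ℕ) : ZMod n)) := by
        rw [prod_Icc_eq_prod_range']
        refine Finset.prod_congr (by congr 1 <;> omega) fun l _ => ?_
        congr 1; push_cast; ring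
      rw [eb, ec]
      simp only [Nat.cast_zero, sub_zero]
      ring
  -- A n = p (i+1) * A (n-1)
  have e3 : A n = p (i + 1) * A (n - 1) := by
    have hIcc_empty2 : Finset.Icc (n + 1) (n - 1) = (∅ : Finset ℕ) :=
      Finset.Icc_eq_empty (by omega)
    have hIcc_empty3 : Finset.Icc ((n - 1) + 1) (n - 1) = (∅ : Finset ℕ) :=
      Finset.Icc_eq_empty (by omega)
    rw [hA]
    simp only [hIcc_empty2, hIcc_empty3, Finset.prod_empty, mul_one]
    rw [show Finset.range n = Finset.range ((n - 1) + 1) from by congr 1 <;> omega,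
      Finset.prod_range_succ, hcast1]
    rw [show i - (-1 : ZMod n) = i + 1 from by ring]
    ring
  have e1 : ∑ j ∈ Finset.range n, A j
      = ∑ j ∈ Finset.range (n - 1), A (j + 1) + A 0 := sum_range_eq_first _ n (by omega)
  have e2 : ∑ j ∈ Finset.range n, A j
      = ∑ j ∈ Finset.range (n - 1), A j + A (n - 1) := sum_range_eq_last _ n (by omega)
  rw [S1, S2, S3]
  linear_combination (-(q i)) * e1 - (p (i + 1)) * e2 + e3

/-- The geometric R-matrix preserves the local conserved quantities:
`p'_i q'_i = p_i q_i` and `p'_{i+1} + q'_i = p_{i+1} + q_i`. -/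
theorem statement_1 {K : Type*} [Field K] (n : ℕ) (hn : 2 ≤ n)
    (p q p' q' : ZMod n → K)
    (hκ : ∀ i, kappa n p q i ≠ 0)
    (hp' : ∀ i, p' i = q i * kappa n p q (i + 1) / kappa n p q i)
    (hq' : ∀ i, q' i = p i * kappa n p q i / kappa n p q (i + 1)) :
    (∀ i, p' i * q' i = p i * q i) ∧
    (∀ i, p' (i + 1) + q' i = p (i + 1) + q i) := by
  constructor
  · intro i
    have h1 := hκ i
    have h2 := hκ (i + 1)
    rw [hp', hq']
    field_simp
  · intro i
    have h1 := hκ i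
    have h2 := hκ (i + 1)
    have h3 := hκ (i + 2)
    rw [hp', hq', show i + 1 + 1 = i + 2 from by ring]
    have h := key_identity_s1 n hn p q i
    field_simp
    linear_combination h
end

section
/- Let n ≥ 2 and define, for commuting indeterminates p_i, q_i (i ∈ ℤ/nℤ) and a spectral parameter t, the n×n matrix M(r;t) with entries M(r;t)_{ii} = r_i, M(r;t)_{i+1,i} = 1, M(r;t)_{1,n} = t, and all other entries 0. Let R be the geometric R-matrix with (p',q') = R(p,q) as above. Then M(p;t)·M(q;t) = M(p';t)·M(q';t) as matrices over ℚ(p,q)[t]. -/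
/-- The n×n matrix `M(r;t)`, with diagonal entries `r_1,…,r_n`, entries `1` on the
subdiagonal, entry `t` in position `(1,n)`, and `0` elsewhere. -/
def Mmat {K : Type*} [Field K] (n : ℕ) (r : ZMod n → K) (t : K) :
    Matrix (Fin n) (Fin n) K :=
  Matrix.of fun a b =>
    (if a = b then r (((a : ℕ) + 1 : ℕ) : ZMod n) else 0) +
    (if (a : ℕ) = (b : ℕ) + 1 then 1 else 0) +
    (if (a : ℕ) = 0 ∧ (b : ℕ) = n - 1 then t else 0)

private lemma prod_Icc_shift {K : Type*} [CommMonoid K] (f : ℕ → K) (a b : ℕ) :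
    ∏ l ∈ Finset.Icc (a+1) (b+1), f l = ∏ l ∈ Finset.Icc a b, f (l+1) := by
  rw [← Finset.map_add_right_Icc, Finset.prod_map]
  rfl

private lemma prod_Icc_bot {K : Type*} [CommMonoid K] (f : ℕ → K) (b : ℕ) :
    ∏ l ∈ Finset.Icc 0 b, f l = f 0 * ∏ l ∈ Finset.Icc 1 b, f l := by
  have h : Finset.Icc 0 b = insert 0 (Finset.Icc 1 b) := by
    ext x; simp [Finset.mem_Icc]; omega
  rw [h, Finset.prod_insert (by simp)]

private lemma prod_Icc_eq_univ {K : Type*} [CommMonoid K] {n : ℕ} [NeZero n]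
    (f : ZMod n → K) (c : ZMod n) :
    ∏ l ∈ Finset.Icc 1 n, f (c - (l : ZMod n)) = ∏ x : ZMod n, f x := by
  have hn : 1 ≤ n := Nat.one_le_iff_ne_zero.mpr (NeZero.ne n)
  refine Finset.prod_nbij' (s := Finset.Icc 1 n) (t := Finset.univ)
    (f := fun l => f (c - (l : ZMod n))) (g := f)
    (i := fun l => c - (l : ZMod n))
    (j := fun x => if c - x = 0 then n else (c - x).val) ?_ ?_ ?_ ?_ ?_
  · intro l _; exact Finset.mem_univ _
  · intro x _
    by_cases h : c - x = 0
    · simp [h, Finset.mem_Icc, hn]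
    · rw [if_neg h, Finset.mem_Icc]
      constructor
      · have := (ZMod.val_eq_zero (c - x)).not.mpr h
        omega
      · exact le_of_lt (ZMod.val_lt _)
  · intro l hl
    rw [Finset.mem_Icc] at hl
    rw [sub_sub_cancel]
    by_cases h : l = n
    · rw [h, if_pos (ZMod.natCast_self n)]
    · have hln : l < n := by omega
      have hne : ((l : ZMod n)) ≠ 0 := by
        rw [Ne, ZMod.natCast_eq_zero_iff]
        intro hdvd
        have := Nat.le_of_dvd (by omega) hdvd
        omega
      rw [if_neg hne, ZMod.val_natCast, Nat.mod_eq_of_lt hln]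
  · intro x _
    by_cases h : c - x = 0
    · rw [if_pos h, ZMod.natCast_self, sub_zero]
      exact sub_eq_zero.mp h
    · rw [if_neg h, ZMod.natCast_zmod_val, sub_sub_cancel]
  · intro l _; rfl

private lemma key_id {K : Type*} [Field K] {n : ℕ} [NeZero n] (hn : 2 ≤ n)
    (p q : ZMod n → K) (i : ZMod n) :
    q i * kappa n p q (i + 1) =
      p i * kappa n p q i + ((∏ x : ZMod n, q x) - ∏ x : ZMod n, p x) := by
  set A : ℕ → K := fun k =>
    (∏ l ∈ Finset.Icc 1 k, p (i + 1 - (l : ZMod n))) *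
    (∏ l ∈ Finset.Icc (k+2) (n+1), q (i + 1 - (l : ZMod n))) with hA
  have hcast : i + 1 - ((n + 1 : ℕ) : ZMod n) = i := by
    push_cast [ZMod.natCast_self]; ring
  have h1 : q i * kappa n p q (i + 1) = ∑ j ∈ Finset.range n, A j := by
    rw [kappa, Finset.mul_sum]
    refine Finset.sum_congr rfl fun j hj => ?_
    rw [Finset.mem_range] at hj
    simp only [hA]
    rw [Finset.prod_Icc_succ_top (by omega : j + 2 ≤ n + 1), hcast]
    ring
  have h2 : p i * kappa n p q i = ∑ j ∈ Finset.range n, A (j+1) := by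
    rw [kappa, Finset.mul_sum]
    refine Finset.sum_congr rfl fun j hj => ?_
    simp only [hA]
    have e1 : (∏ l ∈ Finset.Icc 1 (j+1), p (i + 1 - (l : ZMod n)))
        = p i * ∏ l ∈ Finset.Icc 1 j, p (i - (l : ZMod n)) := by
      have hs := prod_Icc_shift (fun l => p (i + 1 - (l : ZMod n))) 0 j
      norm_num only at hs
      rw [hs]
      have : ∀ l ∈ Finset.Icc 0 j, p (i + 1 - ((l + 1 : ℕ) : ZMod n))
          = p (i - (l : ZMod n)) := by
        intro l _; congr 1; push_cast; ring
      rw [Finset.prod_congr rfl this, prod_Icc_bot (fun l => p (i - (l : ZMod n))) j]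
      norm_num
    have e2 : (∏ l ∈ Finset.Icc (j+1+2) (n+1), q (i + 1 - (l : ZMod n)))
        = ∏ l ∈ Finset.Icc (j+2) n, q (i - (l : ZMod n)) := by
      have hs := prod_Icc_shift (fun l => q (i + 1 - (l : ZMod n))) (j+2) n
      rw [show j+1+2 = j+2+1 by omega, hs]
      refine Finset.prod_congr rfl fun l _ => ?_
      congr 1; push_cast; ring
    rw [e1, e2]
    ring
  have hA0 : A 0 = ∏ x : ZMod n, q x := by
    simp only [hA]
    rw [show (0:ℕ)+2 = 1+1 by norm_num,
        prod_Icc_shift (fun l => q (i + 1 - (l : ZMod n))) 1 n]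
    have : ∀ l ∈ Finset.Icc 1 n, q (i + 1 - ((l + 1 : ℕ) : ZMod n))
        = q (i - (l : ZMod n)) := by
      intro l _; congr 1; push_cast; ring
    rw [Finset.prod_congr rfl this, prod_Icc_eq_univ]
    simp
  have hAn : A n = ∏ x : ZMod n, p x := by
    simp only [hA]
    rw [Finset.Icc_eq_empty (show ¬(n+2 ≤ n+1) by omega), Finset.prod_empty, mul_one,
      prod_Icc_eq_univ (fun x => p x) (i+1)]
  have t1 : ∑ j ∈ Finset.range (n+1), A j = (∑ j ∈ Finset.range n, A (j+1)) + A 0 :=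
    Finset.sum_range_succ' A n
  have t2 : ∑ j ∈ Finset.range (n+1), A j = (∑ j ∈ Finset.range n, A j) + A n :=
    Finset.sum_range_succ A n
  rw [h1, h2, ← hA0, ← hAn]
  linear_combination t1 - t2

private lemma prod_entry {K : Type*} [Field K] {n : ℕ} (hn : 2 ≤ n)
    (r s : ZMod n → K) (t : K) (a b : Fin n) :
    (Mmat n r t * Mmat n s t) a b =
      (if a = b then r (((a : ℕ) + 1 : ℕ) : ZMod n) * s (((a : ℕ) + 1 : ℕ) : ZMod n) else 0)
    + (if (a : ℕ) = (b : ℕ) + 1 then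
        r (((a : ℕ) + 1 : ℕ) : ZMod n) + s (((b : ℕ) + 1 : ℕ) : ZMod n) else 0)
    + (if (a : ℕ) = (b : ℕ) + 2 then 1 else 0)
    + (if (a : ℕ) = 0 ∧ (b : ℕ) = n - 1 then
        t * (r (((a : ℕ) + 1 : ℕ) : ZMod n) + s (((b : ℕ) + 1 : ℕ) : ZMod n)) else 0)
    + (if (a : ℕ) = 1 ∧ (b : ℕ) = n - 1 then t else 0)
    + (if (a : ℕ) = 0 ∧ (b : ℕ) = n - 2 then t else 0) := by
  rw [Matrix.mul_apply]
  simp only [Mmat, Matrix.of_apply]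
  have expand : ∀ c : Fin n,
      ((if a = c then r (((a : ℕ) + 1 : ℕ) : ZMod n) else 0) +
       (if (a : ℕ) = (c : ℕ) + 1 then 1 else 0) +
       (if (a : ℕ) = 0 ∧ (c : ℕ) = n - 1 then t else 0)) *
      ((if c = b then s (((c : ℕ) + 1 : ℕ) : ZMod n) else 0) +
       (if (c : ℕ) = (b : ℕ) + 1 then 1 else 0) +
       (if (c : ℕ) = 0 ∧ (b : ℕ) = n - 1 then t else 0))
      =
      (if a = c then r (((a : ℕ) + 1 : ℕ) : ZMod n) else 0) *
        (if c = b then s (((c : ℕ) + 1 : ℕ) : ZMod n) else 0)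
    + (if a = c then r (((a : ℕ) + 1 : ℕ) : ZMod n) else 0) *
        (if (c : ℕ) = (b : ℕ) + 1 then 1 else 0)
    + (if a = c then r (((a : ℕ) + 1 : ℕ) : ZMod n) else 0) *
        (if (c : ℕ) = 0 ∧ (b : ℕ) = n - 1 then t else 0)
    + (if (a : ℕ) = (c : ℕ) + 1 then 1 else 0) *
        (if c = b then s (((c : ℕ) + 1 : ℕ) : ZMod n) else 0)
    + (if (a : ℕ) = (c : ℕ) + 1 then 1 else 0) *
        (if (c : ℕ) = (b : ℕ) + 1 then 1 else 0)
    + (if (a : ℕ) = (c : ℕ) + 1 then 1 else 0) *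
        (if (c : ℕ) = 0 ∧ (b : ℕ) = n - 1 then t else 0)
    + (if (a : ℕ) = 0 ∧ (c : ℕ) = n - 1 then t else 0) *
        (if c = b then s (((c : ℕ) + 1 : ℕ) : ZMod n) else 0)
    + (if (a : ℕ) = 0 ∧ (c : ℕ) = n - 1 then t else 0) *
        (if (c : ℕ) = (b : ℕ) + 1 then 1 else 0)
    + (if (a : ℕ) = 0 ∧ (c : ℕ) = n - 1 then t else 0) *
        (if (c : ℕ) = 0 ∧ (b : ℕ) = n - 1 then t else 0) := fun c => by ring
  rw [Finset.sum_congr rfl fun c _ => expand c]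
  simp only [Finset.sum_add_distrib]
  have e11 : (∑ c : Fin n, (if a = c then r (((a : ℕ) + 1 : ℕ) : ZMod n) else 0) *
        (if c = b then s (((c : ℕ) + 1 : ℕ) : ZMod n) else 0))
      = (if a = b then r (((a : ℕ) + 1 : ℕ) : ZMod n) * s (((a : ℕ) + 1 : ℕ) : ZMod n) else 0) := by
    rw [Finset.sum_eq_single a (fun c _ hc => by rw [if_neg (fun h => hc h.symm), zero_mul])
      (fun h => absurd (Finset.mem_univ a) h)]
    by_cases h : a = b <;> simp [h]
  have e12 : (∑ c : Fin n, (if a = c then r (((a : ℕ) + 1 : ℕ) : ZMod n) else 0) *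
        (if (c : ℕ) = (b : ℕ) + 1 then 1 else 0))
      = (if (a : ℕ) = (b : ℕ) + 1 then r (((a : ℕ) + 1 : ℕ) : ZMod n) else 0) := by
    rw [Finset.sum_eq_single a (fun c _ hc => by rw [if_neg (fun h => hc h.symm), zero_mul])
      (fun h => absurd (Finset.mem_univ a) h)]
    by_cases h : (a : ℕ) = (b : ℕ) + 1 <;> simp [h]
  have e13 : (∑ c : Fin n, (if a = c then r (((a : ℕ) + 1 : ℕ) : ZMod n) else 0) *
        (if (c : ℕ) = 0 ∧ (b : ℕ) = n - 1 then t else 0))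
      = (if (a : ℕ) = 0 ∧ (b : ℕ) = n - 1 then r (((a : ℕ) + 1 : ℕ) : ZMod n) * t else 0) := by
    rw [Finset.sum_eq_single a (fun c _ hc => by rw [if_neg (fun h => hc h.symm), zero_mul])
      (fun h => absurd (Finset.mem_univ a) h)]
    by_cases h : (a : ℕ) = 0 ∧ (b : ℕ) = n - 1 <;> simp [h]
  have e21 : (∑ c : Fin n, (if (a : ℕ) = (c : ℕ) + 1 then 1 else 0) *
        (if c = b then s (((c : ℕ) + 1 : ℕ) : ZMod n) else 0))
      = (if (a : ℕ) = (b : ℕ) + 1 then s (((b : ℕ) + 1 : ℕ) : ZMod n) else 0) := by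
    rw [Finset.sum_eq_single b (fun c _ hc => by rw [if_neg hc, mul_zero])
      (fun h => absurd (Finset.mem_univ b) h)]
    by_cases h : (a : ℕ) = (b : ℕ) + 1 <;> simp [h]
  have e22 : (∑ c : Fin n, (if (a : ℕ) = (c : ℕ) + 1 then 1 else 0) *
        (if (c : ℕ) = (b : ℕ) + 1 then 1 else 0))
      = (if (a : ℕ) = (b : ℕ) + 2 then (1 : K) else 0) := by
    by_cases h : (a : ℕ) = (b : ℕ) + 2
    · have hb1 : (b : ℕ) + 1 < n := by have := a.isLt; omega
      rw [Finset.sum_eq_single (⟨(b : ℕ) + 1, hb1⟩ : Fin n)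
        (fun c _ hc => by
          rw [if_neg (show ¬((c : ℕ) = (b : ℕ) + 1) from fun hh => hc (Fin.ext hh)), mul_zero])
        (fun h => absurd (Finset.mem_univ _) h)]
      simp only [show ((⟨(b : ℕ) + 1, hb1⟩ : Fin n) : ℕ) = (b : ℕ) + 1 from rfl]
      split_ifs <;> first | ring1 | (exfalso; omega)
    · rw [if_neg h, Finset.sum_eq_zero]
      intro c _
      by_cases h2 : (c : ℕ) = (b : ℕ) + 1
      · rw [if_neg (fun h1 => h (by omega)), zero_mul]
      · rw [if_neg h2, mul_zero]
  have e23 : (∑ c : Fin n, (if (a : ℕ) = (c : ℕ) + 1 then 1 else 0) *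
        (if (c : ℕ) = 0 ∧ (b : ℕ) = n - 1 then t else 0))
      = (if (a : ℕ) = 1 ∧ (b : ℕ) = n - 1 then t else 0) := by
    by_cases h : (a : ℕ) = 1 ∧ (b : ℕ) = n - 1
    · have h0 : 0 < n := by omega
      rw [Finset.sum_eq_single (⟨0, h0⟩ : Fin n)
        (fun c _ hc => by
          rw [if_neg (show ¬((c : ℕ) = 0 ∧ (b : ℕ) = n - 1) from
            fun hh => hc (Fin.ext hh.1)), mul_zero])
        (fun h => absurd (Finset.mem_univ _) h)]
      simp only [show ((⟨0, h0⟩ : Fin n) : ℕ) = 0 from rfl, eq_self_iff_true,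
        true_and, and_true]
      obtain ⟨ha1, hb1⟩ := h
      split_ifs <;> first | ring1 | (exfalso; omega)
    · rw [Finset.sum_eq_zero, if_neg h]
      intro c _
      by_cases h2 : (c : ℕ) = 0 ∧ (b : ℕ) = n - 1
      · rw [if_neg (show ¬((a : ℕ) = (c : ℕ) + 1) from
          fun h1 => h ⟨by omega, h2.2⟩), zero_mul]
      · rw [if_neg h2, mul_zero]
  have e31 : (∑ c : Fin n, (if (a : ℕ) = 0 ∧ (c : ℕ) = n - 1 then t else 0) *
        (if c = b then s (((c : ℕ) + 1 : ℕ) : ZMod n) else 0))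
      = (if (a : ℕ) = 0 ∧ (b : ℕ) = n - 1 then t * s (((b : ℕ) + 1 : ℕ) : ZMod n) else 0) := by
    rw [Finset.sum_eq_single b (fun c _ hc => by rw [if_neg hc, mul_zero])
      (fun h => absurd (Finset.mem_univ b) h)]
    by_cases h : (a : ℕ) = 0 ∧ (b : ℕ) = n - 1 <;> simp [h]
  have e32 : (∑ c : Fin n, (if (a : ℕ) = 0 ∧ (c : ℕ) = n - 1 then t else 0) *
        (if (c : ℕ) = (b : ℕ) + 1 then 1 else 0))
      = (if (a : ℕ) = 0 ∧ (b : ℕ) = n - 2 then t else 0) := by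
    by_cases h : (a : ℕ) = 0 ∧ (b : ℕ) = n - 2
    · have hn1 : n - 1 < n := by omega
      rw [Finset.sum_eq_single (⟨n - 1, hn1⟩ : Fin n)
        (fun c _ hc => by
          rw [if_neg (show ¬((a : ℕ) = 0 ∧ (c : ℕ) = n - 1) from
            fun hh => hc (Fin.ext hh.2)), zero_mul])
        (fun h => absurd (Finset.mem_univ _) h)]
      simp only [show ((⟨n - 1, hn1⟩ : Fin n) : ℕ) = n - 1 from rfl, eq_self_iff_true,
        true_and, and_true]
      obtain ⟨ha1, hb1⟩ := h
      split_ifs <;> first | ring1 | (exfalso; omega)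
    · rw [Finset.sum_eq_zero, if_neg h]
      intro c _
      by_cases h1 : (a : ℕ) = 0 ∧ (c : ℕ) = n - 1
      · rw [if_neg (show ¬((c : ℕ) = (b : ℕ) + 1) from
          fun h2 => h ⟨h1.1, by omega⟩), mul_zero]
      · rw [if_neg h1, zero_mul]
  have e33 : (∑ c : Fin n, (if (a : ℕ) = 0 ∧ (c : ℕ) = n - 1 then t else 0) *
        (if (c : ℕ) = 0 ∧ (b : ℕ) = n - 1 then t else 0)) = 0 := by
    refine Finset.sum_eq_zero fun c _ => ?_
    by_cases h1 : (a : ℕ) = 0 ∧ (c : ℕ) = n - 1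
    · rw [if_neg (show ¬((c : ℕ) = 0 ∧ (b : ℕ) = n - 1) from
        fun h2 => by omega), mul_zero]
    · rw [if_neg h1, zero_mul]
  rw [e11, e12, e13, e21, e22, e23, e31, e32, e33]
  split_ifs <;> ring

/-- The geometric R-matrix satisfies `M(p;t)·M(q;t) = M(p';t)·M(q';t)`. -/
theorem statement_2 {K : Type*} [Field K] (n : ℕ) (hn : 2 ≤ n)
    (p q p' q' : ZMod n → K) (t : K)
    (hκ : ∀ i, kappa n p q i ≠ 0)
    (hp' : ∀ i, p' i = q i * kappa n p q (i + 1) / kappa n p q i)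
    (hq' : ∀ i, q' i = p i * kappa n p q i / kappa n p q (i + 1)) :
    Mmat n p t * Mmat n q t = Mmat n p' t * Mmat n q' t := by
  haveI : NeZero n := ⟨by omega⟩
  have cons1 : ∀ i, p' i * q' i = p i * q i := by
    intro i
    rw [hp' i, hq' i]
    have h1 := hκ i
    have h2 := hκ (i + 1)
    field_simp
  have key := key_id hn p q
  have cons2 : ∀ i : ZMod n, p' (i + 1) + q' i = p (i + 1) + q i := by
    intro i
    rw [hp' (i + 1), hq' i]
    have h1 := key (i + 1)
    have h2 := key i
    have h3 := hκ (i + 1)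
    field_simp
    linear_combination h1 - h2
  ext a b
  rw [prod_entry hn p q t a b, prod_entry hn p' q' t a b]
  have h1 : (if a = b then p (((a : ℕ) + 1 : ℕ) : ZMod n) * q (((a : ℕ) + 1 : ℕ) : ZMod n) else 0)
      = (if a = b then p' (((a : ℕ) + 1 : ℕ) : ZMod n) * q' (((a : ℕ) + 1 : ℕ) : ZMod n)
        else 0) := by
    split_ifs with h
    · exact (cons1 _).symm
    · rfl
  have h2 : (if (a : ℕ) = (b : ℕ) + 1 then
        p (((a : ℕ) + 1 : ℕ) : ZMod n) + q (((b : ℕ) + 1 : ℕ) : ZMod n) else 0)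
      = (if (a : ℕ) = (b : ℕ) + 1 then
        p' (((a : ℕ) + 1 : ℕ) : ZMod n) + q' (((b : ℕ) + 1 : ℕ) : ZMod n) else 0) := by
    split_ifs with h
    · have e : (((a : ℕ) + 1 : ℕ) : ZMod n) = (((b : ℕ) + 1 : ℕ) : ZMod n) + 1 := by
        rw [h]; push_cast; ring
      rw [e]
      exact (cons2 _).symm
    · rfl
  have h4 : (if (a : ℕ) = 0 ∧ (b : ℕ) = n - 1 then
        t * (p (((a : ℕ) + 1 : ℕ) : ZMod n) + q (((b : ℕ) + 1 : ℕ) : ZMod n)) else 0)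
      = (if (a : ℕ) = 0 ∧ (b : ℕ) = n - 1 then
        t * (p' (((a : ℕ) + 1 : ℕ) : ZMod n) + q' (((b : ℕ) + 1 : ℕ) : ZMod n)) else 0) := by
    split_ifs with h
    · obtain ⟨ha, hb⟩ := h
      have e1 : (((a : ℕ) + 1 : ℕ) : ZMod n) = (0 : ZMod n) + 1 := by
        rw [ha]; push_cast; ring
      have e2 : (((b : ℕ) + 1 : ℕ) : ZMod n) = 0 := by
        rw [hb, show n - 1 + 1 = n from by omega]
        exact ZMod.natCast_self n
      rw [e1, e2, ← cons2 0]
    · rfl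
  rw [h1, h2, h4]
end

section
/- Let n ≥ 2 and let x_i⁻, x_i, x_i⁺ (i ∈ ℤ/nℤ) be commuting indeterminates. Define the simple cluster R-matrix R_x on ℚ(x⁻,x,x⁺) by R_x(x_i) = (Σ_{j=1}^{n} x_{j+1}⁻ (∏_{ℓ=j+2}^{j-1} x_ℓ) x_j⁺) / (∏_{j≠i} x_j), R_x(x_i⁻) = x_i⁻, R_x(x_i⁺) = x_i⁺ (products and indices modulo n, the product ∏_{ℓ=j+2}^{j-1} x_ℓ running over all ℓ ∈ ℤ/nℤ except j, j+1). Then R_x is an involution: R_x(R_x(x_i)) = x_i for all i. -/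
/-- The simple cluster R-matrix applied to the middle variables:
`R_x(x_i) = (Σ_{j} x⁻_{j+1} (∏_{ℓ≠j,j+1} x_ℓ) x⁺_j) / ∏_{j≠i} x_j`,
indices modulo `n`. -/
def clusterRx {K : Type*} [Field K] (n : ℕ) [NeZero n] (xm x xp : ZMod n → K)
    (i : ZMod n) : K :=
  (∑ j : ZMod n, xm (j + 1) * (∏ l ∈ (Finset.univ.erase j).erase (j + 1), x l) * xp j) /
    ∏ l ∈ Finset.univ.erase i, x l

/-- The simple cluster R-matrix (which fixes the variables `x⁻` and `x⁺`) is an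
involution on the middle variables. -/
theorem statement_3 {K : Type*} [Field K] (n : ℕ) [NeZero n] (hn : 2 ≤ n)
    (xm x xp : ZMod n → K)
    (hx : ∀ j, x j ≠ 0)
    (hRx : ∀ j, clusterRx n xm x xp j ≠ 0) :
    ∀ i, clusterRx n xm (fun j => clusterRx n xm x xp j) xp i = x i := by
  intro i
  haveI : Fact (1 < n) := ⟨hn⟩
  set S := ∑ j : ZMod n, xm (j + 1) * (∏ l ∈ (Finset.univ.erase j).erase (j + 1), x l) * xp j
    with hSdef
  set P := ∏ l : ZMod n, x l with hPdef
  have hPne : P ≠ 0 := Finset.prod_ne_zero_iff.mpr (fun j _ => hx j)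
  have hprod : ∀ j : ZMod n, ∏ l ∈ Finset.univ.erase j, x l = P / x j := by
    intro j
    rw [eq_div_iff (hx j), mul_comm, Finset.mul_prod_erase _ _ (Finset.mem_univ j)]
  have hy : ∀ j, clusterRx n xm x xp j = x j * (S / P) := by
    intro j
    rw [clusterRx, ← hSdef, hprod]
    field_simp
  have hS : S ≠ 0 := by
    intro h
    apply hRx i
    rw [hy, h]
    simp
  set c := S / P with hcdef
  have hc : c ≠ 0 := div_ne_zero hS hPne
  have hne : ∀ j : ZMod n, j + 1 ≠ j := by
    intro j h
    have : (1 : ZMod n) = 0 := by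
      have := congrArg (fun t => t - j) h
      simpa [add_sub_cancel_left] using this
    exact one_ne_zero this
  have hcard1 : ∀ j : ZMod n, (Finset.univ.erase j).card = n - 1 := by
    intro j
    rw [Finset.card_erase_of_mem (Finset.mem_univ j), Finset.card_univ, ZMod.card]
  have hcard2 : ∀ j : ZMod n, ((Finset.univ.erase j).erase (j + 1)).card = n - 2 := by
    intro j
    rw [Finset.card_erase_of_mem (Finset.mem_erase.mpr ⟨hne j, Finset.mem_univ _⟩), hcard1]
    omega
  have hE : ∀ j : ZMod n,
      (∏ l ∈ (Finset.univ.erase j).erase (j + 1), (x l * c))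
        = (∏ l ∈ (Finset.univ.erase j).erase (j + 1), x l) * c ^ (n - 2) := by
    intro j
    rw [Finset.prod_mul_distrib, Finset.prod_const, hcard2]
  have hD : (∏ l ∈ Finset.univ.erase i, (x l * c))
      = (P / x i) * c ^ (n - 1) := by
    rw [Finset.prod_mul_distrib, Finset.prod_const, hcard1, hprod]
  rw [clusterRx]
  simp only [hy, hE, hD]
  have hnum : (∑ j : ZMod n,
      xm (j + 1) * ((∏ l ∈ (Finset.univ.erase j).erase (j + 1), x l) * c ^ (n - 2)) * xp j)
      = S * c ^ (n - 2) := by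
    rw [hSdef, Finset.sum_mul]
    exact Finset.sum_congr rfl (fun j _ => by ring)
  rw [hnum, show n - 1 = (n - 2) + 1 from by omega, pow_succ, hcdef]
  have hck : (c : K) ^ (n - 2) ≠ 0 := pow_ne_zero _ hc
  rw [hcdef] at hck
  field_simp
end

section
/- Let n ≥ 2 and consider three commuting families x_i⁻, x_i, x_i⁺ and a fourth family x_i⁺⁺ (i ∈ ℤ/nℤ). Let S = (Σ_j x_{j+1}⁻ (∏_{ℓ≠j,j+1} x_ℓ) x_j⁺)/(∏_j x_j) and S⁺ = (Σ_j x_{j+1} (∏_{ℓ≠j,j+1} x_ℓ⁺) x_j⁺⁺)/(∏_j x_j⁺). Define R_M to act by x_i ↦ S x_i (fixing x_i⁻, x_i⁺, x_i⁺⁺) and R_{M⁺} to act by x_i⁺ ↦ S⁺ x_i⁺ (fixing x_i⁻, x_i, x_i⁺⁺). Then R_M R_{M⁺} R_M = R_{M⁺} R_M R_{M⁺} as field automorphisms of ℚ(x⁻, x, x⁺, x⁺⁺). -/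
/-- `S(a,b,c) = (Σ_j a_{j+1} (∏_{ℓ≠j,j+1} b_ℓ) c_j) / ∏_j b_j`, indices modulo `n`. -/
def Ssimple {K : Type*} [Field K] (n : ℕ) [NeZero n] (a b c : ZMod n → K) : K :=
  (∑ j : ZMod n, a (j + 1) * (∏ l ∈ (Finset.univ.erase j).erase (j + 1), b l) * c j) /
    ∏ j : ZMod n, b j

/-- The simple cluster R-matrix `R_M` acting on the tuple `(x⁻, x, x⁺, x⁺⁺)`:
it rescales the second family by `S = S(x⁻,x,x⁺)` and fixes the others. -/
def RM4 {K : Type*} [Field K] (n : ℕ) [NeZero n]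
    (v : (ZMod n → K) × (ZMod n → K) × (ZMod n → K) × (ZMod n → K)) :
    (ZMod n → K) × (ZMod n → K) × (ZMod n → K) × (ZMod n → K) :=
  (v.1, fun i => Ssimple n v.1 v.2.1 v.2.2.1 * v.2.1 i, v.2.2.1, v.2.2.2)

/-- The simple cluster R-matrix `R_{M⁺}`: it rescales the third family by
`S⁺ = S(x,x⁺,x⁺⁺)` and fixes the others. -/
def RMp4 {K : Type*} [Field K] (n : ℕ) [NeZero n]
    (v : (ZMod n → K) × (ZMod n → K) × (ZMod n → K) × (ZMod n → K)) :
    (ZMod n → K) × (ZMod n → K) × (ZMod n → K) × (ZMod n → K) :=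
  (v.1, v.2.1, fun i => Ssimple n v.2.1 v.2.2.1 v.2.2.2 * v.2.2.1 i, v.2.2.2)

lemma Ssimple_scale1 {K : Type*} [Field K] (n : ℕ) [NeZero n] (t : K) (a b c : ZMod n → K) :
    Ssimple n (fun i => t * a i) b c = t * Ssimple n a b c := by
  unfold Ssimple
  rw [← mul_div_assoc]
  congr 1
  rw [Finset.mul_sum]
  exact Finset.sum_congr rfl fun j _ => by ring

lemma Ssimple_scale3 {K : Type*} [Field K] (n : ℕ) [NeZero n] (t : K) (a b c : ZMod n → K) :
    Ssimple n a b (fun i => t * c i) = t * Ssimple n a b c := by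
  unfold Ssimple
  rw [← mul_div_assoc]
  congr 1
  rw [Finset.mul_sum]
  exact Finset.sum_congr rfl fun j _ => by ring

lemma Ssimple_scale2 {K : Type*} [Field K] (n : ℕ) [NeZero n] (hn : 2 ≤ n)
    (t : K) (ht : t ≠ 0) (a b c : ZMod n → K) :
    Ssimple n a (fun i => t * b i) c = t⁻¹ * t⁻¹ * Ssimple n a b c := by
  haveI : Fact (1 < n) := ⟨hn⟩
  have hmem : ∀ j : ZMod n, (j + 1) ∈ Finset.univ.erase j := by
    intro j
    simp [Finset.mem_erase]
  have hcard : ∀ j : ZMod n, ((Finset.univ.erase j).erase (j + 1)).card = n - 2 := by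
    intro j
    rw [Finset.card_erase_of_mem (hmem j), Finset.card_erase_of_mem (Finset.mem_univ j)]
    simp [ZMod.card]
    omega
  unfold Ssimple
  have hprod : ∀ j : ZMod n, (∏ l ∈ (Finset.univ.erase j).erase (j + 1), (t * b l))
      = t ^ (n - 2) * ∏ l ∈ (Finset.univ.erase j).erase (j + 1), b l := by
    intro j
    rw [Finset.prod_mul_distrib, Finset.prod_const, hcard j]
  have hden : (∏ j : ZMod n, (t * b j)) = t ^ n * ∏ j : ZMod n, b j := by
    rw [Finset.prod_mul_distrib, Finset.prod_const, Finset.card_univ, ZMod.card]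
  rw [hden]
  rw [show (∑ j : ZMod n, a (j + 1) * (∏ l ∈ (Finset.univ.erase j).erase (j + 1), (t * b l)) * c j)
      = t ^ (n - 2) * ∑ j : ZMod n, a (j + 1) * (∏ l ∈ (Finset.univ.erase j).erase (j + 1), b l) * c j by
    rw [Finset.mul_sum]; exact Finset.sum_congr rfl fun j _ => by rw [hprod j]; ring]
  have hpow : t ^ n = t ^ (n - 2) * (t * t) := by
    rw [← pow_two, ← pow_add]
    congr 1
    omega
  rw [hpow, show t ^ (n - 2) * (t * t) * ∏ j : ZMod n, b j
      = t ^ (n - 2) * ((t * t) * ∏ j : ZMod n, b j) by ring,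
    mul_div_mul_left _ _ (pow_ne_zero _ ht)]
  rw [div_eq_mul_inv, div_eq_mul_inv, mul_inv]
  ring

/-- The braid relation `R_M R_{M⁺} R_M = R_{M⁺} R_M R_{M⁺}`. -/
theorem statement_4 {K : Type*} [Field K] (n : ℕ) [NeZero n] (hn : 2 ≤ n)
    (xm x xp xpp : ZMod n → K)
    (hx : ∀ j, x j ≠ 0) (hxp : ∀ j, xp j ≠ 0)
    (hS : Ssimple n xm x xp ≠ 0) (hSp : Ssimple n x xp xpp ≠ 0) :
    RM4 n (RMp4 n (RM4 n (xm, x, xp, xpp))) = RMp4 n (RM4 n (RMp4 n (xm, x, xp, xpp))) := by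
  set S := Ssimple n xm x xp with hSdef
  set Sp := Ssimple n x xp xpp with hSpdef
  have hA : Ssimple n (fun i => S * x i) xp xpp = S * Sp := Ssimple_scale1 n S x xp xpp
  have hB : Ssimple n xm x (fun i => Sp * xp i) = Sp * S := Ssimple_scale3 n Sp xm x xp
  have hC : Ssimple n xm (fun i => S * x i) (fun i => S * Sp * xp i) = Sp := by
    rw [Ssimple_scale3, Ssimple_scale2 n hn S hS]
    field_simp
    exact hSdef.symm
  have hD : Ssimple n (fun i => Sp * S * x i) (fun i => Sp * xp i) xpp = S := by
    rw [Ssimple_scale1, Ssimple_scale2 n hn Sp hSp]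
    field_simp
    exact hSpdef.symm
  simp only [RM4, RMp4]
  rw [hA, hC, hB, hD]
  refine Prod.ext rfl (Prod.ext ?_ (Prod.ext ?_ rfl)) <;> funext i <;> ring
end

section
/- Let p, q, r be elements of a (possibly noncommutative) skew field satisfying pqr = rqp, with p + r invertible. Define p' = qr(p+r)⁻¹, q' = p + r, r' = qp(p+r)⁻¹. Then: (a) qr(p+r)⁻¹ = (p+r)⁻¹ rq and qp(p+r)⁻¹ = (p+r)⁻¹ pq; (b) p'q'r' = r'q'p'; (c) the five highway-measurement identities hold: qr = p'q', p + r = q', q = p' + r', qp = r'q', pq = q'r'. -/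
/-- The noncommutative Yang-Baxter move: if `pqr = rqp` and `p + r` is invertible, then
with `p' = qr(p+r)⁻¹`, `q' = p+r`, `r' = qp(p+r)⁻¹` we have
(a) `qr(p+r)⁻¹ = (p+r)⁻¹rq` and `qp(p+r)⁻¹ = (p+r)⁻¹pq`;
(b) `p'q'r' = r'q'p'`;
(c) the five highway-measurement identities. -/
theorem statement_5 {K : Type*} [DivisionRing K] (p q r : K)
    (h : p * q * r = r * q * p) (hpr : p + r ≠ 0)
    (p' q' r' : K)
    (hp' : p' = q * r * (p + r)⁻¹) (hq' : q' = p + r) (hr' : r' = q * p * (p + r)⁻¹) :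
    (q * r * (p + r)⁻¹ = (p + r)⁻¹ * (r * q) ∧
     q * p * (p + r)⁻¹ = (p + r)⁻¹ * (p * q)) ∧
    (p' * q' * r' = r' * q' * p') ∧
    (q * r = p' * q' ∧ p + r = q' ∧ q = p' + r' ∧ q * p = r' * q' ∧ p * q = q' * r') := by
  have hinv : (p + r) * (p + r)⁻¹ = 1 := mul_inv_cancel₀ hpr
  have hinv' : (p + r)⁻¹ * (p + r) = 1 := inv_mul_cancel₀ hpr
  have key1 : (p + r) * (q * r) = r * q * (p + r) := by
    rw [add_mul, mul_add, ← mul_assoc p, ← mul_assoc r, h]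
  have key2 : (p + r) * (q * p) = p * q * (p + r) := by
    rw [add_mul, mul_add, ← mul_assoc p, ← mul_assoc r, ← h]
  have a1 : q * r * (p + r)⁻¹ = (p + r)⁻¹ * (r * q) := by
    calc q * r * (p + r)⁻¹ = (p + r)⁻¹ * ((p + r) * (q * r)) * (p + r)⁻¹ := by
          rw [← mul_assoc, ← mul_assoc, hinv', one_mul]
      _ = (p + r)⁻¹ * (r * q * (p + r)) * (p + r)⁻¹ := by rw [key1]
      _ = (p + r)⁻¹ * (r * q) := by
          rw [mul_assoc ((p+r)⁻¹), mul_assoc (r*q), hinv, mul_one]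
  have a2 : q * p * (p + r)⁻¹ = (p + r)⁻¹ * (p * q) := by
    calc q * p * (p + r)⁻¹ = (p + r)⁻¹ * ((p + r) * (q * p)) * (p + r)⁻¹ := by
          rw [← mul_assoc, ← mul_assoc, hinv', one_mul]
      _ = (p + r)⁻¹ * (p * q * (p + r)) * (p + r)⁻¹ := by rw [key2]
      _ = (p + r)⁻¹ * (p * q) := by
          rw [mul_assoc ((p+r)⁻¹), mul_assoc (p*q), hinv, mul_one]
  have hqrqp : q * r * (q * p) = q * p * (q * r) := by
    rw [mul_assoc q r, ← mul_assoc r, ← h, mul_assoc q p, ← mul_assoc p]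
  have b : p' * q' * r' = r' * q' * p' := by
    subst hp' hq' hr'
    rw [mul_assoc (q*r) _ (p+r), hinv', mul_one, mul_assoc (q*p) _ (p+r), hinv', mul_one,
        ← mul_assoc (q*p), ← hqrqp, ← mul_assoc (q*r) (q*p)]
  refine ⟨⟨a1, a2⟩, b, ?_, hq'.symm, ?_, ?_, ?_⟩
  · rw [hp', hq', mul_assoc, hinv', mul_one]
  · rw [hp', hr', ← add_mul, ← mul_add, add_comm r p, mul_assoc, hinv, mul_one]
  · rw [hr', hq', mul_assoc, hinv', mul_one]
  · rw [hr', hq', ← mul_assoc, key2, mul_assoc, hinv, mul_one]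
end

section
/- Let p, q, r be elements of a skew field satisfying pqr = rqp with p + r and q invertible, and set p' = qr(p+r)⁻¹, q' = p+r, r' = qp(p+r)⁻¹. Then applying the same transformation to (p', q', r') returns (p, q, r); i.e., the Yang-Baxter transformation (p,q,r) ↦ (p',q',r') is an involution. -/
/-- The Yang-Baxter transformation `(p,q,r) ↦ (qr(p+r)⁻¹, p+r, qp(p+r)⁻¹)` is an
involution: applying it to `(p', q', r')` returns `(p, q, r)`. -/
theorem statement_6 {K : Type*} [DivisionRing K] (p q r : K)
    (h : p * q * r = r * q * p) (hpr : p + r ≠ 0) (hq : q ≠ 0)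
    (p' q' r' : K)
    (hp' : p' = q * r * (p + r)⁻¹) (hq' : q' = p + r) (hr' : r' = q * p * (p + r)⁻¹) :
    q' * r' * (p' + r')⁻¹ = p ∧ p' + r' = q ∧ q' * p' * (p' + r')⁻¹ = r := by
  have hsum : p' + r' = q := by
    rw [hp', hr']
    rw [← add_mul, ← mul_add, add_comm r p, mul_assoc, mul_inv_cancel₀ hpr, mul_one]
  refine ⟨?_, hsum, ?_⟩
  · rw [hsum, hq', hr']
    have key : (p + r) * (q * p) = p * q * (p + r) := by
      rw [add_mul, mul_add, ← mul_assoc, ← mul_assoc, mul_assoc p q r, ← mul_assoc, h]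
    rw [← mul_assoc (p + r) (q * p), key, mul_assoc (p * q), mul_inv_cancel₀ hpr, mul_one,
      mul_assoc, mul_inv_cancel₀ hq, mul_one]
  · rw [hsum, hq', hp']
    have key : (p + r) * (q * r) = r * q * (p + r) := by
      rw [add_mul, mul_add, ← mul_assoc, ← mul_assoc, mul_assoc r q p, ← mul_assoc, ← h, add_comm]
    rw [← mul_assoc (p + r) (q * r), key, mul_assoc (r * q), mul_inv_cancel₀ hpr, mul_one,
      mul_assoc, mul_inv_cancel₀ hq, mul_one]
end

section
/- Fix n ≥ 2 and m ≥ 1. For commuting indeterminates q_j^{(i)} (1 ≤ j ≤ m, i ∈ ℤ/nℤ), define the loop elementary symmetric function e_k^{(r)} = Σ_{1≤j₁<⋯<j_k≤m} q_{j₁}^{(r+1-j₁)} q_{j₂}^{(r+2-j₂)} ⋯ q_{j_k}^{(r+k-j_k)} (upper indices modulo n). Then for each j ∈ {1,…,m-1}, e_k^{(r)} is invariant under the geometric R-matrix R_j acting on the variables q_j, q_{j+1}: R_j(e_k^{(r)}) = e_k^{(r)}. -/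
/-- The loop elementary symmetric function
`e_k^{(r)} = Σ_{1≤j₁<⋯<j_k≤m} q_{j₁}^{(r+1-j₁)} ⋯ q_{j_k}^{(r+k-j_k)}`
(upper indices modulo `n`), written as a sum over strictly increasing
maps `Fin k → Fin m`. -/
def loopE {K : Type*} [Field K] (n m : ℕ) (k : ℕ) (r : ZMod n)
    (q : Fin m → ZMod n → K) : K :=
  ∑ f ∈ Finset.univ.filter (fun f : Fin k → Fin m => ∀ a b : Fin k, a < b → f a < f b),
    ∏ a : Fin k, q (f a) (r + ((a : ℕ) : ZMod n) - (((f a : ℕ) : ℕ) : ZMod n))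

section Aux

variable {K : Type*} [Field K]

/-- Full product over all residues. -/
lemma prod_range_sub {n : ℕ} [NeZero n] (f : ZMod n → K) (c : ZMod n) :
    ∏ l ∈ Finset.range n, f (c - (l : ZMod n)) = ∏ x : ZMod n, f x := by
  refine Finset.prod_nbij' (fun l => c - (l : ZMod n)) (fun x => (c - x).val) ?_ ?_ ?_ ?_ ?_
  · intro a _; exact Finset.mem_univ _
  · intro x _; exact Finset.mem_range.mpr (ZMod.val_lt _)
  · intro a ha
    simp only [sub_sub_cancel]
    exact ZMod.val_natCast_of_lt (Finset.mem_range.mp ha)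
  · intro x _
    show c - (((c - x).val : ℕ) : ZMod n) = x
    rw [ZMod.natCast_rightInverse (c - x)]; ring
  · intro a _; rfl

/-- `A i s = ∏_{l<s} p (i - (l+1))`. -/
def AA (n : ℕ) (p : ZMod n → K) (i : ZMod n) (s : ℕ) : K :=
  ∏ l ∈ Finset.range s, p (i - ((l + 1 : ℕ) : ZMod n))

/-- `B i s = ∏_{l < n-s-1} q (i - (s+2+l))`. -/
def BB (n : ℕ) (q : ZMod n → K) (i : ZMod n) (s : ℕ) : K :=
  ∏ l ∈ Finset.range (n - s - 1), q (i - ((s + 2 + l : ℕ) : ZMod n))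

lemma kappa_eq (n : ℕ) (p q : ZMod n → K) (i : ZMod n) :
    kappa n p q i = ∑ s ∈ Finset.range n, AA n p i s * BB n q i s := by
  unfold kappa AA BB
  refine Finset.sum_congr rfl fun s _ => ?_
  congr 1
  · rw [← Finset.Ico_add_one_right_eq_Icc, Finset.prod_Ico_eq_prod_range]
    refine Finset.prod_congr (by congr 1) fun l _ => by rw [Nat.add_comm 1 l]
  · rw [← Finset.Ico_add_one_right_eq_Icc, Finset.prod_Ico_eq_prod_range]
    refine Finset.prod_congr (by congr 1; omega) fun l _ => rfl

lemma AA_succ (n : ℕ) (p : ZMod n → K) (i : ZMod n) (s : ℕ) :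
    AA n p (i + 1) (s + 1) = AA n p i s * p i := by
  unfold AA
  rw [Finset.prod_range_succ']
  congr 1
  · refine Finset.prod_congr rfl fun l _ => ?_
    congr 1
    push_cast
    ring
  · congr 1
    push_cast
    ring

lemma BB_succ {n : ℕ} (q : ZMod n → K) (i : ZMod n) (s : ℕ) (hs : s + 1 < n) :
    BB n q i s = BB n q (i + 1) (s + 1) * q i := by
  unfold BB
  have h1 : n - s - 1 = (n - s - 2) + 1 := by omega
  rw [h1, Finset.prod_range_succ]
  have h2 : n - (s + 1) - 1 = n - s - 2 := by omega
  rw [h2]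
  congr 1
  · refine Finset.prod_congr rfl fun l _ => ?_
    congr 1
    push_cast
    ring
  · congr 1
    have : (s + 2 + (n - s - 2) : ℕ) = n := by omega
    rw [this, ZMod.natCast_self]
    ring

lemma AA_full {n : ℕ} [NeZero n] (p : ZMod n → K) (i : ZMod n) :
    AA n p i n = ∏ x : ZMod n, p x := by
  unfold AA
  rw [← prod_range_sub p (i - 1)]
  refine Finset.prod_congr rfl fun l _ => ?_
  congr 1
  push_cast
  ring

lemma AA_last {n : ℕ} [NeZero n] (p : ZMod n → K) (i : ZMod n) :
    p i * AA n p i (n - 1) = ∏ x : ZMod n, p x := by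
  have h0 : n ≠ 0 := NeZero.ne n
  have h : n - 1 + 1 = n := by omega
  rw [mul_comm, ← AA_succ, h, AA_full]

lemma BB_first {N : ℕ} (q : ZMod (N + 1) → K) (i : ZMod (N + 1)) :
    q i * BB (N + 1) q (i + 1) 0 = ∏ x : ZMod (N + 1), q x := by
  unfold BB
  rw [← prod_range_sub q i, Finset.prod_range_succ']
  have h2 : N + 1 - 0 - 1 = N := by omega
  rw [h2]
  simp only [Nat.cast_zero, sub_zero]
  rw [mul_comm]
  congr 1
  refine Finset.prod_congr rfl fun l _ => ?_
  congr 1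
  push_cast
  ring

lemma BB_top {n : ℕ} (q : ZMod n → K) (i : ZMod n) : BB n q i (n - 1) = 1 := by
  unfold BB
  have : n - (n - 1) - 1 = 0 := by omega
  rw [this]
  simp

/-- The key recurrence for `κ`. -/
lemma kappa_rec {n : ℕ} (hn : 2 ≤ n) (p q : ZMod n → K) (i : ZMod n) :
    q (i + 1) * kappa n p q (i + 2) + p i * kappa n p q i
      = (p (i + 1) + q i) * kappa n p q (i + 1) := by
  obtain ⟨N, rfl⟩ : ∃ N, n = N + 1 := ⟨n - 1, by omega⟩
  rw [kappa_eq, kappa_eq, kappa_eq]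
  have hi2 : (i + 2 : ZMod (N + 1)) = (i + 1) + 1 := by ring
  rw [hi2]
  have hAlast : ∀ c : ZMod (N+1), p c * AA (N+1) p c N = ∏ x : ZMod (N+1), p x := by
    intro c
    simpa using AA_last (n := N+1) p c
  have hBtop : ∀ c : ZMod (N+1), BB (N+1) q c N = 1 := by
    intro c
    simpa using BB_top (n := N+1) q c
  have h2 : q (i + 1) * ∑ s ∈ Finset.range (N + 1), AA (N+1) p ((i+1)+1) s * BB (N+1) q ((i+1)+1) s
      = (∏ x, q x) + ∑ s ∈ Finset.range N, p (i + 1) * (AA (N+1) p (i+1) s * BB (N+1) q (i+1) s) := by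
    have e1 : q (i+1) * (AA (N+1) p ((i+1)+1) 0 * BB (N+1) q ((i+1)+1) 0) = ∏ x, q x := by
      have hA0 : AA (N+1) p ((i+1)+1) 0 = 1 := by unfold AA; simp
      rw [hA0, one_mul]
      exact BB_first q (i+1)
    have e2 : ∑ s ∈ Finset.range N, q (i+1) * (AA (N+1) p ((i+1)+1) (s+1) * BB (N+1) q ((i+1)+1) (s+1))
        = ∑ s ∈ Finset.range N, p (i + 1) * (AA (N+1) p (i+1) s * BB (N+1) q (i+1) s) := by
      refine Finset.sum_congr rfl fun s hs => ?_
      have hs' : s + 1 < N + 1 := by simpa using Finset.mem_range.mp hs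
      rw [AA_succ, BB_succ q (i+1) s hs']
      ring
    rw [Finset.sum_range_succ', mul_add, Finset.mul_sum, e2, e1, add_comm]
  have h3 : p i * ∑ s ∈ Finset.range (N + 1), AA (N+1) p i s * BB (N+1) q i s
      = (∏ x, p x) + ∑ s ∈ Finset.range N, q i * (AA (N+1) p (i+1) (s+1) * BB (N+1) q (i+1) (s+1)) := by
    have e1 : p i * (AA (N+1) p i N * BB (N+1) q i N) = ∏ x, p x := by
      rw [hBtop i, mul_one]
      exact hAlast i
    have e2 : ∑ s ∈ Finset.range N, p i * (AA (N+1) p i s * BB (N+1) q i s)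
        = ∑ s ∈ Finset.range N, q i * (AA (N+1) p (i+1) (s+1) * BB (N+1) q (i+1) (s+1)) := by
      refine Finset.sum_congr rfl fun s hs => ?_
      have hs' : s + 1 < N + 1 := by simpa using Finset.mem_range.mp hs
      rw [AA_succ, BB_succ q i s hs']
      ring
    rw [Finset.sum_range_succ, mul_add, Finset.mul_sum, e2, e1, add_comm]
  have h4 : q i * ∑ s ∈ Finset.range (N + 1), AA (N+1) p (i+1) s * BB (N+1) q (i+1) s
      = (∏ x, q x) + ∑ s ∈ Finset.range N, q i * (AA (N+1) p (i+1) (s+1) * BB (N+1) q (i+1) (s+1)) := by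
    have e1 : q i * (AA (N+1) p (i+1) 0 * BB (N+1) q (i+1) 0) = ∏ x, q x := by
      have hA0 : AA (N+1) p (i+1) 0 = 1 := by unfold AA; simp
      rw [hA0, one_mul]
      exact BB_first q i
    rw [Finset.sum_range_succ', mul_add, Finset.mul_sum, e1, add_comm]
  have h5 : p (i + 1) * ∑ s ∈ Finset.range (N + 1), AA (N+1) p (i+1) s * BB (N+1) q (i+1) s
      = (∏ x, p x) + ∑ s ∈ Finset.range N, p (i + 1) * (AA (N+1) p (i+1) s * BB (N+1) q (i+1) s) := by
    have e1 : p (i+1) * (AA (N+1) p (i+1) N * BB (N+1) q (i+1) N) = ∏ x, p x := by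
      rw [hBtop (i+1), mul_one]
      exact hAlast (i+1)
    rw [Finset.sum_range_succ, mul_add, Finset.mul_sum, e1, add_comm]
  rw [add_mul, h2, h3, h4, h5]
  ring

end Aux



/-- The summand of `loopE` associated to an increasing map `f`. -/
def sTerm {K : Type*} [Field K] (n m k : ℕ) (r : ZMod n) (c : Fin m → ZMod n → K)
    (f : Fin k → Fin m) : K :=
  ∏ a : Fin k, c (f a) (r + ((a : ℕ) : ZMod n) - (((f a : ℕ) : ℕ) : ZMod n))

lemma loopE_eq {K : Type*} [Field K] (n m k : ℕ) (r : ZMod n) (c : Fin m → ZMod n → K) :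
    loopE n m k r c
      = ∑ f ∈ Finset.univ.filter (fun f : Fin k → Fin m => ∀ a b : Fin k, a < b → f a < f b),
          sTerm n m k r c f := rfl

/-- The loop elementary symmetric functions are invariant under the geometric
R-matrix acting on two adjacent rows of variables. -/
theorem statement_7 {K : Type*} [Field K] (n m : ℕ) (hn : 2 ≤ n)
    (j j' : Fin m) (hjj' : (j' : ℕ) = (j : ℕ) + 1)
    (q q' : Fin m → ZMod n → K)
    (hκ : ∀ i, kappa n (q j) (q j') i ≠ 0)
    (hq'j : ∀ i, q' j i = q j' i * kappa n (q j) (q j') (i + 1) / kappa n (q j) (q j') i)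
    (hq'j' : ∀ i, q' j' i = q j i * kappa n (q j) (q j') i / kappa n (q j) (q j') (i + 1))
    (hother : ∀ h : Fin m, h ≠ j → h ≠ j' → ∀ i, q' h i = q h i) :
    ∀ (k : ℕ) (r : ZMod n), loopE n m k r q' = loopE n m k r q := by
  have hNe : NeZero n := ⟨by omega⟩
  have hjlt : j < j' := by rw [Fin.lt_def, hjj']; omega
  have hjne : j ≠ j' := ne_of_lt hjlt
  have hcast : (((j' : ℕ) : ℕ) : ZMod n) = (((j : ℕ) : ℕ) : ZMod n) + 1 := by
    rw [hjj']; push_cast; ring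
  -- scalar identities coming from the geometric R-matrix
  have keyP : ∀ i : ZMod n, q' j i * q' j' i = q j i * q j' i := by
    intro i
    have h1 : kappa n (q j) (q j') i ≠ 0 := hκ i
    have h2 : kappa n (q j) (q j') (i + 1) ≠ 0 := hκ (i + 1)
    rw [hq'j i, hq'j' i]
    field_simp
  have keyS : ∀ i : ZMod n, q' j (i + 1) + q' j' i = q j (i + 1) + q j' i := by
    intro i
    rw [hq'j (i + 1), hq'j' i]
    rw [show (i + 1 + 1 : ZMod n) = i + 2 from by ring]
    rw [← add_div, div_eq_iff (hκ (i + 1))]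
    linear_combination kappa_rec hn (q j) (q j') i
  intro k r
  rw [loopE_eq, loopE_eq]
  set D : Finset (Fin k → Fin m) :=
    Finset.univ.filter (fun f : Fin k → Fin m => ∀ a b : Fin k, a < b → f a < f b) with hDdef
  have hD : ∀ f ∈ D, StrictMono f := by
    intro f hf
    have h := (Finset.mem_filter.mp hf).2
    exact fun a b hab => h a b hab
  have hswapl : Equiv.swap j j' j = j' := Equiv.swap_apply_left j j'
  have hswapr : Equiv.swap j j' j' = j := Equiv.swap_apply_right j j'
  -- split the sum into four parts
  have hsplit : ∀ c : Fin m → ZMod n → K,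
      ∑ f ∈ D, sTerm n m k r c f
      = ((∑ f ∈ (D.filter (fun f => ∃ a, f a = j)).filter (fun f => ∃ a, f a = j'),
            sTerm n m k r c f
        + ∑ f ∈ (D.filter (fun f => ∃ a, f a = j)).filter (fun f => ¬ ∃ a, f a = j'),
            sTerm n m k r c f)
        + (∑ f ∈ (D.filter (fun f => ¬ ∃ a, f a = j)).filter (fun f => ∃ a, f a = j'),
            sTerm n m k r c f
        + ∑ f ∈ (D.filter (fun f => ¬ ∃ a, f a = j)).filter (fun f => ¬ ∃ a, f a = j'),
            sTerm n m k r c f)) := by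
    intro c
    rw [Finset.sum_filter_add_sum_filter_not (D.filter (fun f => ∃ a, f a = j))
        (fun f => ∃ a, f a = j') (sTerm n m k r c)]
    rw [Finset.sum_filter_add_sum_filter_not (D.filter (fun f => ¬ ∃ a, f a = j))
        (fun f => ∃ a, f a = j') (sTerm n m k r c)]
    rw [Finset.sum_filter_add_sum_filter_not D (fun f => ∃ a, f a = j) (sTerm n m k r c)]
  rw [hsplit q', hsplit q]
  -- Part 00 : neither row occurs
  have hG00 :
      ∑ f ∈ (D.filter (fun f => ¬ ∃ a, f a = j)).filter (fun f => ¬ ∃ a, f a = j'),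
        sTerm n m k r q' f
      = ∑ f ∈ (D.filter (fun f => ¬ ∃ a, f a = j)).filter (fun f => ¬ ∃ a, f a = j'),
        sTerm n m k r q f := by
    refine Finset.sum_congr rfl fun f hf => ?_
    obtain ⟨hf1, hB⟩ := Finset.mem_filter.mp hf
    obtain ⟨hfD, hA⟩ := Finset.mem_filter.mp hf1
    unfold sTerm
    refine Finset.prod_congr rfl fun a _ => ?_
    exact hother (f a) (fun h => hA ⟨a, h⟩) (fun h => hB ⟨a, h⟩) _
  -- Part 11 : both rows occur
  have hG11 :
      ∑ f ∈ (D.filter (fun f => ∃ a, f a = j)).filter (fun f => ∃ a, f a = j'),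
        sTerm n m k r q' f
      = ∑ f ∈ (D.filter (fun f => ∃ a, f a = j)).filter (fun f => ∃ a, f a = j'),
        sTerm n m k r q f := by
    refine Finset.sum_congr rfl fun f hf => ?_
    obtain ⟨hf1, a₁, ha₁⟩ := Finset.mem_filter.mp hf
    obtain ⟨hfD, a₀, ha₀⟩ := Finset.mem_filter.mp hf1
    have hsm : StrictMono f := hD f hfD
    have hinj := hsm.injective
    have hlt : a₀ < a₁ := by
      rcases lt_trichotomy a₀ a₁ with h | h | h
      · exact h
      · exfalso; apply hjne; rw [← ha₀, ← ha₁, h]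
      · exfalso
        have := hsm h
        rw [ha₀, ha₁] at this
        exact absurd this (not_lt.mpr hjlt.le)
    have hsucc : (a₁ : ℕ) = (a₀ : ℕ) + 1 := by
      by_contra hne2
      have h2 : (a₀ : ℕ) + 1 < (a₁ : ℕ) := by
        have := Fin.lt_def.mp hlt
        omega
      have h2' : (a₀ : ℕ) + 1 < k := lt_trans h2 a₁.isLt
      have l1 : f a₀ < f ⟨(a₀ : ℕ) + 1, h2'⟩ := hsm (by rw [Fin.lt_def]; simp)
      have l2 : f ⟨(a₀ : ℕ) + 1, h2'⟩ < f a₁ := hsm (by rw [Fin.lt_def]; simpa using h2)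
      rw [ha₀, Fin.lt_def] at l1
      rw [ha₁, Fin.lt_def, hjj'] at l2
      omega
    have hmem1 : a₁ ∈ Finset.univ.erase a₀ :=
      Finset.mem_erase.mpr ⟨hlt.ne', Finset.mem_univ _⟩
    have hprod : ∀ c : Fin m → ZMod n → K,
        sTerm n m k r c f
        = c (f a₀) (r + ((a₀ : ℕ) : ZMod n) - (((f a₀ : ℕ) : ℕ) : ZMod n))
          * (c (f a₁) (r + ((a₁ : ℕ) : ZMod n) - (((f a₁ : ℕ) : ℕ) : ZMod n))
            * ∏ a ∈ (Finset.univ.erase a₀).erase a₁,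
                c (f a) (r + ((a : ℕ) : ZMod n) - (((f a : ℕ) : ℕ) : ZMod n))) := by
      intro c
      unfold sTerm
      rw [Finset.mul_prod_erase (Finset.univ.erase a₀)
        (fun a => c (f a) (r + ((a : ℕ) : ZMod n) - (((f a : ℕ) : ℕ) : ZMod n))) hmem1]
      rw [Finset.mul_prod_erase Finset.univ
        (fun a => c (f a) (r + ((a : ℕ) : ZMod n) - (((f a : ℕ) : ℕ) : ZMod n)))
        (Finset.mem_univ a₀)]
    rw [hprod q', hprod q, ha₀, ha₁]
    have hEeq : (r + ((a₁ : ℕ) : ZMod n) - (((j' : ℕ) : ℕ) : ZMod n))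
        = r + ((a₀ : ℕ) : ZMod n) - (((j : ℕ) : ℕ) : ZMod n) := by
      rw [hcast, hsucc]
      push_cast
      ring
    rw [hEeq]
    have hrest :
        ∏ a ∈ (Finset.univ.erase a₀).erase a₁,
          q' (f a) (r + ((a : ℕ) : ZMod n) - (((f a : ℕ) : ℕ) : ZMod n))
        = ∏ a ∈ (Finset.univ.erase a₀).erase a₁,
          q (f a) (r + ((a : ℕ) : ZMod n) - (((f a : ℕ) : ℕ) : ZMod n)) := by
      refine Finset.prod_congr rfl fun a ha => ?_
      obtain ⟨hne1, hne0mem⟩ := Finset.mem_erase.mp ha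
      obtain ⟨hne0, -⟩ := Finset.mem_erase.mp hne0mem
      refine hother (f a) ?_ ?_ _
      · intro h; exact hne0 (hinj (h.trans ha₀.symm))
      · intro h; exact hne1 (hinj (h.trans ha₁.symm))
    rw [hrest, ← mul_assoc, ← mul_assoc,
      keyP (r + ((a₀ : ℕ) : ZMod n) - (((j : ℕ) : ℕ) : ZMod n))]
  -- swap fixes all other values
  have hfix10 : ∀ f : Fin k → Fin m, StrictMono f → (¬ ∃ a, f a = j') →
      ∀ a₀, f a₀ = j → ∀ a, a ≠ a₀ → Equiv.swap j j' (f a) = f a := by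
    intro f hsm hB a₀ ha₀ a ha
    refine Equiv.swap_apply_of_ne_of_ne ?_ ?_
    · intro h; exact ha (hsm.injective (h.trans ha₀.symm))
    · intro h; exact hB ⟨a, h⟩
  have hfix01 : ∀ f : Fin k → Fin m, StrictMono f → (¬ ∃ a, f a = j) →
      ∀ a₀, f a₀ = j' → ∀ a, a ≠ a₀ → Equiv.swap j j' (f a) = f a := by
    intro f hsm hA a₀ ha₀ a ha
    refine Equiv.swap_apply_of_ne_of_ne ?_ ?_
    · intro h; exact hA ⟨a, h⟩
    · intro h; exact ha (hsm.injective (h.trans ha₀.symm))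
  have hmono10 : ∀ f : Fin k → Fin m, StrictMono f → (∃ a, f a = j) → (¬ ∃ a, f a = j') →
      StrictMono (fun a => Equiv.swap j j' (f a)) := by
    intro f hsm hA hB
    obtain ⟨a₀, ha₀⟩ := hA
    intro a b hab
    simp only []
    rcases eq_or_ne a a₀ with rfl | haa
    · rw [ha₀, hswapl, hfix10 f hsm hB a ha₀ b hab.ne']
      have h1 := hsm hab
      rw [ha₀, Fin.lt_def] at h1
      have h3 : (f b : ℕ) ≠ (j' : ℕ) := by
        intro h
        exact hB ⟨b, Fin.ext h⟩
      rw [hjj'] at h3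
      rw [Fin.lt_def, hjj']
      omega
    · rcases eq_or_ne b a₀ with rfl | hbb
      · rw [ha₀, hswapl, hfix10 f hsm hB b ha₀ a haa]
        have h1 := hsm hab
        rw [ha₀] at h1
        exact h1.trans hjlt
      · rw [hfix10 f hsm hB a₀ ha₀ a haa, hfix10 f hsm hB a₀ ha₀ b hbb]
        exact hsm hab
  have hmono01 : ∀ f : Fin k → Fin m, StrictMono f → (¬ ∃ a, f a = j) → (∃ a, f a = j') →
      StrictMono (fun a => Equiv.swap j j' (f a)) := by
    intro f hsm hA hB
    obtain ⟨a₀, ha₀⟩ := hB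
    intro a b hab
    simp only []
    rcases eq_or_ne a a₀ with rfl | haa
    · rw [ha₀, hswapr, hfix01 f hsm hA a ha₀ b hab.ne']
      have h1 := hsm hab
      rw [ha₀] at h1
      exact hjlt.trans h1
    · rcases eq_or_ne b a₀ with rfl | hbb
      · rw [ha₀, hswapr, hfix01 f hsm hA b ha₀ a haa]
        have h1 := hsm hab
        rw [ha₀, Fin.lt_def, hjj'] at h1
        have h3 : (f a : ℕ) ≠ (j : ℕ) := by
          intro h
          exact hA ⟨a, Fin.ext h⟩
        rw [Fin.lt_def]
        omega
      · rw [hfix01 f hsm hA a₀ ha₀ a haa, hfix01 f hsm hA a₀ ha₀ b hbb]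
        exact hsm hab
  -- the swap is an involution
  have hσσ : ∀ f : Fin k → Fin m,
      (fun a => Equiv.swap j j' (Equiv.swap j j' (f a))) = f := by
    intro f
    funext a
    simp [Equiv.swap_apply_self]
  -- re-index the 01-sum over the 10-set
  have hbij : ∀ c : Fin m → ZMod n → K,
      ∑ f ∈ (D.filter (fun f => ¬ ∃ a, f a = j)).filter (fun f => ∃ a, f a = j'),
        sTerm n m k r c f
      = ∑ f ∈ (D.filter (fun f => ∃ a, f a = j)).filter (fun f => ¬ ∃ a, f a = j'),
        sTerm n m k r c (fun a => Equiv.swap j j' (f a)) := by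
    intro c
    refine Finset.sum_nbij' (fun f => (fun a => Equiv.swap j j' (f a)))
      (fun f => (fun a => Equiv.swap j j' (f a))) ?_ ?_ ?_ ?_ ?_
    · intro f hf
      obtain ⟨hf1, hB⟩ := Finset.mem_filter.mp hf
      obtain ⟨hfD, hA⟩ := Finset.mem_filter.mp hf1
      have hsm := hD f hfD
      have hmono := hmono01 f hsm hA hB
      refine Finset.mem_filter.mpr ⟨Finset.mem_filter.mpr
        ⟨Finset.mem_filter.mpr ⟨Finset.mem_univ _, fun a b hab => hmono hab⟩, ?_⟩, ?_⟩
      · obtain ⟨a₀, ha₀⟩ := hB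
        refine ⟨a₀, ?_⟩
        show Equiv.swap j j' (f a₀) = j
        rw [ha₀, hswapr]
      · rintro ⟨a, ha⟩
        exact hA ⟨a, (Equiv.swap j j').injective (ha.trans hswapl.symm)⟩
    · intro f hf
      obtain ⟨hf1, hB⟩ := Finset.mem_filter.mp hf
      obtain ⟨hfD, hA⟩ := Finset.mem_filter.mp hf1
      have hsm := hD f hfD
      have hmono := hmono10 f hsm hA hB
      refine Finset.mem_filter.mpr ⟨Finset.mem_filter.mpr
        ⟨Finset.mem_filter.mpr ⟨Finset.mem_univ _, fun a b hab => hmono hab⟩, ?_⟩, ?_⟩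
      · rintro ⟨a, ha⟩
        exact hB ⟨a, (Equiv.swap j j').injective (ha.trans hswapr.symm)⟩
      · obtain ⟨a₀, ha₀⟩ := hA
        refine ⟨a₀, ?_⟩
        show Equiv.swap j j' (f a₀) = j'
        rw [ha₀, hswapl]
    · intro f _
      exact hσσ f
    · intro f _
      exact hσσ f
    · intro f _
      rw [hσσ f]
  rw [hbij q', hbij q]
  -- Part 10 + 01 combined
  have hpair :
      ∑ f ∈ (D.filter (fun f => ∃ a, f a = j)).filter (fun f => ¬ ∃ a, f a = j'),
        sTerm n m k r q' f
      + ∑ f ∈ (D.filter (fun f => ∃ a, f a = j)).filter (fun f => ¬ ∃ a, f a = j'),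
        sTerm n m k r q' (fun a => Equiv.swap j j' (f a))
      = ∑ f ∈ (D.filter (fun f => ∃ a, f a = j)).filter (fun f => ¬ ∃ a, f a = j'),
        sTerm n m k r q f
      + ∑ f ∈ (D.filter (fun f => ∃ a, f a = j)).filter (fun f => ¬ ∃ a, f a = j'),
        sTerm n m k r q (fun a => Equiv.swap j j' (f a)) := by
    rw [← Finset.sum_add_distrib, ← Finset.sum_add_distrib]
    refine Finset.sum_congr rfl fun f hf => ?_
    obtain ⟨hf1, hB⟩ := Finset.mem_filter.mp hf
    obtain ⟨hfD, a₀, ha₀⟩ := Finset.mem_filter.mp hf1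
    have hsm : StrictMono f := hD f hfD
    have hswapa₀ : Equiv.swap j j' (f a₀) = j' := by rw [ha₀, hswapl]
    have hprod : ∀ c : Fin m → ZMod n → K,
        sTerm n m k r c f
        = c (f a₀) (r + ((a₀ : ℕ) : ZMod n) - (((f a₀ : ℕ) : ℕ) : ZMod n))
          * ∏ a ∈ Finset.univ.erase a₀,
              c (f a) (r + ((a : ℕ) : ZMod n) - (((f a : ℕ) : ℕ) : ZMod n)) := by
      intro c
      unfold sTerm
      rw [Finset.mul_prod_erase Finset.univ
        (fun a => c (f a) (r + ((a : ℕ) : ZMod n) - (((f a : ℕ) : ℕ) : ZMod n)))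
        (Finset.mem_univ a₀)]
    have hprodσ : ∀ c : Fin m → ZMod n → K,
        sTerm n m k r c (fun a => Equiv.swap j j' (f a))
        = c (Equiv.swap j j' (f a₀))
            (r + ((a₀ : ℕ) : ZMod n) - (((Equiv.swap j j' (f a₀) : ℕ) : ℕ) : ZMod n))
          * ∏ a ∈ Finset.univ.erase a₀,
              c (Equiv.swap j j' (f a))
                (r + ((a : ℕ) : ZMod n) - (((Equiv.swap j j' (f a) : ℕ) : ℕ) : ZMod n)) := by
      intro c
      unfold sTerm
      rw [Finset.mul_prod_erase Finset.univ
        (fun a => c (Equiv.swap j j' (f a))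
          (r + ((a : ℕ) : ZMod n) - (((Equiv.swap j j' (f a) : ℕ) : ℕ) : ZMod n)))
        (Finset.mem_univ a₀)]
    have hrest : ∀ c : Fin m → ZMod n → K,
        ∏ a ∈ Finset.univ.erase a₀,
          c (Equiv.swap j j' (f a))
            (r + ((a : ℕ) : ZMod n) - (((Equiv.swap j j' (f a) : ℕ) : ℕ) : ZMod n))
        = ∏ a ∈ Finset.univ.erase a₀,
          c (f a) (r + ((a : ℕ) : ZMod n) - (((f a : ℕ) : ℕ) : ZMod n)) := by
      intro c
      refine Finset.prod_congr rfl fun a ha => ?_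
      rw [hfix10 f hsm hB a₀ ha₀ a (Finset.mem_erase.mp ha).1]
    have hrest' :
        ∏ a ∈ Finset.univ.erase a₀,
          q' (f a) (r + ((a : ℕ) : ZMod n) - (((f a : ℕ) : ℕ) : ZMod n))
        = ∏ a ∈ Finset.univ.erase a₀,
          q (f a) (r + ((a : ℕ) : ZMod n) - (((f a : ℕ) : ℕ) : ZMod n)) := by
      refine Finset.prod_congr rfl fun a ha => ?_
      have hne0 := (Finset.mem_erase.mp ha).1
      refine hother (f a) ?_ ?_ _
      · intro h; exact hne0 (hsm.injective (h.trans ha₀.symm))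
      · intro h; exact hB ⟨a, h⟩
    rw [hprod q', hprod q, hprodσ q', hprodσ q, hrest q', hrest q, hrest', hswapa₀, ha₀]
    rw [← add_mul, ← add_mul]
    congr 1
    have hE : (r + ((a₀ : ℕ) : ZMod n) - (((j : ℕ) : ℕ) : ZMod n))
        = (r + ((a₀ : ℕ) : ZMod n) - (((j' : ℕ) : ℕ) : ZMod n)) + 1 := by
      rw [hcast]; ring
    rw [hE]
    exact keyS (r + ((a₀ : ℕ) : ZMod n) - (((j' : ℕ) : ℕ) : ZMod n))
  rw [hG00, hG11]
  linear_combination hpair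
end

section
/- Let n ≥ 2 and let y₁,…,yₙ be commuting indeterminates indexed by ℤ/nℤ. Define α_i = 1 + Σ_{k=1}^{n-1} y_i y_{i+1} ⋯ y_{i+k-1}. Define the transformation y'_i = y_{i+1}⁻¹ · α_i / α_{i+2}. Then the map y_i ↦ y'_i is an involution on ℚ(y₁,…,yₙ): applying it twice yields the identity. -/
/-- `α_i = 1 + Σ_{k=1}^{n-1} y_i y_{i+1} ⋯ y_{i+k-1}`, indices modulo `n`. -/
def alphaY {K : Type*} [Field K] (n : ℕ) (y : ZMod n → K) (i : ZMod n) : K :=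
  1 + ∑ k ∈ Finset.Icc 1 (n - 1), ∏ l ∈ Finset.range k, y (i + (l : ZMod n))

/-- The transformation `y_i ↦ y_{i+1}⁻¹ · α_i / α_{i+2}`. -/
def Ry {K : Type*} [Field K] (n : ℕ) (y : ZMod n → K) (i : ZMod n) : K :=
  (y (i + 1))⁻¹ * alphaY n y i / alphaY n y (i + 2)

section Aux

variable {K : Type*} [Field K]

lemma alphaY_eq_sum (n : ℕ) (hn : 1 ≤ n) (y : ZMod n → K) (i : ZMod n) :
    alphaY n y i = ∑ k ∈ Finset.range n, ∏ l ∈ Finset.range k, y (i + (l : ZMod n)) := by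
  have h : Finset.range n = insert 0 (Finset.Icc 1 (n - 1)) := by
    ext x; simp only [Finset.mem_range, Finset.mem_insert, Finset.mem_Icc]; omega
  rw [h, Finset.sum_insert (by simp)]
  simp [alphaY]

lemma prod_univ_shift (n : ℕ) [NeZero n] (y : ZMod n → K) (c : ZMod n) :
    ∏ j : ZMod n, y (j + c) = ∏ j : ZMod n, y j :=
  Fintype.prod_equiv (Equiv.addRight c) _ _ (fun _ => rfl)

lemma prod_range_cycle (n : ℕ) [NeZero n] (y : ZMod n → K) (i : ZMod n) :
    ∏ l ∈ Finset.range n, y (i + (l : ZMod n)) = ∏ j : ZMod n, y j := by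
  have h1 : ∏ j : ZMod n, y (i + j) = ∏ j : ZMod n, y j :=
    Fintype.prod_equiv (Equiv.addLeft i) (fun j => y (i + j)) y (fun _ => rfl)
  rw [← h1]
  refine Finset.prod_bij' (fun l _ => ((l : ZMod n))) (fun a _ => a.val) ?_ ?_ ?_ ?_ ?_
  · intro l hl; exact Finset.mem_univ _
  · intro a _; exact Finset.mem_range.mpr (ZMod.val_lt a)
  · intro l hl; exact ZMod.val_cast_of_lt (Finset.mem_range.mp hl)
  · intro a _; simp [ZMod.natCast_val, ZMod.cast_id]
  · intro l _; rfl

/-- The key recurrence `α_i = 1 + y_i α_{i+1} - P`. -/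
lemma alphaY_rec (n : ℕ) [NeZero n] (hn : 2 ≤ n) (y : ZMod n → K) (i : ZMod n) :
    alphaY n y i = 1 + y i * alphaY n y (i + 1) - ∏ j : ZMod n, y j := by
  haveI : NeZero n := ⟨by omega⟩
  have h1 : ∀ k : ℕ, y i * ∏ l ∈ Finset.range k, y (i + 1 + (l : ZMod n))
      = ∏ l ∈ Finset.range (k + 1), y (i + (l : ZMod n)) := by
    intro k
    rw [Finset.prod_range_succ' (fun l => y (i + (l : ZMod n)))]
    simp only [Nat.cast_add, Nat.cast_one, Nat.cast_zero, add_zero]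
    rw [mul_comm]
    congr 1
    apply Finset.prod_congr rfl
    intro l _
    congr 1
    ring
  have h2 : y i * alphaY n y (i + 1)
      = ∑ k ∈ Finset.range n, ∏ l ∈ Finset.range (k + 1), y (i + (l : ZMod n)) := by
    rw [alphaY_eq_sum n (by omega) y (i + 1), Finset.mul_sum]
    exact Finset.sum_congr rfl (fun k _ => h1 k)
  have h3 : ∑ k ∈ Finset.range (n + 1), ∏ l ∈ Finset.range k, y (i + (l : ZMod n))
      = (∑ k ∈ Finset.range n, ∏ l ∈ Finset.range (k + 1), y (i + (l : ZMod n))) + 1 := by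
    rw [Finset.sum_range_succ' (fun k => ∏ l ∈ Finset.range k, y (i + (l : ZMod n)))]
    simp
  have h4 : ∑ k ∈ Finset.range (n + 1), ∏ l ∈ Finset.range k, y (i + (l : ZMod n))
      = alphaY n y i + ∏ j : ZMod n, y j := by
    rw [Finset.sum_range_succ, alphaY_eq_sum n (by omega) y i, prod_range_cycle]
  have := h3.symm.trans h4
  rw [h2]
  linear_combination -this

lemma Ry_ne_zero (n : ℕ) (y : ZMod n → K) (hy : ∀ i, y i ≠ 0)
    (hα : ∀ i, alphaY n y i ≠ 0) (i : ZMod n) : Ry n y i ≠ 0 :=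
  div_ne_zero (mul_ne_zero (inv_ne_zero (hy _)) (hα _)) (hα _)

end Aux

/-- The map `y_i ↦ y_{i+1}⁻¹ α_i / α_{i+2}` is an involution. -/
theorem statement_8 {K : Type*} [Field K] (n : ℕ) (hn : 2 ≤ n)
    (y : ZMod n → K)
    (hy : ∀ i, y i ≠ 0)
    (hα : ∀ i, alphaY n y i ≠ 0)
    (hα' : ∀ i, alphaY n (fun j => Ry n y j) i ≠ 0) :
    ∀ i, Ry n (fun j => Ry n y j) i = y i := by
  haveI : NeZero n := ⟨by omega⟩
  set P : K := ∏ j : ZMod n, y j with hP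
  have hP0 : P ≠ 0 := Finset.prod_ne_zero_iff.mpr (fun j _ => hy j)
  set y' : ZMod n → K := fun j => Ry n y j with hy'def
  have hy'ne : ∀ i, y' i ≠ 0 := fun i => Ry_ne_zero n y hy hα i
  -- the recurrence for α
  have hrec : ∀ i, alphaY n y i = 1 + y i * alphaY n y (i + 1) - P :=
    fun i => alphaY_rec n hn y i
  by_cases hP1 : P = 1
  · -- degenerate case: the product of all y's is 1, and then Ry y = y.
    have hfix : ∀ i, Ry n y i = y i := by
      intro i
      have e1 : alphaY n y i = y i * alphaY n y (i + 1) := by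
        have := hrec i; rw [hP1] at this; linear_combination this
      have e2 : alphaY n y (i + 1) = y (i + 1) * alphaY n y (i + 1 + 1) := by
        have := hrec (i + 1); rw [hP1] at this; linear_combination this
      have h112 : i + 1 + 1 = i + 2 := by ring
      rw [h112] at e2
      have n1 : y (i + 1) ≠ 0 := hy _
      have n2 : y (1 + i) ≠ 0 := hy _
      have n3 : alphaY n y (i + 2) ≠ 0 := hα _
      have n4 : alphaY n y (2 + i) ≠ 0 := hα _
      rw [Ry, e1, e2]
      field_simp
    intro i
    have hyy : y' = y := hy'def.trans (funext hfix)
    rw [hy'def] at hyy ⊢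
    rw [hyy]
    exact hfix i
  · -- main case: P ≠ 1
    -- product of the transformed variables is P⁻¹
    have hP' : ∏ j : ZMod n, y' j = P⁻¹ := by
      have : ∀ j : ZMod n, y' j = (y (j + 1))⁻¹ * (alphaY n y j / alphaY n y (j + 2)) := by
        intro j; simp only [hy'def, Ry]; ring
      rw [Finset.prod_congr rfl (fun j _ => this j)]
      rw [Finset.prod_mul_distrib, Finset.prod_inv_distrib, Finset.prod_div_distrib]
      rw [prod_univ_shift n y 1, prod_univ_shift n (alphaY n y) 2]
      rw [div_self (Finset.prod_ne_zero_iff.mpr (fun j _ => hα j)), mul_one, hP]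
    -- the recurrence for α'
    have hrec' : ∀ i, alphaY n y' i = 1 + y' i * alphaY n y' (i + 1) - P⁻¹ := by
      intro i
      have := alphaY_rec n hn y' i
      rwa [hP'] at this
    -- candidate β
    set β : ZMod n → K := fun i => y i * alphaY n y (i + 1) / P with hβ
    have hβrec : ∀ i, β i = 1 + y' i * β (i + 1) - P⁻¹ := by
      intro i
      have e1 : y i * alphaY n y (i + 1) = alphaY n y i - 1 + P := by
        linear_combination -hrec i
      have h112 : i + 1 + 1 = i + 2 := by ring
      have n1 : y (i + 1) ≠ 0 := hy _
      have n2 : y (1 + i) ≠ 0 := hy _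
      have n3 : alphaY n y (i + 2) ≠ 0 := hα _
      have n4 : alphaY n y (2 + i) ≠ 0 := hα _
      rw [hβ]
      simp only [hy'def, Ry, h112]
      rw [e1]
      field_simp
      ring
    -- δ propagation
    set δ : ZMod n → K := fun i => alphaY n y' i - β i with hδ
    have hδstep : ∀ i, δ i = y' i * δ (i + 1) := by
      intro i
      rw [hδ]
      simp only
      rw [hrec' i, hβrec i]
      ring
    have hδprop : ∀ (m : ℕ) (i : ZMod n),
        δ i = (∏ l ∈ Finset.range m, y' (i + (l : ZMod n))) * δ (i + (m : ZMod n)) := by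
      intro m
      induction m with
      | zero => intro i; simp
      | succ m ih =>
        intro i
        rw [Finset.prod_range_succ, ih i, hδstep (i + (m : ZMod n))]
        push_cast
        ring_nf
    have hδ0 : ∀ i, δ i = 0 := by
      intro i
      have := hδprop n i
      rw [prod_range_cycle n y' i, hP', ZMod.natCast_self, add_zero] at this
      have h1 : (1 - P⁻¹) * δ i = 0 := by linear_combination this
      have h2 : (1 : K) - P⁻¹ ≠ 0 := by
        intro h
        apply hP1
        have : P⁻¹ = 1 := by linear_combination -h
        have := congrArg (· * P) this
        simpa [inv_mul_cancel₀ hP0] using this.symm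
      exact (mul_eq_zero.mp h1).resolve_left h2
    have hα'eq : ∀ i, alphaY n y' i = y i * alphaY n y (i + 1) / P := by
      intro i
      have := hδ0 i
      rw [hδ] at this
      simp only at this
      rw [hβ] at this
      linear_combination this
    -- final computation
    intro i
    have h13 : i + 1 + 2 = i + 3 := by ring
    have h23 : i + 2 + 1 = i + 3 := by ring
    have h12 : i + 1 + 1 = i + 2 := by ring
    have n1 : y (i + 2) ≠ 0 := hy _
    have n2 : y (2 + i) ≠ 0 := hy _
    have n3 : alphaY n y (i + 1) ≠ 0 := hα _
    have n4 : alphaY n y (1 + i) ≠ 0 := hα _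
    have n5 : alphaY n y (i + 3) ≠ 0 := hα _
    have n6 : alphaY n y (3 + i) ≠ 0 := hα _
    rw [Ry, hα'eq i, hα'eq (i + 2), h23]
    simp only [hy'def, Ry, h13, h12]
    field_simp
end

section
/- Consider four tuples of commuting variables y_{i⁻}, y_i, y_{i⁺}, y_{i⁺⁺} (i ∈ ℤ/nℤ) in the free abelian multiplicative group they generate. Define R_M: (y_{i⁻}, y_i, y_{i⁺}, y_{i⁺⁺}) ↦ (y_{i⁻} y_i, y_{i+1}⁻¹, y_{i+1} y_{i⁺}, y_{i⁺⁺}) and R_{M⁺}: (y_{i⁻}, y_i, y_{i⁺}, y_{i⁺⁺}) ↦ (y_{i⁻}, y_i y_{i⁺}, y_{(i+1)⁺}⁻¹, y_{(i+1)⁺} y_{i⁺⁺}). Then R_M R_{M⁺} R_M = R_{M⁺} R_M R_{M⁺}, both compositions sending (y_{i⁻}, y_i, y_{i⁺}, y_{i⁺⁺}) to (y_{i⁻} y_i y_{i⁺}, y_{(i+1)⁺}⁻¹, y_{i+2}⁻¹, y_{i+2} y_{(i+1)⁺} y_{i⁺⁺}). -/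
/-- The tropical (monomial) cluster R-matrix `R_M` on tuples `(y⁻, y, y⁺, y⁺⁺)`:
`(y_{i⁻}, y_i, y_{i⁺}, y_{i⁺⁺}) ↦ (y_{i⁻} y_i, y_{i+1}⁻¹, y_{i+1} y_{i⁺}, y_{i⁺⁺})`. -/
def tropRM {G : Type*} [CommGroup G] (n : ℕ)
    (v : (ZMod n → G) × (ZMod n → G) × (ZMod n → G) × (ZMod n → G)) :
    (ZMod n → G) × (ZMod n → G) × (ZMod n → G) × (ZMod n → G) :=
  (fun i => v.1 i * v.2.1 i,
   fun i => (v.2.1 (i + 1))⁻¹,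
   fun i => v.2.1 (i + 1) * v.2.2.1 i,
   v.2.2.2)

/-- The tropical (monomial) cluster R-matrix `R_{M⁺}`:
`(y_{i⁻}, y_i, y_{i⁺}, y_{i⁺⁺}) ↦ (y_{i⁻}, y_i y_{i⁺}, y_{(i+1)⁺}⁻¹, y_{(i+1)⁺} y_{i⁺⁺})`. -/
def tropRMp {G : Type*} [CommGroup G] (n : ℕ)
    (v : (ZMod n → G) × (ZMod n → G) × (ZMod n → G) × (ZMod n → G)) :
    (ZMod n → G) × (ZMod n → G) × (ZMod n → G) × (ZMod n → G) :=
  (v.1,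
   fun i => v.2.1 i * v.2.2.1 i,
   fun i => (v.2.2.1 (i + 1))⁻¹,
   fun i => v.2.2.1 (i + 1) * v.2.2.2 i)

/-- Tropical Yang-Baxter: `R_M R_{M⁺} R_M = R_{M⁺} R_M R_{M⁺}`, both compositions
sending `(y_{i⁻}, y_i, y_{i⁺}, y_{i⁺⁺})` to
`(y_{i⁻} y_i y_{i⁺}, y_{(i+1)⁺}⁻¹, y_{i+2}⁻¹, y_{i+2} y_{(i+1)⁺} y_{i⁺⁺})`. -/
theorem statement_10 {G : Type*} [CommGroup G] (n : ℕ)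
    (ym y yp ypp : ZMod n → G) :
    tropRM n (tropRMp n (tropRM n (ym, y, yp, ypp))) =
      tropRMp n (tropRM n (tropRMp n (ym, y, yp, ypp))) ∧
    tropRM n (tropRMp n (tropRM n (ym, y, yp, ypp))) =
      (fun i => ym i * y i * yp i,
       fun i => (yp (i + 1))⁻¹,
       fun i => (y (i + 2))⁻¹,
       fun i => y (i + 2) * yp (i + 1) * ypp i) := by
  constructor <;>
  · simp only [tropRM, tropRMp]
    refine Prod.ext (funext fun i => ?_) (Prod.ext (funext fun i => ?_)
      (Prod.ext (funext fun i => ?_) (funext fun i => ?_))) <;>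
    · simp only [add_assoc]
      norm_num
      all_goals group
end

section
/- Let n ≥ 2 and work in a skew field containing elements p_i, q_i (i ∈ ℤ/nℤ) satisfying: p_i q_j = ε q_j p_i if j = i or j = i-2, p_i q_j = ε⁻² q_j p_i if j = i-1, p_i q_j = q_j p_i otherwise; and for r ∈ {p, q}: r_i r_j = ε r_j r_i if j = i-1, r_i r_j = ε⁻¹ r_j r_i if j = i+1, r_i r_j = r_j r_i otherwise (ε central and invertible). Let κ_i = Σ_{j=0}^{n-1} p_{i-1} p_{i-2} ⋯ p_{i-j} · q_{i-j-2} q_{i-j-3} ⋯ q_{i-n}. Then p_i q_i κ_{i+1} = ε⁻¹ κ_{i+1} p_i q_i. -/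
/-- The quantum `κ_i = Σ_{j=0}^{n-1} p_{i-1} p_{i-2} ⋯ p_{i-j} · q_{i-j-2} ⋯ q_{i-n}`,
with ordered (noncommutative) products and indices modulo `n`. -/
def kq {K : Type*} [DivisionRing K] (n : ℕ) (p q : ZMod n → K) (i : ZMod n) : K :=
  ∑ j ∈ Finset.range n,
    ((List.range j).map (fun l => p (i - ((l + 1 : ℕ) : ZMod n)))).prod *
    ((List.range (n - (j + 1))).map (fun l => q (i - ((j + 2 + l : ℕ) : ZMod n)))).prod

lemma aux_sum_ite (a : ℤ) (s t : ℕ) : ∀ J : ℕ,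
    (∑ l ∈ Finset.range J, if s + l = t then a else 0) =
      if s ≤ t ∧ t < s + J then a else 0 := by
  intro J
  induction J with
  | zero => simp
  | succ J ih =>
    rw [Finset.sum_range_succ, ih]
    rcases eq_or_ne (s + J) t with h | h
    · rw [if_pos h, if_neg (by omega), if_pos (by omega)]; ring
    · rw [if_neg h, add_zero]
      rcases le_or_gt s t with h1 | h1
      · rcases lt_or_ge t (s + J) with h2 | h2
        · rw [if_pos ⟨h1, h2⟩, if_pos ⟨h1, by omega⟩]
        · rw [if_neg (by omega), if_neg (by omega)]
      · rw [if_neg (by omega), if_neg (by omega)]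

lemma aux_sum_ite' (a : ℤ) (t : ℕ) : ∀ J : ℕ,
    (∑ l ∈ Finset.range J, if l = t then a else 0) = if t < J then a else 0 := by
  intro J
  have h := aux_sum_ite a 0 t J
  simp only [Nat.zero_add] at h
  rw [h]
  by_cases hh : t < J
  · rw [if_pos hh, if_pos ⟨Nat.zero_le t, hh⟩]
  · rw [if_neg hh, if_neg (by omega)]

lemma move_prod {K : Type*} [DivisionRing K] (ε : K) (hε : ε ≠ 0)
    (hcen : ∀ x : K, ε * x = x * ε) (x : K) (f : ℕ → K) (e : ℕ → ℤ) :
    ∀ J : ℕ, (∀ l < J, x * f l = ε ^ e l * (f l * x)) →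
      x * ((List.range J).map f).prod =
        ε ^ (∑ l ∈ Finset.range J, e l) * (((List.range J).map f).prod * x) := by
  have hc : ∀ (m : ℤ) (y : K), ε ^ m * y = y * ε ^ m :=
    fun m y => (Commute.zpow_right₀ (hcen y).symm m).symm
  intro J
  induction J with
  | zero => simp
  | succ J ih =>
    intro h
    rw [List.range_succ, List.map_append, List.prod_append, List.map_singleton,
      List.prod_singleton, Finset.sum_range_succ]
    set P := ((List.range J).map f).prod with hP
    have h1 : x * P = ε ^ (∑ l ∈ Finset.range J, e l) * (P * x) :=
      ih (fun l hl => h l (by omega))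
    calc x * (P * f J) = (x * P) * f J := by rw [mul_assoc]
      _ = ε ^ (∑ l ∈ Finset.range J, e l) * (P * (x * f J)) := by
          rw [h1]; rw [mul_assoc, mul_assoc]
      _ = ε ^ (∑ l ∈ Finset.range J, e l) * (P * (ε ^ e J * (f J * x))) := by
          rw [h J (by omega)]
      _ = ε ^ (∑ l ∈ Finset.range J, e l + e J) * (P * f J * x) := by
          rw [← mul_assoc P, ← hc (e J) P, zpow_add₀ hε]
          simp only [mul_assoc]

lemma move_pair {K : Type*} [DivisionRing K] (ε : K) (hε : ε ≠ 0)
    (hcen : ∀ x : K, ε * x = x * ε) (x y P Q : K) (a b c d : ℤ)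
    (hxP : x * P = ε ^ a * (P * x)) (hyP : y * P = ε ^ b * (P * y))
    (hxQ : x * Q = ε ^ c * (Q * x)) (hyQ : y * Q = ε ^ d * (Q * y)) :
    x * y * (P * Q) = ε ^ (a + b + c + d) * (P * Q * (x * y)) := by
  have hc : ∀ (m : ℤ) (z : K), ε ^ m * z = z * ε ^ m :=
    fun m z => (Commute.zpow_right₀ (hcen z).symm m).symm
  have hswap : ∀ (m : ℤ) (u v : K), u * (ε ^ m * v) = ε ^ m * (u * v) :=
    fun m u v => by rw [← mul_assoc, ← hc, mul_assoc]
  have h1 : y * (P * Q) = ε ^ (b + d) * (P * Q * y) := by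
    calc y * (P * Q) = (y * P) * Q := (mul_assoc _ _ _).symm
      _ = (ε ^ b * (P * y)) * Q := by rw [hyP]
      _ = ε ^ b * (P * (y * Q)) := by simp only [mul_assoc]
      _ = ε ^ b * (P * (ε ^ d * (Q * y))) := by rw [hyQ]
      _ = ε ^ b * (ε ^ d * (P * (Q * y))) := by rw [hswap]
      _ = ε ^ (b + d) * (P * Q * y) := by
          rw [zpow_add₀ hε]; simp only [mul_assoc]
  have h2 : x * (P * Q) = ε ^ (a + c) * (P * Q * x) := by
    calc x * (P * Q) = (x * P) * Q := (mul_assoc _ _ _).symm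
      _ = (ε ^ a * (P * x)) * Q := by rw [hxP]
      _ = ε ^ a * (P * (x * Q)) := by simp only [mul_assoc]
      _ = ε ^ a * (P * (ε ^ c * (Q * x))) := by rw [hxQ]
      _ = ε ^ a * (ε ^ c * (P * (Q * x))) := by rw [hswap]
      _ = ε ^ (a + c) * (P * Q * x) := by
          rw [zpow_add₀ hε]; simp only [mul_assoc]
  calc x * y * (P * Q) = x * (y * (P * Q)) := mul_assoc _ _ _
    _ = x * (ε ^ (b + d) * (P * Q * y)) := by rw [h1]
    _ = ε ^ (b + d) * ((x * (P * Q)) * y) := by rw [hswap]; simp only [mul_assoc]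
    _ = ε ^ (b + d) * ((ε ^ (a + c) * (P * Q * x)) * y) := by rw [h2]
    _ = ε ^ (b + d) * (ε ^ (a + c) * (P * Q * (x * y))) := by simp only [mul_assoc]
    _ = ε ^ (a + b + c + d) * (P * Q * (x * y)) := by
        rw [← mul_assoc, ← zpow_add₀ hε]
        congr 2
        ring

lemma inv_comm {K : Type*} [DivisionRing K] (ε a b : K) (hε : ε ≠ 0)
    (h : a * b = ε * (b * a)) : b * a = ε ^ (-1 : ℤ) * (a * b) := by
  rw [h, zpow_neg_one, ← mul_assoc, inv_mul_cancel₀ hε, one_mul]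

lemma zmod_cast_inj (n : ℕ) (a b : ℕ) (ha : a < n) (hb : b < n)
    (h : (a : ZMod n) = (b : ZMod n)) : a = b := by
  haveI : NeZero n := ⟨by omega⟩
  have h2 := congrArg ZMod.val h
  rwa [ZMod.val_cast_of_lt ha, ZMod.val_cast_of_lt hb] at h2

lemma zmod_cast_sub (n : ℕ) (k : ℕ) (hk : k ≤ n) :
    ((n - k : ℕ) : ZMod n) = -(k : ZMod n) := by
  have h : ((n - k : ℕ) : ZMod n) + (k : ZMod n) = ((n - k + k : ℕ) : ZMod n) := by
    push_cast; ring
  rw [Nat.sub_add_cancel hk, ZMod.natCast_self] at h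
  exact eq_neg_of_add_eq_zero_left h

/-- In the quantum torus with central invertible `ε` and the stated ε-commutation
relations, `p_i q_i κ_{i+1} = ε⁻¹ κ_{i+1} p_i q_i`. -/
theorem statement_11 {K : Type*} [DivisionRing K] (n : ℕ) (hn : 2 ≤ n)
    (ε : K) (hε : ε ≠ 0) (hcen : ∀ x : K, ε * x = x * ε)
    (p q : ZMod n → K)
    (hpq0 : ∀ i, p i * q i = ε * (q i * p i))
    (hpq2 : ∀ i, p i * q (i - 2) = ε * (q (i - 2) * p i))
    (hpq1 : ∀ i, p i * q (i - 1) = ε⁻¹ * ε⁻¹ * (q (i - 1) * p i))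
    (hpqo : ∀ i j, j ≠ i → j ≠ i - 2 → j ≠ i - 1 → p i * q j = q j * p i)
    (hpp : ∀ i, p i * p (i - 1) = ε * (p (i - 1) * p i))
    (hppo : ∀ i j, j ≠ i - 1 → j ≠ i + 1 → p i * p j = p j * p i)
    (hqq : ∀ i, q i * q (i - 1) = ε * (q (i - 1) * q i))
    (hqqo : ∀ i j, j ≠ i - 1 → j ≠ i + 1 → q i * q j = q j * q i) :
    ∀ i, p i * q i * kq n p q (i + 1) = ε⁻¹ * (kq n p q (i + 1) * (p i * q i)) := by
  intro i
  have hc : ∀ (m : ℤ) (y : K), ε ^ m * y = y * ε ^ m :=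
    fun m y => (Commute.zpow_right₀ (hcen y).symm m).symm
  have hcen' : ∀ x : K, ε⁻¹ * x = x * ε⁻¹ := fun x => by
    rw [← zpow_neg_one]; exact hc (-1) x
  have hswap : ∀ u v : K, u * (ε * v) = ε * (u * v) := fun u v => by
    rw [← mul_assoc, ← hcen, mul_assoc]
  have hswapi : ∀ u v : K, u * (ε⁻¹ * v) = ε⁻¹ * (u * v) := fun u v => by
    rw [← mul_assoc, ← hcen', mul_assoc]
  have hqp : q i * p i = ε⁻¹ * (p i * q i) := by
    rw [hpq0 i, ← mul_assoc, inv_mul_cancel₀ hε, one_mul]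
  rcases eq_or_lt_of_le hn with h2 | h3
  · -- case n = 2
    subst h2
    have hkq2 : kq 2 p q (i + 1) = q (i - 1) + p i := by
      have h2 : ((2:ℕ) : ZMod 2) = 0 := by decide
      simp [kq, Finset.sum_range_succ, List.range_succ, h2]
      congr 1
      ring
    rw [hkq2, mul_add, add_mul, mul_add]
    have t2 : p i * q i * p i = ε⁻¹ * (p i * (p i * q i)) := by
      rw [mul_assoc, hqp, hswapi]
    have t1 : p i * q i * q (i - 1) = ε⁻¹ * (q (i - 1) * (p i * q i)) := by
      rw [mul_assoc, hqq i, hswap, ← mul_assoc (p i), hpq1 i]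
      simp only [mul_assoc]
      rw [← mul_assoc ε, mul_inv_cancel₀ hε, one_mul]
    rw [t1, t2]
  · -- case 3 ≤ n
    haveI : NeZero n := ⟨by omega⟩
    have hN1 : ((n - 1 : ℕ) : ZMod n) = -1 := by
      rw [zmod_cast_sub n 1 (by omega)]; norm_num
    have hN2 : ((n - 2 : ℕ) : ZMod n) = -2 := by
      rw [zmod_cast_sub n 2 (by omega)]; norm_num
    have hC1 : ((1 : ℕ) : ZMod n) = 1 := Nat.cast_one
    have hC2 : ((2 : ℕ) : ZMod n) = 2 := by push_cast; ring
    have hkq : kq n p q (i + 1) = ∑ j ∈ Finset.range n,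
        ((List.range j).map (fun l : ℕ => p (i - (l : ZMod n)))).prod *
        ((List.range (n - (j + 1))).map
          (fun l : ℕ => q (i - ((j + 1 + l : ℕ) : ZMod n)))).prod := by
      unfold kq
      refine Finset.sum_congr rfl fun j _ => ?_
      congr 1
      · refine congrArg List.prod (List.map_congr_left fun l _ => ?_)
        congr 1
        push_cast
        ring
      · refine congrArg List.prod (List.map_congr_left fun l _ => ?_)
        congr 1
        push_cast
        ring
    rw [hkq, Finset.mul_sum, Finset.sum_mul, Finset.mul_sum]
    refine Finset.sum_congr rfl fun j hj => ?_
    rw [Finset.mem_range] at hj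
    -- per-element commutation facts
    have hA : ∀ l < j, p i * p (i - (l : ZMod n)) =
        ε ^ (if l = 1 then (1:ℤ) else 0) * (p (i - (l : ZMod n)) * p i) := by
      intro l hl
      rcases Nat.lt_or_ge l 2 with hl2 | hl2
      · interval_cases l
        · simp
        · rw [if_pos rfl, zpow_one, hC1]
          exact hpp i
      · rw [if_neg (by omega), zpow_zero, one_mul]
        refine hppo i _ ?_ ?_
        · intro hEq
          rw [← hC1, sub_right_inj] at hEq
          have := zmod_cast_inj n l 1 (by omega) (by omega) hEq
          omega
        · intro hEq
          have h' : i - (l : ZMod n) = i - ((n - 1 : ℕ) : ZMod n) := by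
            rw [hN1, hEq]; ring
          rw [sub_right_inj] at h'
          have := zmod_cast_inj n l (n-1) (by omega) (by omega) h'
          omega
    have hB : ∀ l < j, q i * p (i - (l : ZMod n)) =
        ε ^ ((if l = 0 then (-1:ℤ) else 0) + (if l = n - 2 then (-1:ℤ) else 0)) *
          (p (i - (l : ZMod n)) * q i) := by
      intro l hl
      by_cases h0 : l = 0
      · subst h0
        rw [if_pos rfl, if_neg (by omega), add_zero]
        simp only [Nat.cast_zero, sub_zero]
        exact inv_comm ε (p i) (q i) hε (hpq0 i)
      · by_cases hn2 : l = n - 2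
        · have hidx : i - ((n - 2 : ℕ) : ZMod n) = i + 2 := by rw [hN2]; ring
          rw [hn2, hidx, if_neg (by omega), if_pos rfl, zero_add]
          have hh := hpq2 (i + 2)
          rw [add_sub_cancel_right] at hh
          exact inv_comm ε (p (i + 2)) (q i) hε hh
        · rw [if_neg h0, if_neg hn2, add_zero, zpow_zero, one_mul]
          refine (hpqo (i - (l : ZMod n)) i ?_ ?_ ?_).symm
          · intro hEq
            have hl0 : (l : ZMod n) = ((0:ℕ) : ZMod n) := by
              push_cast
              linear_combination hEq
            have := zmod_cast_inj n l 0 (by omega) (by omega) hl0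
            omega
          · intro hEq
            have hl2' : (l : ZMod n) = -2 := by linear_combination hEq
            rw [← hN2] at hl2'
            have := zmod_cast_inj n l (n-2) (by omega) (by omega) hl2'
            omega
          · intro hEq
            have hl1 : (l : ZMod n) = -1 := by linear_combination hEq
            rw [← hN1] at hl1
            have := zmod_cast_inj n l (n-1) (by omega) (by omega) hl1
            omega
    have hC : ∀ l < n - (j + 1), p i * q (i - ((j + 1 + l : ℕ) : ZMod n)) =
        ε ^ ((if j + 1 + l = 1 then (-2:ℤ) else 0) + (if j + 1 + l = 2 then (1:ℤ) else 0)) *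
          (q (i - ((j + 1 + l : ℕ) : ZMod n)) * p i) := by
      intro l hl
      by_cases h1 : j + 1 + l = 1
      · rw [h1, if_pos rfl, if_neg (by omega), add_zero, hC1]
        rw [show ((-2):ℤ) = -1 + -1 from by norm_num, zpow_add₀ hε, zpow_neg_one]
        exact hpq1 i
      · by_cases hh2 : j + 1 + l = 2
        · rw [hh2, if_neg (by omega), if_pos rfl, zero_add, zpow_one, hC2]
          exact hpq2 i
        · rw [if_neg h1, if_neg hh2, add_zero, zpow_zero, one_mul]
          refine hpqo i _ ?_ ?_ ?_
          · intro hEq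
            have hm0 : ((j + 1 + l : ℕ) : ZMod n) = ((0:ℕ) : ZMod n) := by
              push_cast
              push_cast at hEq
              linear_combination -hEq
            have := zmod_cast_inj n (j+1+l) 0 (by omega) (by omega) hm0
            omega
          · intro hEq
            rw [← hC2, sub_right_inj] at hEq
            have := zmod_cast_inj n (j+1+l) 2 (by omega) (by omega) hEq
            omega
          · intro hEq
            rw [← hC1, sub_right_inj] at hEq
            have := zmod_cast_inj n (j+1+l) 1 (by omega) (by omega) hEq
            omega
    have hD : ∀ l < n - (j + 1), q i * q (i - ((j + 1 + l : ℕ) : ZMod n)) =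
        ε ^ ((if j + 1 + l = 1 then (1:ℤ) else 0) + (if j + 1 + l = n - 1 then (-1:ℤ) else 0)) *
          (q (i - ((j + 1 + l : ℕ) : ZMod n)) * q i) := by
      intro l hl
      by_cases h1 : j + 1 + l = 1
      · rw [h1, if_pos rfl, if_neg (by omega), add_zero, zpow_one, hC1]
        exact hqq i
      · by_cases hnm1 : j + 1 + l = n - 1
        · have hidx : i - ((n - 1 : ℕ) : ZMod n) = i + 1 := by rw [hN1]; ring
          rw [hnm1, hidx, if_neg (by omega), if_pos rfl, zero_add]
          have hh := hqq (i + 1)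
          rw [add_sub_cancel_right] at hh
          exact inv_comm ε (q (i + 1)) (q i) hε hh
        · rw [if_neg h1, if_neg hnm1, add_zero, zpow_zero, one_mul]
          refine hqqo i _ ?_ ?_
          · intro hEq
            rw [← hC1, sub_right_inj] at hEq
            have := zmod_cast_inj n (j+1+l) 1 (by omega) (by omega) hEq
            omega
          · intro hEq
            have h' : i - ((j + 1 + l : ℕ) : ZMod n) = i - ((n - 1 : ℕ) : ZMod n) := by
              rw [hN1, hEq]; ring
            rw [sub_right_inj] at h'
            have := zmod_cast_inj n (j+1+l) (n-1) (by omega) (by omega) h'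
            omega
    have HA := move_prod ε hε hcen (p i) (fun l : ℕ => p (i - (l : ZMod n)))
      (fun l => if l = 1 then (1:ℤ) else 0) j hA
    have HB := move_prod ε hε hcen (q i) (fun l : ℕ => p (i - (l : ZMod n)))
      (fun l => (if l = 0 then (-1:ℤ) else 0) + (if l = n - 2 then (-1:ℤ) else 0)) j hB
    have HC := move_prod ε hε hcen (p i) (fun l : ℕ => q (i - ((j + 1 + l : ℕ) : ZMod n)))
      (fun l => (if j + 1 + l = 1 then (-2:ℤ) else 0) + (if j + 1 + l = 2 then (1:ℤ) else 0))
      (n - (j + 1)) hC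
    have HD := move_prod ε hε hcen (q i) (fun l : ℕ => q (i - ((j + 1 + l : ℕ) : ZMod n)))
      (fun l => (if j + 1 + l = 1 then (1:ℤ) else 0) + (if j + 1 + l = n - 1 then (-1:ℤ) else 0))
      (n - (j + 1)) hD
    have HPQ := move_pair ε hε hcen (p i) (q i) _ _ _ _ _ _ HA HB HC HD
    rw [HPQ]
    have hexp : ((∑ l ∈ Finset.range j, if l = 1 then (1:ℤ) else 0) +
        (∑ l ∈ Finset.range j,
          ((if l = 0 then (-1:ℤ) else 0) + (if l = n - 2 then (-1:ℤ) else 0))) +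
        (∑ l ∈ Finset.range (n - (j + 1)),
          ((if j + 1 + l = 1 then (-2:ℤ) else 0) + (if j + 1 + l = 2 then (1:ℤ) else 0))) +
        (∑ l ∈ Finset.range (n - (j + 1)),
          ((if j + 1 + l = 1 then (1:ℤ) else 0) +
            (if j + 1 + l = n - 1 then (-1:ℤ) else 0)))) = -1 := by
      rw [aux_sum_ite', Finset.sum_add_distrib, aux_sum_ite', aux_sum_ite',
        Finset.sum_add_distrib, aux_sum_ite, aux_sum_ite,
        Finset.sum_add_distrib, aux_sum_ite, aux_sum_ite]
      split_ifs <;> omega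
    rw [hexp, zpow_neg_one]
end

section
/- Define the quantum geometric R-matrix on the skew fraction field of the quantum torus ℤ_ε⟨p,q⟩ by Rᵋ(p_i) = κ_i⁻¹ q_i κ_{i+1} and Rᵋ(q_i) = κ_{i+1}⁻¹ p_i κ_i. Then Rᵋ preserves the local product: Rᵋ(p_i) Rᵋ(q_i) = ε q_i p_i = p_i q_i, and Rᵋ(q_i) Rᵋ(p_i) = ε⁻¹ p_i q_i = q_i p_i. In particular Rᵋ(p_i) and Rᵋ(q_i) ε-commute exactly as p_i and q_i do: Rᵋ(p_i)Rᵋ(q_i) = ε Rᵋ(q_i)Rᵋ(p_i). -/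
namespace QT13

def cqe (n : ℕ) (e : ZMod n) : ℤ :=
  (if e = 1 then (1:ℤ) else if e = -1 then -1 else 0) +
  (if e = 1 then (-2:ℤ) else if e = 0 ∨ e = 2 then 1 else 0)

def cpe (n : ℕ) (d : ZMod n) : ℤ :=
  (if d = -1 then (2:ℤ) else if d = 0 ∨ d = -2 then -1 else 0) +
  (if d = -1 then (-1:ℤ) else if d = 1 then 1 else 0)

lemma cpe_eq_cqe {n : ℕ} (hn : 2 ≤ n) (d : ZMod n) : cpe n d = cqe n (d + 1) := by
  haveI : Fact (1 < n) := ⟨by omega⟩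
  have h10 : (1 : ZMod n) ≠ 0 := one_ne_zero
  have B : (0 : ZMod n) ≠ 1 := fun h => h10 h.symm
  have A : (-1 : ZMod n) ≠ 0 := fun h => h10 (by linear_combination -h)
  have A' : (0 : ZMod n) ≠ -1 := fun h => A h.symm
  have C : (-1 : ZMod n) ≠ -2 := fun h => h10 (by linear_combination h)
  have C' : (-2 : ZMod n) ≠ -1 := fun h => C h.symm
  have e1 : (d + 1 = 1) ↔ d = 0 := ⟨fun h => by linear_combination h, fun h => by linear_combination h⟩
  have e0 : (d + 1 = 0) ↔ d = -1 := ⟨fun h => by linear_combination h, fun h => by linear_combination h⟩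
  have em1 : (d + 1 = -1) ↔ d = -2 := ⟨fun h => by linear_combination h, fun h => by linear_combination h⟩
  have e2 : (d + 1 = 2) ↔ d = 1 := ⟨fun h => by linear_combination h, fun h => by linear_combination h⟩
  unfold cpe cqe
  simp only [e1, e0, em1, e2]
  clear e1 e0 em1 e2
  split_ifs
  all_goals first
    | (exfalso; subst_vars; simp_all; done)
    | norm_num

lemma sum_cqe_two : ∑ d : ZMod 2, cqe 2 d = 0 := by decide

lemma sum_cqe_three : ∑ d : ZMod 3, cqe 3 d = 0 := by decide

lemma sum_cqe {n : ℕ} [NeZero n] (hn : 2 ≤ n) : ∑ d : ZMod n, cqe n d = 0 := by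
  haveI : Fact (1 < n) := ⟨by omega⟩
  rcases lt_or_ge n 4 with h4 | h4
  · rcases (by omega : n = 2 ∨ n = 3) with h | h
    · subst h; exact sum_cqe_two
    · subst h; exact sum_cqe_three
  · have h10 : (1 : ZMod n) ≠ 0 := one_ne_zero
    have hk : ∀ k : ℕ, 0 < k → k < n → ((k : ℕ) : ZMod n) ≠ 0 := by
      intro k hk1 hk2 h
      have := (ZMod.natCast_eq_zero_iff k n).mp h
      have := Nat.le_of_dvd hk1 this
      omega
    have f2 : (2 : ZMod n) ≠ 0 := by
      have := hk 2 (by norm_num) (by omega); simpa using this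
    have f3 : (3 : ZMod n) ≠ 0 := by
      have := hk 3 (by norm_num) (by omega); simpa using this
    have g01 : (0 : ZMod n) ≠ 1 := fun h => h10 h.symm
    have g02 : (0 : ZMod n) ≠ 2 := fun h => f2 h.symm
    have g0m : (0 : ZMod n) ≠ -1 := fun h => h10 (by linear_combination h)
    have g12 : (1 : ZMod n) ≠ 2 := fun h => h10 (by linear_combination -h)
    have g1m : (1 : ZMod n) ≠ -1 := fun h => f2 (by linear_combination h)
    have g2m : (2 : ZMod n) ≠ -1 := fun h => f3 (by linear_combination h)
    have gm1 : (-1 : ZMod n) ≠ 1 := fun h => g1m h.symm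
    have key : ∑ d : ZMod n, cqe n d = ∑ d ∈ ({0, 1, 2, -1} : Finset (ZMod n)), cqe n d := by
      refine (Finset.sum_subset (Finset.subset_univ _) ?_).symm
      intro x _ hx
      simp only [Finset.mem_insert, Finset.mem_singleton, not_or] at hx
      obtain ⟨hx0, hx1, hx2, hxm⟩ := hx
      unfold cqe
      rw [if_neg hx1, if_neg hxm, if_neg hx1, if_neg (by tauto : ¬(x = 0 ∨ x = 2))]
      norm_num
    rw [key]
    rw [Finset.sum_insert (by simp [g01, g02, g0m]),
        Finset.sum_insert (by simp [g12, g1m]),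
        Finset.sum_insert (by simp [g2m]),
        Finset.sum_singleton]
    have v0 : cqe n 0 = 1 := by unfold cqe; rw [if_neg g01, if_neg g0m, if_neg g01]; norm_num
    have v1 : cqe n 1 = -1 := by unfold cqe; norm_num
    have v2 : cqe n 2 = 1 := by
      unfold cqe; rw [if_neg (fun h => g12 h.symm), if_neg (fun h => g2m h), if_neg (fun h => g12 h.symm)]
      norm_num
    have vm : cqe n (-1) = -1 := by
      unfold cqe
      rw [if_neg gm1, if_pos rfl, if_neg gm1, if_neg (by push_neg; exact ⟨fun h => g0m h.symm, fun h => g2m h.symm⟩)]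
      norm_num
    rw [v0, v1, v2, vm]; ring


lemma cast_natsub_one {n : ℕ} [NeZero n] (hn : 1 ≤ n) : (((n - 1 : ℕ)) : ZMod n) = -1 := by
  have : ((n - 1 : ℕ) : ZMod n) = (n : ZMod n) - 1 := by
    rw [Nat.cast_sub hn]; norm_num
  rw [this, ZMod.natCast_self]; ring

lemma sum_shift {n : ℕ} [NeZero n] (hn : 2 ≤ n) (f : ZMod n → ℤ) (a : ℕ) :
    ∑ k ∈ Finset.range (n - 1), f ((k + a : ℕ) : ZMod n) =
      ∑ d ∈ Finset.univ.erase (((a : ℕ) : ZMod n) - 1), f d := by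
  refine Finset.sum_nbij' (fun k => ((k + a : ℕ) : ZMod n)) (fun d => (d - a).val) ?_ ?_ ?_ ?_ ?_
  · intro k hk
    simp only [Finset.mem_range] at hk
    refine Finset.mem_erase.mpr ⟨?_, Finset.mem_univ _⟩
    intro h
    have h2 : ((k + 1 : ℕ) : ZMod n) = 0 := by push_cast at h ⊢; linear_combination h
    have := (ZMod.natCast_eq_zero_iff (k+1) n).mp h2
    have := Nat.le_of_dvd (by omega) this
    omega
  · intro d hd
    obtain ⟨hd1, -⟩ := Finset.mem_erase.mp hd
    simp only [Finset.mem_range]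
    have hlt : (d - a).val < n := ZMod.val_lt _
    have hne : (d - a).val ≠ n - 1 := by
      intro h
      apply hd1
      have : ((d - (a:ZMod n)).val : ZMod n) = d - a := ZMod.natCast_rightInverse _
      rw [h, cast_natsub_one (by omega)] at this
      linear_combination -this
    omega
  · intro k hk
    simp only [Finset.mem_range] at hk
    show ((((k + a : ℕ) : ZMod n)) - ((a : ℕ) : ZMod n)).val = k
    have : ((k + a : ℕ) : ZMod n) - ((a : ℕ) : ZMod n) = ((k : ℕ) : ZMod n) := by push_cast; ring
    rw [this, ZMod.val_cast_of_lt (by omega)]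
  · intro d hd
    have : ((d - (a:ZMod n)).val : ZMod n) = d - a := ZMod.natCast_rightInverse _
    push_cast
    rw [this]; ring
  · intro k hk; rfl

lemma sum_range_add' (f : ℕ → ℤ) (a : ℕ) : ∀ b : ℕ,
    ∑ k ∈ Finset.range (a + b), f k = ∑ k ∈ Finset.range a, f k + ∑ l ∈ Finset.range b, f (a + l) := by
  intro b; induction b with
  | zero => simp
  | succ b ih => rw [← Nat.add_assoc, Finset.sum_range_succ, Finset.sum_range_succ, ih, add_assoc]

lemma sum_cqe_master {n : ℕ} (hn : 2 ≤ n) (a : ℕ) (ha : 0 < a) (han : a ≤ n) :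
    ∑ k ∈ Finset.range (n - 1), cqe n ((k + a : ℕ) : ZMod n) = - cqe n ((a : ZMod n) - 1) := by
  haveI : NeZero n := ⟨by omega⟩
  rw [sum_shift hn (cqe n) a]
  have h1 : ∑ d ∈ Finset.univ.erase (((a : ℕ) : ZMod n) - 1), cqe n d + cqe n (((a:ℕ) : ZMod n) - 1)
      = ∑ d : ZMod n, cqe n d := Finset.sum_erase_add _ _ (Finset.mem_univ _)
  rw [sum_cqe hn] at h1
  linarith


lemma cqe_one {n : ℕ} : cqe n 1 = -1 := by
  unfold cqe; rw [if_pos rfl, if_pos rfl]; norm_num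

lemma cqe_zero {n : ℕ} (hn : 2 ≤ n) : cqe n 0 = 1 := by
  haveI : Fact (1 < n) := ⟨by omega⟩
  have h10 : (1 : ZMod n) ≠ 0 := one_ne_zero
  have g01 : (0 : ZMod n) ≠ 1 := fun h => h10 h.symm
  have g0m : (0 : ZMod n) ≠ -1 := fun h => h10 (by linear_combination h)
  unfold cqe
  rw [if_neg g01, if_neg g0m, if_neg g01, if_pos (Or.inl rfl)]
  norm_num

lemma sum_split_A {n : ℕ} (hn : 2 ≤ n) (j : ℕ) (hj : j < n) :
    ∑ l ∈ Finset.range j, cqe n ((l + 2 : ℕ) : ZMod n)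
      + ∑ l ∈ Finset.range (n - (j + 1)), cqe n ((j + 2 + l : ℕ) : ZMod n) = 1 := by
  haveI : NeZero n := ⟨by omega⟩
  have hsplit := sum_range_add' (fun k => cqe n ((k + 2 : ℕ) : ZMod n)) j (n - 1 - j)
  rw [show j + (n - 1 - j) = n - 1 by omega] at hsplit
  have master := sum_cqe_master hn 2 (by norm_num) (by omega)
  rw [show (((2:ℕ) : ZMod n) - 1) = 1 by push_cast; ring, cqe_one] at master
  have halign : ∑ l ∈ Finset.range (n - (j + 1)), cqe n ((j + 2 + l : ℕ) : ZMod n)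
      = ∑ l ∈ Finset.range (n - 1 - j), cqe n ((j + l + 2 : ℕ) : ZMod n) := by
    rw [show n - (j + 1) = n - 1 - j by omega]
    refine Finset.sum_congr rfl fun l _ => ?_
    congr 1
    push_cast; ring
  rw [halign, ← hsplit, master]
  norm_num

lemma sum_split_B {n : ℕ} (hn : 2 ≤ n) (j : ℕ) (hj : j < n) :
    ∑ l ∈ Finset.range j, cqe n ((l + 1 : ℕ) : ZMod n)
      + ∑ l ∈ Finset.range (n - (j + 1)), cqe n ((j + 1 + l : ℕ) : ZMod n) = -1 := by
  haveI : NeZero n := ⟨by omega⟩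
  have hsplit := sum_range_add' (fun k => cqe n ((k + 1 : ℕ) : ZMod n)) j (n - 1 - j)
  rw [show j + (n - 1 - j) = n - 1 by omega] at hsplit
  have master := sum_cqe_master hn 1 (by norm_num) (by omega)
  rw [show (((1:ℕ) : ZMod n) - 1) = 0 by push_cast; ring, cqe_zero hn] at master
  have halign : ∑ l ∈ Finset.range (n - (j + 1)), cqe n ((j + 1 + l : ℕ) : ZMod n)
      = ∑ l ∈ Finset.range (n - 1 - j), cqe n ((j + l + 1 : ℕ) : ZMod n) := by
    rw [show n - (j + 1) = n - 1 - j by omega]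
    refine Finset.sum_congr rfl fun l _ => ?_
    congr 1
    push_cast; ring
  rw [halign, ← hsplit, master]

section Alg

variable {K : Type*} [DivisionRing K] {n : ℕ}

lemma zcen (ε : K) (hcen : ∀ x : K, ε * x = x * ε) (z : ℤ) (x : K) :
    ε ^ z * x = x * ε ^ z := Commute.zpow_left₀ (hcen x) z

lemma swap_pow (ε : K) (hcen : ∀ x : K, ε * x = x * ε) (z : ℤ) (a y : K) :
    a * (ε ^ z * y) = ε ^ z * (a * y) := by
  rw [← mul_assoc, ← zcen ε hcen, mul_assoc]

lemma powswap (ε : K) (hε : ε ≠ 0) (z w : ℤ) (y : K) :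
    ε ^ z * (ε ^ w * y) = ε ^ w * (ε ^ z * y) := by
  rw [← mul_assoc, ← zpow_add₀ hε, add_comm, zpow_add₀ hε, mul_assoc]

lemma list_comm (ε : K) (hε : ε ≠ 0) (hcen : ∀ x : K, ε * x = x * ε)
    (x : K) (g : ℕ → K) (e : ℕ → ℤ) :
    ∀ L : List ℕ, (∀ l ∈ L, x * g l = ε ^ e l * (g l * x)) →
      x * (L.map g).prod = ε ^ (L.map e).sum * ((L.map g).prod * x) := by
  intro L
  induction L with
  | nil => simp
  | cons a L ih =>
    intro h
    simp only [List.map_cons, List.prod_cons, List.sum_cons]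
    have ha := h a (by simp)
    have hL := ih (fun l hl => h l (by simp [hl]))
    calc x * (g a * (L.map g).prod) = (x * g a) * (L.map g).prod := by rw [mul_assoc]
      _ = (ε ^ e a * (g a * x)) * (L.map g).prod := by rw [ha]
      _ = ε ^ e a * (g a * (x * (L.map g).prod)) := by simp only [mul_assoc]
      _ = ε ^ e a * (g a * (ε ^ (L.map e).sum * ((L.map g).prod * x))) := by rw [hL]
      _ = ε ^ e a * (ε ^ (L.map e).sum * (g a * ((L.map g).prod * x))) := by
          rw [swap_pow ε hcen]
      _ = ε ^ (e a + (L.map e).sum) * (g a * (L.map g).prod * x) := by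
          rw [zpow_add₀ hε]; simp only [mul_assoc]

lemma list_range_map_sum (f : ℕ → ℤ) (m : ℕ) :
    ((List.range m).map f).sum = ∑ k ∈ Finset.range m, f k := by
  induction m with
  | zero => simp
  | succ m ih => rw [List.range_succ, Finset.sum_range_succ, List.map_append, List.sum_append, ih]; simp

section Rel

variable (ε : K) (hε : ε ≠ 0) (hcen : ∀ x : K, ε * x = x * ε)
variable (p q : ZMod n → K)
variable (hpq0 : ∀ i, p i * q i = ε * (q i * p i))
variable (hpq2 : ∀ i, p i * q (i - 2) = ε * (q (i - 2) * p i))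
variable (hpq1 : ∀ i, p i * q (i - 1) = ε⁻¹ * ε⁻¹ * (q (i - 1) * p i))
variable (hpqo : ∀ i j, j ≠ i → j ≠ i - 2 → j ≠ i - 1 → p i * q j = q j * p i)
variable (hpp : ∀ i, p i * p (i - 1) = ε * (p (i - 1) * p i))
variable (hppo : ∀ i j, j ≠ i - 1 → j ≠ i + 1 → p i * p j = p j * p i)
variable (hqq : ∀ i, q i * q (i - 1) = ε * (q (i - 1) * q i))
variable (hqqo : ∀ i j, j ≠ i - 1 → j ≠ i + 1 → q i * q j = q j * q i)

set_option linter.unusedSectionVars false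

include hε

include hpq0 hpq2 hpq1 hpqo in
lemma q_past_p (i d : ZMod n) :
    q i * p (i - d) = ε ^ (if d = -1 then (2:ℤ) else if d = 0 ∨ d = -2 then -1 else 0)
      * (p (i - d) * q i) := by
  by_cases hm1 : d = -1
  · subst hm1
    rw [if_pos rfl, sub_neg_eq_add]
    have h := hpq1 (i + 1)
    rw [add_sub_cancel_right] at h
    rw [h]
    rw [show (ε : K) ^ (2:ℤ) = ε * ε by rw [show ((2:ℤ)) = ((2:ℕ):ℤ) by norm_num, zpow_natCast, pow_two]]
    rw [← mul_assoc, mul_assoc (ε * ε), ← mul_assoc (ε*ε)]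
    rw [show ε * ε * (ε⁻¹ * ε⁻¹) = 1 by
      rw [mul_assoc, ← mul_assoc ε ε⁻¹, mul_inv_cancel₀ hε, one_mul, mul_inv_cancel₀ hε]]
    rw [one_mul]
  · rw [if_neg hm1]
    by_cases h02 : d = 0 ∨ d = -2
    · rw [if_pos h02]
      rcases h02 with h0 | h2
      · subst h0
        rw [sub_zero]
        have h := hpq0 i
        rw [h, zpow_neg_one, ← mul_assoc, inv_mul_cancel₀ hε, one_mul]
      · subst h2
        rw [sub_neg_eq_add]
        have h := hpq2 (i + 2)
        rw [add_sub_cancel_right] at h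
        rw [h, zpow_neg_one, ← mul_assoc, inv_mul_cancel₀ hε, one_mul]
    · rw [if_neg h02, zpow_zero, one_mul]
      push_neg at h02
      refine (hpqo (i - d) i ?_ ?_ ?_).symm
      · intro h; exact h02.1 (by rwa [eq_comm, sub_eq_self] at h)
      · intro h
        rw [sub_sub, eq_comm, sub_eq_self] at h
        exact h02.2 (by linear_combination h)
      · intro h
        rw [sub_sub, eq_comm, sub_eq_self] at h
        exact hm1 (by linear_combination h)

include hpp hppo in
lemma p_past_p (i d : ZMod n) :
    p i * p (i - d) = ε ^ (if d = -1 then (-1:ℤ) else if d = 1 then 1 else 0)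
      * (p (i - d) * p i) := by
  by_cases hm1 : d = -1
  · subst hm1
    rw [if_pos rfl, sub_neg_eq_add]
    have h := hpp (i + 1)
    rw [add_sub_cancel_right] at h
    rw [h, zpow_neg_one, ← mul_assoc, inv_mul_cancel₀ hε, one_mul]
  · rw [if_neg hm1]
    by_cases h1 : d = 1
    · subst h1
      rw [if_pos rfl, zpow_one]
      exact hpp i
    · rw [if_neg h1, zpow_zero, one_mul]
      refine hppo i (i - d) ?_ ?_
      · intro h; rw [sub_right_inj] at h; exact h1 h
      · intro h
        rw [show i + 1 = i - (-1) by ring, sub_right_inj] at h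
        exact hm1 h

include hqq hqqo in
lemma q_past_q (i e : ZMod n) :
    q i * q (i - e) = ε ^ (if e = 1 then (1:ℤ) else if e = -1 then -1 else 0)
      * (q (i - e) * q i) := by
  by_cases h1 : e = 1
  · subst h1
    rw [if_pos rfl, zpow_one]
    exact hqq i
  · rw [if_neg h1]
    by_cases hm1 : e = -1
    · subst hm1
      rw [if_pos rfl, sub_neg_eq_add]
      have h := hqq (i + 1)
      rw [add_sub_cancel_right] at h
      rw [h, zpow_neg_one, ← mul_assoc, inv_mul_cancel₀ hε, one_mul]
    · rw [if_neg hm1, zpow_zero, one_mul]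
      refine hqqo i (i - e) ?_ ?_
      · intro h; rw [sub_right_inj] at h; exact h1 h
      · intro h
        rw [show i + 1 = i - (-1) by ring, sub_right_inj] at h
        exact hm1 h

include hpq0 hpq2 hpq1 hpqo in
lemma p_past_q (i e : ZMod n) :
    p i * q (i - e) = ε ^ (if e = 1 then (-2:ℤ) else if e = 0 ∨ e = 2 then 1 else 0)
      * (q (i - e) * p i) := by
  by_cases h1 : e = 1
  · subst h1
    rw [if_pos rfl]
    have h := hpq1 i
    rw [h]
    congr 1
    rw [show ((-2:ℤ)) = (-1) + (-1) by norm_num, zpow_add₀ hε, zpow_neg_one]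
  · rw [if_neg h1]
    by_cases h02 : e = 0 ∨ e = 2
    · rw [if_pos h02, zpow_one]
      rcases h02 with h0 | h2
      · subst h0; rw [sub_zero]; exact hpq0 i
      · subst h2; exact hpq2 i
    · rw [if_neg h02, zpow_zero, one_mul]
      push_neg at h02
      refine hpqo i (i - e) ?_ ?_ ?_
      · intro h; rw [sub_eq_self] at h; exact h02.1 h
      · intro h; rw [sub_right_inj] at h; exact h02.2 h
      · intro h; rw [sub_right_inj] at h; exact h1 h

include hcen hpq0 hpq2 hpq1 hpqo hpp hppo in
lemma qp_past_p (i d : ZMod n) :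
    (q i * p i) * p (i - d) = ε ^ (cpe n d) * (p (i - d) * (q i * p i)) := by
  have hq := q_past_p (ε := ε) (hε := hε) (p := p) (q := q) (hpq0 := hpq0) (hpq2 := hpq2)
    (hpq1 := hpq1) (hpqo := hpqo) i d
  have hp := p_past_p (ε := ε) (hε := hε) (p := p) (hpp := hpp) (hppo := hppo) i d
  unfold cpe
  set A := (if d = -1 then (2:ℤ) else if d = 0 ∨ d = -2 then -1 else 0) with hA
  set B := (if d = -1 then (-1:ℤ) else if d = 1 then 1 else 0) with hB
  calc (q i * p i) * p (i - d) = q i * (p i * p (i - d)) := by rw [mul_assoc]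
    _ = q i * (ε ^ B * (p (i - d) * p i)) := by rw [hp]
    _ = ε ^ B * (q i * (p (i - d) * p i)) := swap_pow ε hcen _ _ _
    _ = ε ^ B * ((q i * p (i - d)) * p i) := by simp only [mul_assoc]
    _ = ε ^ B * ((ε ^ A * (p (i - d) * q i)) * p i) := by rw [hq]
    _ = ε ^ B * (ε ^ A * (p (i - d) * (q i * p i))) := by simp only [mul_assoc]
    _ = ε ^ A * (ε ^ B * (p (i - d) * (q i * p i))) := powswap ε hε _ _ _
    _ = ε ^ (A + B) * (p (i - d) * (q i * p i)) := by rw [zpow_add₀ hε, mul_assoc]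

include hcen hpq0 hpq2 hpq1 hpqo hqq hqqo in
lemma qp_past_q (i e : ZMod n) :
    (q i * p i) * q (i - e) = ε ^ (cqe n e) * (q (i - e) * (q i * p i)) := by
  have hd := p_past_q (ε := ε) (hε := hε) (p := p) (q := q) (hpq0 := hpq0) (hpq2 := hpq2)
    (hpq1 := hpq1) (hpqo := hpqo) i e
  have hg := q_past_q (ε := ε) (hε := hε) (q := q) (hqq := hqq) (hqqo := hqqo) i e
  unfold cqe
  set G := (if e = 1 then (1:ℤ) else if e = -1 then -1 else 0) with hG
  set D := (if e = 1 then (-2:ℤ) else if e = 0 ∨ e = 2 then 1 else 0) with hD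
  calc (q i * p i) * q (i - e) = q i * (p i * q (i - e)) := by rw [mul_assoc]
    _ = q i * (ε ^ D * (q (i - e) * p i)) := by rw [hd]
    _ = ε ^ D * (q i * (q (i - e) * p i)) := swap_pow ε hcen _ _ _
    _ = ε ^ D * ((q i * q (i - e)) * p i) := by simp only [mul_assoc]
    _ = ε ^ D * ((ε ^ G * (q (i - e) * q i)) * p i) := by rw [hg]
    _ = ε ^ D * (ε ^ G * (q (i - e) * (q i * p i))) := by simp only [mul_assoc]
    _ = ε ^ G * (ε ^ D * (q (i - e) * (q i * p i))) := powswap ε hε _ _ _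
    _ = ε ^ (G + D) * (q (i - e) * (q i * p i)) := by rw [zpow_add₀ hε, mul_assoc]

include hcen hpq0 hpq2 hpq1 hpqo hpp hppo hqq hqqo in
lemma termA (hn : 2 ≤ n) (i : ZMod n) (j : ℕ) (hj : j < n) :
    (q i * p i) * (((List.range j).map (fun l => p (i - ((l + 1 : ℕ) : ZMod n)))).prod *
      ((List.range (n - (j + 1))).map (fun l => q (i - ((j + 2 + l : ℕ) : ZMod n)))).prod)
    = ε * ((((List.range j).map (fun l => p (i - ((l + 1 : ℕ) : ZMod n)))).prod *
      ((List.range (n - (j + 1))).map (fun l => q (i - ((j + 2 + l : ℕ) : ZMod n)))).prod) * (q i * p i)) := by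
  set x := q i * p i with hx
  have hP := list_comm ε hε hcen x (fun l => p (i - ((l + 1 : ℕ) : ZMod n)))
    (fun l => cpe n ((l + 1 : ℕ) : ZMod n)) (List.range j)
    (fun l _ => qp_past_p (ε := ε) (hε := hε) (hcen := hcen) (p := p) (q := q)
      (hpq0 := hpq0) (hpq2 := hpq2) (hpq1 := hpq1) (hpqo := hpqo) (hpp := hpp) (hppo := hppo)
      i ((l + 1 : ℕ) : ZMod n))
  have hQ := list_comm ε hε hcen x (fun l => q (i - ((j + 2 + l : ℕ) : ZMod n)))
    (fun l => cqe n ((j + 2 + l : ℕ) : ZMod n)) (List.range (n - (j + 1)))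
    (fun l _ => qp_past_q (ε := ε) (hε := hε) (hcen := hcen) (p := p) (q := q)
      (hpq0 := hpq0) (hpq2 := hpq2) (hpq1 := hpq1) (hpqo := hpqo) (hqq := hqq) (hqqo := hqqo)
      i ((j + 2 + l : ℕ) : ZMod n))
  set P := ((List.range j).map (fun l => p (i - ((l + 1 : ℕ) : ZMod n)))).prod with hPd
  set Q := ((List.range (n - (j + 1))).map (fun l => q (i - ((j + 2 + l : ℕ) : ZMod n)))).prod with hQd
  set S1 := ((List.range j).map (fun l => cpe n ((l + 1 : ℕ) : ZMod n))).sum with hS1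
  set S2 := ((List.range (n - (j + 1))).map (fun l => cqe n ((j + 2 + l : ℕ) : ZMod n))).sum with hS2
  have hsum : S1 + S2 = (1 : ℤ) := by
    rw [hS1, hS2, list_range_map_sum, list_range_map_sum]
    have h1 : ∑ l ∈ Finset.range j, cpe n ((l + 1 : ℕ) : ZMod n)
        = ∑ l ∈ Finset.range j, cqe n ((l + 2 : ℕ) : ZMod n) :=
      Finset.sum_congr rfl fun l _ => by rw [cpe_eq_cqe hn]; congr 1; push_cast; ring
    rw [h1]
    exact sum_split_A hn j hj
  calc x * (P * Q) = (x * P) * Q := (mul_assoc x P Q).symm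
    _ = (ε ^ S1 * (P * x)) * Q := by rw [hP]
    _ = ε ^ S1 * (P * (x * Q)) := by simp only [mul_assoc]
    _ = ε ^ S1 * (P * (ε ^ S2 * (Q * x))) := by rw [hQ]
    _ = ε ^ S1 * (ε ^ S2 * (P * (Q * x))) := by rw [swap_pow ε hcen]
    _ = ε ^ (S1 + S2) * (P * Q * x) := by rw [zpow_add₀ hε]; simp only [mul_assoc]
    _ = ε * (P * Q * x) := by rw [hsum, zpow_one]

include hcen hpq0 hpq2 hpq1 hpqo hpp hppo hqq hqqo in
lemma termB (hn : 2 ≤ n) (i : ZMod n) (j : ℕ) (hj : j < n) :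
    (q i * p i) * (((List.range j).map (fun l => p ((i + 1) - ((l + 1 : ℕ) : ZMod n)))).prod *
      ((List.range (n - (j + 1))).map (fun l => q ((i + 1) - ((j + 2 + l : ℕ) : ZMod n)))).prod)
    = ε⁻¹ * ((((List.range j).map (fun l => p ((i + 1) - ((l + 1 : ℕ) : ZMod n)))).prod *
      ((List.range (n - (j + 1))).map (fun l => q ((i + 1) - ((j + 2 + l : ℕ) : ZMod n)))).prod) * (q i * p i)) := by
  have hfp : (fun l : ℕ => p ((i + 1) - ((l + 1 : ℕ) : ZMod n)))
      = fun l : ℕ => p (i - ((l : ℕ) : ZMod n)) := funext fun l => by congr 1; push_cast; ring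
  have hfq : (fun l : ℕ => q ((i + 1) - ((j + 2 + l : ℕ) : ZMod n)))
      = fun l : ℕ => q (i - ((j + 1 + l : ℕ) : ZMod n)) := funext fun l => by congr 1; push_cast; ring
  rw [hfp, hfq]
  set x := q i * p i with hx
  have hP := list_comm ε hε hcen x (fun l => p (i - ((l : ℕ) : ZMod n)))
    (fun l => cpe n ((l : ℕ) : ZMod n)) (List.range j)
    (fun l _ => qp_past_p (ε := ε) (hε := hε) (hcen := hcen) (p := p) (q := q)
      (hpq0 := hpq0) (hpq2 := hpq2) (hpq1 := hpq1) (hpqo := hpqo) (hpp := hpp) (hppo := hppo)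
      i ((l : ℕ) : ZMod n))
  have hQ := list_comm ε hε hcen x (fun l => q (i - ((j + 1 + l : ℕ) : ZMod n)))
    (fun l => cqe n ((j + 1 + l : ℕ) : ZMod n)) (List.range (n - (j + 1)))
    (fun l _ => qp_past_q (ε := ε) (hε := hε) (hcen := hcen) (p := p) (q := q)
      (hpq0 := hpq0) (hpq2 := hpq2) (hpq1 := hpq1) (hpqo := hpqo) (hqq := hqq) (hqqo := hqqo)
      i ((j + 1 + l : ℕ) : ZMod n))
  set P := ((List.range j).map (fun l => p (i - ((l : ℕ) : ZMod n)))).prod with hPd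
  set Q := ((List.range (n - (j + 1))).map (fun l => q (i - ((j + 1 + l : ℕ) : ZMod n)))).prod with hQd
  set S1 := ((List.range j).map (fun l => cpe n ((l : ℕ) : ZMod n))).sum with hS1
  set S2 := ((List.range (n - (j + 1))).map (fun l => cqe n ((j + 1 + l : ℕ) : ZMod n))).sum with hS2
  have hsum : S1 + S2 = (-1 : ℤ) := by
    rw [hS1, hS2, list_range_map_sum, list_range_map_sum]
    have h1 : ∑ l ∈ Finset.range j, cpe n ((l : ℕ) : ZMod n)
        = ∑ l ∈ Finset.range j, cqe n ((l + 1 : ℕ) : ZMod n) :=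
      Finset.sum_congr rfl fun l _ => by rw [cpe_eq_cqe hn]; congr 1; push_cast; ring
    rw [h1]
    exact sum_split_B hn j hj
  calc x * (P * Q) = (x * P) * Q := (mul_assoc x P Q).symm
    _ = (ε ^ S1 * (P * x)) * Q := by rw [hP]
    _ = ε ^ S1 * (P * (x * Q)) := by simp only [mul_assoc]
    _ = ε ^ S1 * (P * (ε ^ S2 * (Q * x))) := by rw [hQ]
    _ = ε ^ S1 * (ε ^ S2 * (P * (Q * x))) := by rw [swap_pow ε hcen]
    _ = ε ^ (S1 + S2) * (P * Q * x) := by rw [zpow_add₀ hε]; simp only [mul_assoc]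
    _ = ε⁻¹ * (P * Q * x) := by rw [hsum, zpow_neg_one]

end Rel
end Alg

section Kappa

variable {K : Type*} [DivisionRing K] {n : ℕ}
variable (hn : 2 ≤ n) (ε : K) (hε : ε ≠ 0) (hcen : ∀ x : K, ε * x = x * ε)
variable (p q : ZMod n → K)
variable (hpq0 : ∀ i, p i * q i = ε * (q i * p i))
variable (hpq2 : ∀ i, p i * q (i - 2) = ε * (q (i - 2) * p i))
variable (hpq1 : ∀ i, p i * q (i - 1) = ε⁻¹ * ε⁻¹ * (q (i - 1) * p i))
variable (hpqo : ∀ i j, j ≠ i → j ≠ i - 2 → j ≠ i - 1 → p i * q j = q j * p i)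
variable (hpp : ∀ i, p i * p (i - 1) = ε * (p (i - 1) * p i))
variable (hppo : ∀ i j, j ≠ i - 1 → j ≠ i + 1 → p i * p j = p j * p i)
variable (hqq : ∀ i, q i * q (i - 1) = ε * (q (i - 1) * q i))
variable (hqqo : ∀ i j, j ≠ i - 1 → j ≠ i + 1 → q i * q j = q j * q i)

set_option linter.unusedSectionVars false

include hn hε hcen hpq0 hpq2 hpq1 hpqo hpp hppo hqq hqqo

lemma kappaA (i : ZMod n) :
    (q i * p i) * kq n p q i = ε * (kq n p q i * (q i * p i)) := by
  unfold kq
  rw [Finset.mul_sum, Finset.sum_mul, Finset.mul_sum]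
  refine Finset.sum_congr rfl fun j hj => ?_
  exact termA (ε := ε) (hε := hε) (hcen := hcen) (p := p) (q := q) (hpq0 := hpq0)
    (hpq2 := hpq2) (hpq1 := hpq1) (hpqo := hpqo) (hpp := hpp) (hppo := hppo)
    (hqq := hqq) (hqqo := hqqo) hn i j (Finset.mem_range.mp hj)

lemma kappaB (i : ZMod n) :
    (q i * p i) * kq n p q (i + 1) = ε⁻¹ * (kq n p q (i + 1) * (q i * p i)) := by
  unfold kq
  rw [Finset.mul_sum, Finset.sum_mul, Finset.mul_sum]
  refine Finset.sum_congr rfl fun j hj => ?_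
  exact termB (ε := ε) (hε := hε) (hcen := hcen) (p := p) (q := q) (hpq0 := hpq0)
    (hpq2 := hpq2) (hpq1 := hpq1) (hpqo := hpqo) (hpp := hpp) (hppo := hppo)
    (hqq := hqq) (hqqo := hqqo) hn i j (Finset.mem_range.mp hj)

end Kappa

end QT13

/-- The quantum geometric R-matrix `Rᵋ(p_i) = κ_i⁻¹ q_i κ_{i+1}`,
`Rᵋ(q_i) = κ_{i+1}⁻¹ p_i κ_i` preserves the local products:
`Rᵋ(p_i)Rᵋ(q_i) = ε q_i p_i = p_i q_i`, `Rᵋ(q_i)Rᵋ(p_i) = ε⁻¹ p_i q_i = q_i p_i`,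
and `Rᵋ(p_i)Rᵋ(q_i) = ε Rᵋ(q_i)Rᵋ(p_i)`. -/
theorem statement_13 {K : Type*} [DivisionRing K] (n : ℕ) (hn : 2 ≤ n)
    (ε : K) (hε : ε ≠ 0) (hcen : ∀ x : K, ε * x = x * ε)
    (p q : ZMod n → K)
    (hpq0 : ∀ i, p i * q i = ε * (q i * p i))
    (hpq2 : ∀ i, p i * q (i - 2) = ε * (q (i - 2) * p i))
    (hpq1 : ∀ i, p i * q (i - 1) = ε⁻¹ * ε⁻¹ * (q (i - 1) * p i))
    (hpqo : ∀ i j, j ≠ i → j ≠ i - 2 → j ≠ i - 1 → p i * q j = q j * p i)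
    (hpp : ∀ i, p i * p (i - 1) = ε * (p (i - 1) * p i))
    (hppo : ∀ i j, j ≠ i - 1 → j ≠ i + 1 → p i * p j = p j * p i)
    (hqq : ∀ i, q i * q (i - 1) = ε * (q (i - 1) * q i))
    (hqqo : ∀ i j, j ≠ i - 1 → j ≠ i + 1 → q i * q j = q j * q i)
    (hκ : ∀ i, kq n p q i ≠ 0)
    (Rp Rq : ZMod n → K)
    (hRp : ∀ i, Rp i = (kq n p q i)⁻¹ * q i * kq n p q (i + 1))
    (hRq : ∀ i, Rq i = (kq n p q (i + 1))⁻¹ * p i * kq n p q i) :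
    ∀ i, Rp i * Rq i = ε * (q i * p i) ∧
      Rp i * Rq i = p i * q i ∧
      Rq i * Rp i = ε⁻¹ * (p i * q i) ∧
      Rq i * Rp i = q i * p i ∧
      Rp i * Rq i = ε * (Rq i * Rp i) := by
  intro i
  have hκi := hκ i
  have hκ1 := hκ (i + 1)
  have kA : (q i * p i) * kq n p q i = ε * (kq n p q i * (q i * p i)) :=
    QT13.kappaA hn ε hε hcen p q hpq0 hpq2 hpq1 hpqo hpp hppo hqq hqqo i
  have kB : (q i * p i) * kq n p q (i + 1) = ε⁻¹ * (kq n p q (i + 1) * (q i * p i)) :=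
    QT13.kappaB hn ε hε hcen p q hpq0 hpq2 hpq1 hpqo hpp hppo hqq hqqo i
  set κi := kq n p q i with hκidef
  set κ1 := kq n p q (i + 1) with hκ1def
  have hRpRq : Rp i * Rq i = ε * (q i * p i) := by
    rw [hRp i, hRq i]
    calc (κi⁻¹ * q i * κ1) * (κ1⁻¹ * p i * κi)
        = κi⁻¹ * (q i * (κ1 * (κ1⁻¹ * (p i * κi)))) := by simp only [mul_assoc]
      _ = κi⁻¹ * (q i * (p i * κi)) := by rw [mul_inv_cancel_left₀ hκ1]
      _ = κi⁻¹ * ((q i * p i) * κi) := by simp only [mul_assoc]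
      _ = κi⁻¹ * (ε * (κi * (q i * p i))) := by rw [kA]
      _ = ε * (κi⁻¹ * (κi * (q i * p i))) := by rw [← mul_assoc, ← hcen, mul_assoc]
      _ = ε * (q i * p i) := by rw [inv_mul_cancel_left₀ hκi]
  have hRqRp : Rq i * Rp i = q i * p i := by
    rw [hRq i, hRp i]
    calc (κ1⁻¹ * p i * κi) * (κi⁻¹ * q i * κ1)
        = κ1⁻¹ * (p i * (κi * (κi⁻¹ * (q i * κ1)))) := by simp only [mul_assoc]
      _ = κ1⁻¹ * (p i * (q i * κ1)) := by rw [mul_inv_cancel_left₀ hκi]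
      _ = κ1⁻¹ * ((p i * q i) * κ1) := by simp only [mul_assoc]
      _ = κ1⁻¹ * ((ε * (q i * p i)) * κ1) := by rw [hpq0 i]
      _ = κ1⁻¹ * (ε * ((q i * p i) * κ1)) := by simp only [mul_assoc]
      _ = κ1⁻¹ * (ε * (ε⁻¹ * (κ1 * (q i * p i)))) := by rw [kB]
      _ = κ1⁻¹ * (κ1 * (q i * p i)) := by rw [mul_inv_cancel_left₀ hε]
      _ = q i * p i := inv_mul_cancel_left₀ hκ1 _
  refine ⟨hRpRq, ?_, ?_, hRqRp, ?_⟩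
  · rw [hRpRq, hpq0 i]
  · rw [hRqRp, hpq0 i, inv_mul_cancel_left₀ hε]
  · rw [hRpRq, hRqRp]
end

section
/- Let n ≥ 2, and let q_{j,i} (j = 1,…,m, i ∈ ℤ/nℤ) be commuting indeterminates. Define y_{j,i} := q_{j,i}⁻¹ q_{j+1,i-1} for j = 1,…,m-1, and let R_j be the geometric R-matrix acting on q_j, q_{j+1}. Then for each j, the induced action on the y-variables agrees with the cluster R-matrix formulas: R_j(y_{j,i}) = α_{i+2}⁻¹ y_{j,i+1}⁻¹ α_i, R_j(y_{j-1,i}) = α_i⁻¹ y_{j,i} y_{j-1,i} α_{i+1}, R_j(y_{j+1,i}) = α_{i+1}⁻¹ y_{j,i+1} y_{j+1,i} α_{i+2}, where α_i = 1 + Σ_{k=1}^{n-1} y_{j,i} y_{j,i+1} ⋯ y_{j,i+k-1} (all other y_{h,i} fixed). -/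
/-- The classical (ε = 1) case of Theorem 6.8: under the substitution
`y_{j,i} = q_{j,i}⁻¹ q_{j+1,i-1}`, the geometric R-matrix acting on rows `j, j+1`
(here the rows `q_{j-1}, q_j, q_{j+1}, q_{j+2}` are named `a, b, c, d`) induces the
cluster R-matrix formulas on the `y`-variables. -/
theorem statement_15 {K : Type*} [Field K] (n : ℕ) (hn : 2 ≤ n)
    (a b c d : ZMod n → K)
    (ha : ∀ i, a i ≠ 0) (hb : ∀ i, b i ≠ 0) (hc : ∀ i, c i ≠ 0) (hd : ∀ i, d i ≠ 0)
    (hκ : ∀ i, kappa n b c i ≠ 0)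
    (b' c' : ZMod n → K)
    (hb' : ∀ i, b' i = c i * kappa n b c (i + 1) / kappa n b c i)
    (hc' : ∀ i, c' i = b i * kappa n b c i / kappa n b c (i + 1))
    (ym y yp : ZMod n → K)
    (hym : ∀ i, ym i = (a i)⁻¹ * b (i - 1))
    (hy : ∀ i, y i = (b i)⁻¹ * c (i - 1))
    (hyp : ∀ i, yp i = (c i)⁻¹ * d (i - 1))
    (α : ZMod n → K)
    (hα : ∀ i, α i = 1 + ∑ k ∈ Finset.Icc 1 (n - 1),
      ∏ l ∈ Finset.range k, y (i + (l : ZMod n))) :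
    (∀ i, (b' i)⁻¹ * c' (i - 1) = (α (i + 2))⁻¹ * (y (i + 1))⁻¹ * α i) ∧
    (∀ i, (a i)⁻¹ * b' (i - 1) = (α i)⁻¹ * (y i * ym i) * α (i + 1)) ∧
    (∀ i, (c' i)⁻¹ * d (i - 1) = (α (i + 1))⁻¹ * (y (i + 1) * yp i) * α (i + 2)) := by
  haveI : NeZero n := ⟨by omega⟩
  set B : K := ∏ x : ZMod n, b x with hBdef
  have hBne : B ≠ 0 := Finset.prod_ne_zero_iff.mpr (fun x _ => hb x)
  -- P i * b i = B, where P i = ∏_{l=1}^{n-1} b (i - l)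
  have hP : ∀ i : ZMod n,
      (∏ l ∈ Finset.Icc 1 (n - 1), b (i - (l : ZMod n))) * b i = B := by
    intro i
    rw [hBdef, Finset.prod_eq_prod_diff_singleton_mul (Finset.mem_univ i)]
    congr 1
    refine Finset.prod_nbij' (fun l => i - (l : ZMod n)) (fun x => (i - x).val)
      ?_ ?_ ?_ ?_ ?_
    · intro l hl
      simp only [Finset.mem_Icc] at hl
      simp only [Finset.mem_sdiff, Finset.mem_univ, Finset.mem_singleton, true_and]
      intro h
      have h0 : (l : ZMod n) = 0 := by linear_combination -h
      have hv := ZMod.val_cast_of_lt (show l < n by omega)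
      rw [h0, ZMod.val_zero] at hv
      omega
    · intro x hx
      simp only [Finset.mem_sdiff, Finset.mem_univ, Finset.mem_singleton, true_and] at hx
      simp only [Finset.mem_Icc]
      have h1 : i - x ≠ 0 := sub_ne_zero.mpr (fun h => hx h.symm)
      have h2 := ZMod.val_lt (i - x)
      have h3 : (i - x).val ≠ 0 := fun h => h1 ((ZMod.val_eq_zero _).mp h)
      omega
    · intro l hl
      simp only [Finset.mem_Icc] at hl
      rw [sub_sub_cancel, ZMod.val_cast_of_lt (by omega)]
    · intro x hx
      rw [ZMod.natCast_val, ZMod.cast_id, sub_sub_cancel]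
    · intro l hl; rfl
  have hPne : ∀ i : ZMod n,
      (∏ l ∈ Finset.Icc 1 (n - 1), b (i - (l : ZMod n))) ≠ 0 :=
    fun i => Finset.prod_ne_zero_iff.mpr (fun l _ => hb _)
  -- key identity: κ_i = P_i * α_{i+1}
  have hκα : ∀ i : ZMod n, kappa n b c i =
      (∏ l ∈ Finset.Icc 1 (n - 1), b (i - (l : ZMod n))) * α (i + 1) := by
    intro i
    have hterm : ∀ j ∈ Finset.range n,
        (∏ l ∈ Finset.Icc 1 j, b (i - (l : ZMod n))) *
        (∏ l ∈ Finset.Icc (j + 2) n, c (i - (l : ZMod n)))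
        = (∏ l ∈ Finset.Icc 1 (n - 1), b (i - (l : ZMod n))) *
          ∏ l ∈ Finset.range (n - 1 - j), y (i + 1 + (l : ZMod n)) := by
      intro j hj
      rw [Finset.mem_range] at hj
      have hsplit : (∏ l ∈ Finset.Icc 1 j, b (i - (l : ZMod n))) *
          (∏ l ∈ Finset.Icc (j + 1) (n - 1), b (i - (l : ZMod n)))
          = ∏ l ∈ Finset.Icc 1 (n - 1), b (i - (l : ZMod n)) := by
        rw [Finset.Icc_add_one_left_eq_Ioc, show Finset.Icc 1 j = Finset.Ioc 0 j from Finset.Icc_add_one_left_eq_Ioc (a := 0) (b := j),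
          show Finset.Icc 1 (n - 1) = Finset.Ioc 0 (n - 1) from Finset.Icc_add_one_left_eq_Ioc (a := 0) (b := n - 1)]
        exact Finset.prod_Ioc_consecutive _ (Nat.zero_le j) (by omega)
      have hbb : ∏ l ∈ Finset.range (n - 1 - j), b (i + 1 + (l : ZMod n))
          = ∏ l ∈ Finset.Icc (j + 1) (n - 1), b (i - (l : ZMod n)) := by
        refine Finset.prod_nbij' (fun l => n - 1 - l) (fun l => n - 1 - l) ?_ ?_ ?_ ?_ ?_
        · intro l hl; rw [Finset.mem_range] at hl
          simp only [Finset.mem_Icc]; omega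
        · intro l hl; simp only [Finset.mem_Icc] at hl
          rw [Finset.mem_range]; omega
        · intro l hl; rw [Finset.mem_range] at hl; omega
        · intro l hl; simp only [Finset.mem_Icc] at hl; omega
        · intro l hl
          rw [Finset.mem_range] at hl
          congr 1
          rw [Nat.cast_sub (show l ≤ n - 1 by omega), Nat.cast_sub (show 1 ≤ n by omega),
            ZMod.natCast_self]
          ring
      have hcc : ∏ l ∈ Finset.range (n - 1 - j), c (i + (l : ZMod n))
          = ∏ l ∈ Finset.Icc (j + 2) n, c (i - (l : ZMod n)) := by
        refine Finset.prod_nbij' (fun l => n - l) (fun l => n - l) ?_ ?_ ?_ ?_ ?_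
        · intro l hl; rw [Finset.mem_range] at hl
          simp only [Finset.mem_Icc]; omega
        · intro l hl; simp only [Finset.mem_Icc] at hl
          rw [Finset.mem_range]; omega
        · intro l hl; rw [Finset.mem_range] at hl; omega
        · intro l hl; simp only [Finset.mem_Icc] at hl; omega
        · intro l hl
          rw [Finset.mem_range] at hl
          congr 1
          rw [Nat.cast_sub (show l ≤ n by omega), ZMod.natCast_self]
          ring
      have hyprod : ∏ l ∈ Finset.range (n - 1 - j), y (i + 1 + (l : ZMod n))
          = (∏ l ∈ Finset.range (n - 1 - j), b (i + 1 + (l : ZMod n)))⁻¹ *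
            ∏ l ∈ Finset.range (n - 1 - j), c (i + (l : ZMod n)) := by
        rw [← Finset.prod_inv_distrib, ← Finset.prod_mul_distrib]
        refine Finset.prod_congr rfl (fun l hl => ?_)
        rw [hy]
        congr 2
        ring
      have h2 : (∏ l ∈ Finset.Icc (j + 1) (n - 1), b (i - (l : ZMod n))) ≠ 0 :=
        Finset.prod_ne_zero_iff.mpr (fun l _ => hb _)
      rw [hyprod, hbb, hcc, ← hsplit]
      field_simp [h2]
    rw [kappa, Finset.sum_congr rfl hterm, ← Finset.mul_sum, hα]
    congr 1
    have hrefl := Finset.sum_range_reflect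
      (fun k => ∏ l ∈ Finset.range k, y (i + 1 + (l : ZMod n))) n
    rw [hrefl]
    have hins : Finset.range n = insert 0 (Finset.Icc 1 (n - 1)) := by
      ext x; simp only [Finset.mem_range, Finset.mem_insert, Finset.mem_Icc]; omega
    rw [hins, Finset.sum_insert (by simp)]
    simp
  -- α in closed form
  have hαval : ∀ i : ZMod n, α (i + 1) = kappa n b c i * b i / B := by
    intro i
    rw [hκα i, ← hP i]
    field_simp [hPne i, hb i]
  have hα0 : ∀ i : ZMod n, α i = kappa n b c (i - 1) * b (i - 1) / B := by
    intro i
    have := hαval (i - 1)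
    rwa [sub_add_cancel] at this
  have hα2 : ∀ i : ZMod n, α (i + 2) = kappa n b c (i + 1) * b (i + 1) / B := by
    intro i
    have := hαval (i + 1)
    rwa [show i + 1 + 1 = i + 2 by ring] at this
  refine ⟨fun i => ?_, fun i => ?_, fun i => ?_⟩
  · rw [hb' i, hc' (i - 1), hy (i + 1), hα0 i, hα2 i, sub_add_cancel,
      show i + 1 - 1 = i by ring]
    field_simp [hb, hc, hκ, hBne]
  · rw [hb' (i - 1), hy i, hym i, hα0 i, hαval i, sub_add_cancel]
    field_simp [ha, hb, hc, hκ, hBne]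
  · rw [hc' i, hy (i + 1), hyp i, hαval i, hα2 i, show i + 1 - 1 = i by ring]
    field_simp [hb, hc, hd, hκ, hBne]
end

section
/- Let n ≥ 2 and let p_i, q_i (i ∈ ℤ/nℤ) be commuting indeterminates with κ_i(p,q) = Σ_{j=0}^{n-1} (∏_{ℓ=1}^{j} p_{i-ℓ})(∏_{ℓ=j+2}^{n} q_{i-ℓ}). Set r_{i+1} = (∏_{i=1}^{n} p_i − ∏_{i=1}^{n} q_i)/κ_{i+1}. Then applying the commutative Yang-Baxter transformation (p,q,r) ↦ (qr/(p+r), p+r, qp/(p+r)) to the triple (r_{i+1}, p_i, q_i) yields (R(p_i), R(q_i), r_i), where R(p_i) = q_i κ_{i+1}/κ_i and R(q_i) = p_i κ_i/κ_{i+1}; in particular r_{i+1} + q_i = κ_{i+1}⁻¹ p_i κ_i = R(q_i) and (r_{i+1}+q_i)⁻¹ r_{i+1} p_i = r_i. -/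
section aux

variable {K : Type*} [Field K] {n : ℕ} [NeZero n]

lemma shift_prod (f : ℕ → K) (a b : ℕ) :
    ∏ l ∈ Finset.Icc (1 + a) (1 + b), f l = ∏ l ∈ Finset.Icc a b, f (1 + l) := by
  rw [← Finset.map_add_left_Icc, Finset.prod_map]
  rfl

lemma cyc_prod (f : ZMod n → K) (c : ZMod n) :
    ∏ l ∈ Finset.Icc 1 n, f (c - (l : ZMod n)) = ∏ j : ZMod n, f j := by
  have hn := NeZero.pos n
  apply Finset.prod_nbij' (fun l : ℕ => c - (l : ZMod n)) (fun z => (c - z - 1).val + 1)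
  · intro l _; exact Finset.mem_univ _
  · intro z _
    simp only [Finset.mem_Icc]
    have := ZMod.val_lt (c - z - 1); omega
  · intro l hl
    simp only [Finset.mem_Icc] at hl
    have h1 : c - (c - (l : ZMod n)) - 1 = ((l - 1 : ℕ) : ZMod n) := by
      rw [Nat.cast_sub hl.1]
      push_cast
      ring
    rw [h1, ZMod.val_cast_of_lt (by omega : l - 1 < n)]
    omega
  · intro z _
    have h1 : (((c - z - 1).val + 1 : ℕ) : ZMod n) = c - z := by
      push_cast [ZMod.natCast_val, ZMod.cast_id]
      ring
    rw [h1]; ring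
  · intro l _; rfl

end aux

section main

variable {K : Type*} [Field K] {n : ℕ} [NeZero n]

lemma p_part (p : ZMod n → K) (i : ZMod n) (j : ℕ) :
    p i * ∏ l ∈ Finset.Icc 1 j, p (i - (l : ZMod n)) =
      ∏ l ∈ Finset.Icc 1 (j + 1), p (i + 1 - (l : ZMod n)) := by
  rw [← Finset.Ioc_insert_left (Nat.le_add_left 1 j),
    Finset.prod_insert (by simp),
    show Finset.Ioc 1 (j+1) = Finset.Icc (1+1) (1+j) by
      rw [Finset.Icc_add_one_left_eq_Ioc]; congr 1; omega,
    shift_prod]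
  congr 1
  · norm_num
  · apply Finset.prod_congr rfl
    intro l _
    congr 1
    push_cast
    ring

lemma q_part (q : ZMod n → K) (i : ZMod n) (j : ℕ) (hj : j + 3 ≤ n + 1) :
    ∏ l ∈ Finset.Icc (j + 2) n, q (i - (l : ZMod n)) =
      q i * ∏ l ∈ Finset.Icc (j + 3) n, q (i + 1 - (l : ZMod n)) := by
  have h1 : ∏ l ∈ Finset.Icc (j + 2) n, q (i - (l : ZMod n)) =
      ∏ l ∈ Finset.Icc (j + 3) (n + 1), q (i + 1 - (l : ZMod n)) := by
    rw [show Finset.Icc (j+3) (n+1) = Finset.Icc (1+(j+2)) (1+n) by ring_nf, shift_prod]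
    apply Finset.prod_congr rfl
    intro l _
    congr 1
    push_cast
    ring
  rw [h1, Finset.prod_Icc_succ_top hj]
  have : ((n + 1 : ℕ) : ZMod n) = 1 := by push_cast [ZMod.natCast_self]; ring
  rw [this, show i + 1 - 1 = i by ring, mul_comm]

lemma key (hn2 : 2 ≤ n) (p q : ZMod n → K) (i : ZMod n) :
    p i * kappa n p q i + ∏ j : ZMod n, q j = q i * kappa n p q (i + 1) + ∏ j : ZMod n, p j := by
  obtain ⟨m, rfl⟩ : ∃ m, n = m + 1 := ⟨n - 1, by omega⟩
  unfold kappa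
  rw [Finset.mul_sum, Finset.mul_sum, Finset.sum_range_succ, Finset.sum_range_succ']
  have hterm : ∀ j ∈ Finset.range m,
      p i * ((∏ l ∈ Finset.Icc 1 j, p (i - (l : ZMod (m+1)))) *
        ∏ l ∈ Finset.Icc (j + 2) (m + 1), q (i - (l : ZMod (m+1)))) =
      q i * ((∏ l ∈ Finset.Icc 1 (j + 1), p (i + 1 - (l : ZMod (m+1)))) *
        ∏ l ∈ Finset.Icc (j + 1 + 2) (m + 1), q (i + 1 - (l : ZMod (m+1)))) := by
    intro j hj
    rw [Finset.mem_range] at hj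
    rw [q_part q i j (by omega), show j + 1 + 2 = j + 3 by ring]
    linear_combination (q i * ∏ l ∈ Finset.Icc (j + 3) (m + 1), q (i + 1 - (l : ZMod (m+1)))) *
      p_part p i j
  rw [Finset.sum_congr rfl hterm]
  -- last term of LHS
  have hlast : p i * ((∏ l ∈ Finset.Icc 1 m, p (i - (l : ZMod (m+1)))) *
      ∏ l ∈ Finset.Icc (m + 2) (m + 1), q (i - (l : ZMod (m+1)))) = ∏ j : ZMod (m+1), p j := by
    rw [Finset.Icc_eq_empty (by omega : ¬ m + 2 ≤ m + 1), Finset.prod_empty, mul_one,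
      p_part, cyc_prod]
  -- first term of RHS
  have hfirst : q i * ((∏ l ∈ Finset.Icc (1:ℕ) 0, p (i + 1 - (l : ZMod (m+1)))) *
      ∏ l ∈ Finset.Icc (0 + 2) (m + 1), q (i + 1 - (l : ZMod (m+1)))) = ∏ j : ZMod (m+1), q j := by
    rw [show Finset.Icc (1:ℕ) 0 = ∅ from rfl, Finset.prod_empty, one_mul,
      show Finset.Icc (0+2) (m+1) = Finset.Icc (1+1) (1+m) by ring_nf, shift_prod]
    have h2 : ∀ l ∈ Finset.Icc 1 m,
        q (i + 1 - ((1 + l : ℕ) : ZMod (m+1))) = q (i - (l : ZMod (m+1))) := by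
      intro l _
      congr 1
      push_cast
      ring
    rw [Finset.prod_congr rfl h2, p_part q i m, cyc_prod]
  rw [hlast, hfirst]
  ring

end main

/-- With `r_{i+1} = (∏p − ∏q)/κ_{i+1}`, the commutative Yang-Baxter transformation
`(p,q,r) ↦ (qr/(p+r), p+r, qp/(p+r))` applied to the triple `(r_{i+1}, p_i, q_i)`
yields `(R(p_i), R(q_i), r_i)`. -/
theorem statement_16 {K : Type*} [Field K] (n : ℕ) [NeZero n] (hn : 2 ≤ n)
    (p q : ZMod n → K)
    (hp : ∀ i, p i ≠ 0) (hq : ∀ i, q i ≠ 0)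
    (hκ : ∀ i, kappa n p q i ≠ 0)
    (r : ZMod n → K)
    (hr : ∀ i, r i = ((∏ j : ZMod n, p j) - ∏ j : ZMod n, q j) / kappa n p q i) :
    ∀ i, p i * q i / (r (i + 1) + q i) = q i * kappa n p q (i + 1) / kappa n p q i ∧
      r (i + 1) + q i = p i * kappa n p q i / kappa n p q (i + 1) ∧
      p i * r (i + 1) / (r (i + 1) + q i) = r i := by
  intro i
  have hk := key hn p q i
  have h0 := hp i
  have h1 := hκ i
  have h1' := hκ (i + 1)
  have h2 : r (i + 1) + q i = p i * kappa n p q i / kappa n p q (i + 1) := by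
    rw [hr (i + 1)]
    field_simp
    linear_combination -hk
  have hs : r (i + 1) + q i ≠ 0 := by
    rw [h2]
    exact div_ne_zero (mul_ne_zero (hp i) (hκ i)) (hκ (i + 1))
  refine ⟨?_, h2, ?_⟩
  · rw [h2]
    field_simp
  · rw [h2, hr (i + 1), hr i]
    field_simp
end

section
/- Let n ≥ 2 and let x_i⁻, x_i, x_i⁺ (i ∈ ℤ/nℤ) and X_{i+1⁻,i}, X_{i+1,i⁺} (i ∈ ℤ/nℤ) be commuting indeterminates. Define ι(p_i) = (x_i⁻ x_{i+1})/(x_{i+1}⁻ x_i) · X_{i+1⁻,i} and ι(q_i) = (x_i x_{i+1}⁺)/(x_{i+1} x_i⁺) · X_{i+1,i⁺}. Then ι(κ_i(p,q)) = (x_i²/(x_i⁻ x_i⁺)) · Σ_{j=0}^{n-1} (x⁻_{i-j} x⁺_{i-j-1})/(x_{i-j} x_{i-j-1}) · ∏_{ℓ=1}^{j} X_{i+1-ℓ⁻, i-ℓ} · ∏_{ℓ=j+2}^{n} X_{i+1-ℓ, i-ℓ⁺}. -/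
private lemma tele {K : Type*} [Field K] (g : ℕ → K) (hg : ∀ l, g l ≠ 0) :
    ∀ a b : ℕ, a ≤ b → ∏ l ∈ Finset.Icc (a + 1) b, (g l / g (l - 1)) = g b / g a := by
  intro a b hab
  induction b, hab using Nat.le_induction with
  | base => simp [Finset.Icc_eq_empty_of_lt, div_self (hg a)]
  | succ b hb ih =>
      rw [Finset.prod_Icc_succ_top (by omega), ih]
      rw [div_mul_div_comm, mul_comm (g b), Nat.add_sub_cancel,
        mul_div_mul_right _ _ (hg b)]

/-- The telescoping identity for the tau-function substitution
`ι(p_i) = (x_i⁻ x_{i+1})/(x_{i+1}⁻ x_i) · X_{i+1⁻,i}`,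
`ι(q_i) = (x_i x_{i+1}⁺)/(x_{i+1} x_i⁺) · X_{i+1,i⁺}`:
`ι(κ_i) = (x_i²/(x_i⁻ x_i⁺)) Σ_j (x⁻_{i-j} x⁺_{i-j-1})/(x_{i-j} x_{i-j-1})
  ∏_{ℓ=1}^{j} X_{i+1-ℓ⁻,i-ℓ} ∏_{ℓ=j+2}^{n} X_{i+1-ℓ,i-ℓ⁺}`.
Here `Xm i` denotes `X_{i+1⁻,i}` and `Xp i` denotes `X_{i+1,i⁺}`. -/
theorem statement_17 {K : Type*} [Field K] (n : ℕ) (hn : 2 ≤ n)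
    (xm x xp Xm Xp : ZMod n → K)
    (hx : ∀ i, x i ≠ 0) (hxm : ∀ i, xm i ≠ 0) (hxp : ∀ i, xp i ≠ 0)
    (p q : ZMod n → K)
    (hp : ∀ i, p i = xm i * x (i + 1) / (xm (i + 1) * x i) * Xm i)
    (hq : ∀ i, q i = x i * xp (i + 1) / (x (i + 1) * xp i) * Xp i) :
    ∀ i, kappa n p q i =
      (x i) ^ 2 / (xm i * xp i) *
        ∑ j ∈ Finset.range n,
          (xm (i - (j : ZMod n)) * xp (i - (j : ZMod n) - 1)) /
              (x (i - (j : ZMod n)) * x (i - (j : ZMod n) - 1)) *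
            (∏ l ∈ Finset.Icc 1 j, Xm (i - (l : ZMod n))) *
            (∏ l ∈ Finset.Icc (j + 2) n, Xp (i - (l : ZMod n))) := by
  intro i
  unfold kappa
  rw [Finset.mul_sum]
  refine Finset.sum_congr rfl fun j hj => ?_
  have hjn : j < n := Finset.mem_range.mp hj
  set A : ℕ → K := fun l => xm (i - (l : ZMod n)) / x (i - (l : ZMod n)) with hA
  set B : ℕ → K := fun l => (xp (i - (l : ZMod n)) / x (i - (l : ZMod n)))⁻¹ with hB
  have hAne : ∀ l, A l ≠ 0 := fun l => div_ne_zero (hxm _) (hx _)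
  have hBne : ∀ l, B l ≠ 0 := fun l => inv_ne_zero (div_ne_zero (hxp _) (hx _))
  have key : ∀ l : ℕ, 1 ≤ l →
      (i - ((l - 1 : ℕ) : ZMod n)) = i - (l : ZMod n) + 1 := by
    intro l hl
    have : ((l - 1 : ℕ) : ZMod n) = (l : ZMod n) - 1 := by
      push_cast [Nat.cast_sub hl]; ring
    rw [this]; ring
  have hP : ∀ l ∈ Finset.Icc 1 j, p (i - (l : ZMod n)) =
      (A l / A (l - 1)) * Xm (i - (l : ZMod n)) := by
    intro l hl
    have hl1 : 1 ≤ l := (Finset.mem_Icc.mp hl).1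
    rw [hp, hA]
    simp only
    rw [key l hl1]
    field_simp
  have hQ : ∀ l ∈ Finset.Icc (j + 2) n, q (i - (l : ZMod n)) =
      (B l / B (l - 1)) * Xp (i - (l : ZMod n)) := by
    intro l hl
    have hl1 : 1 ≤ l := by have := (Finset.mem_Icc.mp hl).1; omega
    rw [hq, hB]
    simp only
    rw [key l hl1]
    field_simp
  rw [Finset.prod_congr rfl hP, Finset.prod_congr rfl hQ,
    Finset.prod_mul_distrib, Finset.prod_mul_distrib]
  have tA : ∏ l ∈ Finset.Icc 1 j, (A l / A (l - 1)) = A j / A 0 :=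
    tele A hAne 0 j (Nat.zero_le j)
  have tB : ∏ l ∈ Finset.Icc (j + 2) n, (B l / B (l - 1)) = B n / B (j + 1) :=
    tele B hBne (j + 1) n (by omega)
  rw [tA, tB]
  have h0 : ((0 : ℕ) : ZMod n) = 0 := by norm_cast
  have hnn : ((n : ℕ) : ZMod n) = 0 := by simp
  have hj1 : i - ((j + 1 : ℕ) : ZMod n) = i - (j : ZMod n) - 1 := by
    push_cast; ring
  have scalar : A j / A 0 * (B n / B (j + 1)) =
      x i ^ 2 / (xm i * xp i) *
        ((xm (i - (j : ZMod n)) * xp (i - (j : ZMod n) - 1)) /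
          (x (i - (j : ZMod n)) * x (i - (j : ZMod n) - 1))) := by
    rw [hA, hB]
    simp only [h0, hnn, hj1, sub_zero]
    field_simp
  calc A j / A 0 * (∏ l ∈ Finset.Icc 1 j, Xm (i - (l : ZMod n))) *
        (B n / B (j + 1) * ∏ l ∈ Finset.Icc (j + 2) n, Xp (i - (l : ZMod n)))
      = (A j / A 0 * (B n / B (j + 1))) *
        (∏ l ∈ Finset.Icc 1 j, Xm (i - (l : ZMod n))) *
        (∏ l ∈ Finset.Icc (j + 2) n, Xp (i - (l : ZMod n))) := by ring
    _ = _ := by rw [scalar]; ring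
end
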